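/- arXiv:2011.10874 — 9 statements merged into one kernel-verified Lean document; each statement's English description precedes it below -/
import Mathlib

section
/- If M ∈ ℝ^{k×ℓ} is an anti-Monge matrix and v ∈ ℝ^k is any vector, then the function j ↦ argmax_i (v_i + M[i,j]) can be chosen to be monotone: there exist maximizers i(j) for each column j such that j ≤ j' implies i(j) ≤ i(j'). -/
/-- For an anti-Monge matrix `M` and any vector `v`, the column
maximizers of `j ↦ max_i (v i + M i j)` can be chosen monotonically in `j`. -/
theorem stmt9 (k l : ℕ) (M : Matrix (Fin (k + 1)) (Fin (l + 1)) ℝ) (v : Fin (k + 1) → ℝ)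
    (hM : ∀ (i : Fin k) (j : Fin l),
      M i.succ j.castSucc + M i.castSucc j.succ ≤
        M i.castSucc j.castSucc + M i.succ j.succ) :
    ∃ I : Fin (l + 1) → Fin (k + 1), Monotone I ∧
      ∀ j, ∀ i, v i + M i j ≤ v (I j) + M (I j) j := by
  -- extend M to a function on ℕ × ℕ by clamping
  set g : ℕ → ℕ → ℝ := fun i j =>
    M ⟨min i k, Nat.lt_succ_of_le (min_le_right _ _)⟩
      ⟨min j l, Nat.lt_succ_of_le (min_le_right _ _)⟩ with hg
  have hgM : ∀ (i : Fin (k+1)) (j : Fin (l+1)), g i j = M i j := by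
    intro i j
    have h1 : min (i : ℕ) k = i := Nat.min_eq_left (Nat.lt_succ_iff.mp i.isLt)
    have h2 : min (j : ℕ) l = j := Nat.min_eq_left (Nat.lt_succ_iff.mp j.isLt)
    simp [hg, h1, h2]
  have hstep : ∀ i j, g (i+1) j + g i (j+1) ≤ g i j + g (i+1) (j+1) := by
    intro i j
    by_cases hi : i < k
    · by_cases hj : j < l
      · have := hM ⟨i, hi⟩ ⟨j, hj⟩
        have h1 : min i k = i := by omega
        have h2 : min (i+1) k = i+1 := by omega
        have h3 : min j l = j := by omega
        have h4 : min (j+1) l = j+1 := by omega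
        simp only [hg, h1, h2, h3, h4]
        simpa [Fin.succ, Fin.castSucc, Fin.castAdd, Fin.castLE] using this
      · have h4 : min (j+1) l = min j l := by omega
        simp only [hg, h4]
        linarith
    · have h2 : min (i+1) k = min i k := by omega
      simp only [hg, h2]
      linarith
  have hrow : ∀ j a b, a ≤ b → g b j + g a (j+1) ≤ g a j + g b (j+1) := by
    intro j a b hab
    induction b, hab using Nat.le_induction with
    | base => linarith
    | succ b hab ih => have := hstep b j; linarith
  have hfull : ∀ a b, a ≤ b → ∀ c d, c ≤ d → g b c + g a d ≤ g a c + g b d := by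
    intro a b hab c d hcd
    induction d, hcd using Nat.le_induction with
    | base => linarith
    | succ d hcd ih => have := hrow d a b hab; linarith
  -- choose the greatest maximizer in each column
  have hne : ∀ j : Fin (l+1),
      (Finset.univ.filter (fun i => ∀ i', v i' + M i' j ≤ v i + M i j)).Nonempty := by
    intro j
    obtain ⟨i, hi⟩ := Finite.exists_max (fun i => v i + M i j)
    exact ⟨i, by simpa using hi⟩
  refine ⟨fun j => (Finset.univ.filter
      (fun i => ∀ i', v i' + M i' j ≤ v i + M i j)).max' (hne j), ?_, ?_⟩
  · intro j j' hjj'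
    by_contra hlt
    push_neg at hlt
    set a := (Finset.univ.filter
      (fun i => ∀ i', v i' + M i' j ≤ v i + M i j)).max' (hne j) with ha
    set b := (Finset.univ.filter
      (fun i => ∀ i', v i' + M i' j' ≤ v i + M i j')).max' (hne j') with hb
    have hamax : ∀ i', v i' + M i' j ≤ v a + M a j := by
      have := Finset.max'_mem _ (hne j)
      rw [Finset.mem_filter] at this
      exact this.2
    have hbmax : ∀ i', v i' + M i' j' ≤ v b + M b j' := by
      have := Finset.max'_mem _ (hne j')
      rw [Finset.mem_filter] at this
      exact this.2
    have hba : (b : ℕ) ≤ (a : ℕ) := le_of_lt hlt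
    have hm := hfull b a hba j j' hjj'
    rw [hgM, hgM, hgM, hgM] at hm
    have hamax' : ∀ i', v i' + M i' j' ≤ v a + M a j' := by
      intro i'
      have h1 := hamax b
      have h2 := hbmax i'
      linarith
    have : a ≤ b := Finset.le_max' _ a (Finset.mem_filter.mpr ⟨Finset.mem_univ _, hamax'⟩)
    exact absurd this (not_le.mpr hlt)
  · intro j i
    have := Finset.max'_mem _ (hne j)
    rw [Finset.mem_filter] at this
    exact this.2 i
end

section
/- Every antichain (x_i, y_i)_{i=0}^{k-1} in the grid [0..n]×[0..m] (under the order (x,y) ≺ (x',y') iff x<x' and y<y') can be extended to a supersequence forming a cut-path, i.e., an antichain (π_d)_{d=0}^{n+m} with π_d − on diagonal x − y = d − m for each d, containing all the given points. -/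
set_option linter.unnecessarySeqFocus false


/-- Every antichain in the grid `[0..n]×[0..m]` (non-decreasing first
coordinates, non-increasing second coordinates) extends to a supersequence forming a
cut-path: an antichain `(π_d)_{d=0}^{n+m}` with `π d` on the diagonal `x − y = d − m`,
containing all given points. -/
theorem stmt11 (n m k : ℕ) (p : Fin k → ℤ × ℤ)
    (hgrid : ∀ i, 0 ≤ (p i).1 ∧ (p i).1 ≤ (n : ℤ) ∧ 0 ≤ (p i).2 ∧ (p i).2 ≤ (m : ℤ))
    (hx : Monotone fun i => (p i).1) (hy : Antitone fun i => (p i).2) :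
    ∃ π : ℕ → ℤ × ℤ,
      (∀ d ≤ n + m,
        0 ≤ (π d).1 ∧ (π d).1 ≤ (n : ℤ) ∧ 0 ≤ (π d).2 ∧ (π d).2 ≤ (m : ℤ)) ∧
      (∀ d ≤ n + m, (π d).1 - (π d).2 = (d : ℤ) - (m : ℤ)) ∧
      (∀ d ≤ n + m, ∀ d' ≤ n + m, ¬((π d).1 < (π d').1 ∧ (π d).2 < (π d').2)) ∧
      ∃ g : Fin k → ℕ, Monotone g ∧ ∀ i, g i ≤ n + m ∧ π (g i) = p i := by
  set f : ℕ → ℤ := fun d =>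
    Finset.univ.fold max (max 0 ((d : ℤ) - m))
      (fun i : Fin k => min (p i).1 ((p i).2 + d - m)) with hfdef
  have hle : ∀ d c, f d ≤ c ↔ (max 0 ((d : ℤ) - m) ≤ c ∧
      ∀ i : Fin k, min (p i).1 ((p i).2 + d - m) ≤ c) := by
    intro d c
    rw [hfdef]
    simp [Finset.fold_max_le]
  have hge : ∀ (d : ℕ) (c : ℤ), (c ≤ max 0 ((d : ℤ) - m) ∨
      ∃ i : Fin k, c ≤ min (p i).1 ((p i).2 + d - m)) → c ≤ f d := by
    intro d c h
    rw [hfdef]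
    rw [Finset.le_fold_max]
    rcases h with h | ⟨i, hi⟩
    · exact Or.inl h
    · exact Or.inr ⟨i, Finset.mem_univ i, hi⟩
  -- lower bounds
  have hlb : ∀ d, 0 ≤ f d ∧ (d : ℤ) - m ≤ f d := by
    intro d
    constructor
    · exact hge d 0 (Or.inl (le_max_left _ _))
    · exact hge d _ (Or.inl (le_max_right _ _))
  -- upper bound f d ≤ d
  have hub1 : ∀ d, f d ≤ (d : ℤ) := by
    intro d
    rw [hle]
    constructor
    · simp
    · intro i
      have := hgrid i
      omega
  -- upper bound f d ≤ n for d ≤ n + m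
  have hub2 : ∀ d ≤ n + m, f d ≤ (n : ℤ) := by
    intro d hd
    rw [hle]
    constructor
    · have : (d : ℤ) ≤ (n : ℤ) + m := by exact_mod_cast hd
      omega
    · intro i
      have := hgrid i
      omega
  -- monotone step
  have hstep : ∀ a, f a ≤ f (a + 1) := by
    intro a
    rw [hle]
    constructor
    · apply hge
      left
      push_cast
      omega
    · intro i
      apply hge
      right
      exact ⟨i, by push_cast; omega⟩
  have hmono : ∀ a b, a ≤ b → f a ≤ f b := by
    intro a b h
    induction h with
    | refl => exact le_refl _
    | step h ih => exact le_trans ih (hstep _)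
  -- slope at most 1
  have hslope1 : ∀ a, f (a + 1) ≤ f a + 1 := by
    intro a
    rw [hle]
    constructor
    · have h1 := (hlb a).1
      have h2 := (hlb a).2
      push_cast
      omega
    · intro i
      have : min (p i).1 ((p i).2 + a - m) ≤ f a :=
        hge a _ (Or.inr ⟨i, le_refl _⟩)
      push_cast
      omega
  have hslope : ∀ a t, f (a + t) ≤ f a + t := by
    intro a t
    induction t with
    | zero => simp
    | succ t ih =>
        have h := hslope1 (a + t)
        have : a + (t + 1) = (a + t) + 1 := by omega
        rw [this]
        push_cast
        push_cast at ih
        linarith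
  -- the g function
  have hdmono : ∀ i j : Fin k, i ≤ j → (p i).1 - (p i).2 ≤ (p j).1 - (p j).2 := by
    intro i j hij
    have h1 := hx hij
    have h2 := hy hij
    simp only at h1 h2
    omega
  refine ⟨fun d => (f d, f d - d + m), ?_, ?_, ?_,
    fun i => ((p i).1 - (p i).2 + m).toNat, ?_, ?_⟩
  · intro d hd
    have h1 := (hlb d).1
    have h2 := (hlb d).2
    have h3 := hub1 d
    have h4 := hub2 d hd
    simp only
    omega
  · intro d hd
    simp only
    ring
  · intro d hd d' hd'
    simp only
    rintro ⟨h1, h2⟩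
    have hdd' : d < d' := by
      by_contra h
      push_neg at h
      exact absurd (hmono _ _ h) (by omega)
    have := hslope d (d' - d)
    rw [Nat.add_sub_cancel' hdd'.le] at this
    have hcast : ((d' - d : ℕ) : ℤ) = (d' : ℤ) - d := by
      omega
    omega
  · intro i j hij
    have := hdmono i j hij
    simp only
    omega
  · intro i
    obtain ⟨h0, h1, h2, h3⟩ := hgrid i
    have hcast : ((((p i).1 - (p i).2 + m).toNat : ℕ) : ℤ) = (p i).1 - (p i).2 + m := by
      omega
    constructor
    · simp only
      omega
    · have hfx : f (((p i).1 - (p i).2 + m).toNat) = (p i).1 := by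
        apply le_antisymm
        · rw [hle]
          constructor
          · rw [hcast]; omega
          · intro j
            rcases le_total j i with hji | hij
            · have := hx hji
              simp only at this
              omega
            · have := hy hij
              simp only at this
              rw [hcast]
              omega
        · apply hge
          right
          exact ⟨i, by rw [hcast]; omega⟩
      simp only [hfx, hcast]
      ext1 <;> simp <;> omega
end

section
/- Let G = AG^{n,m}(S) be the undirected weighted graph on vertex set [0..n]×[0..m] with edges (x,y)–(x+1,y) of weight 1, (x,y)–(x,y+1) of weight 1, and (x,y)–(x+1,y+1) of weight 0 for (x,y) ∈ S ⊆ [0..n-1]×[0..m-1]. Then for points p = (x,y) and p' = (x',y') with x ≤ x' and y ≤ y', the shortest-path distance satisfies dist_G(p,p') = (x'−x) + (y'−y) − 2·LIS(S ∩ ([x..x')×[y..y'))), where LIS(T) is the maximum size of a chain in T under (a,b) ≺ (a',b') iff a<a' and b<b'. -/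
/-- Membership in the grid of points `[0..n] × [0..m]`. -/
def inGrid (n m : ℕ) (p : ℤ × ℤ) : Prop :=
  0 ≤ p.1 ∧ p.1 ≤ (n : ℤ) ∧ 0 ≤ p.2 ∧ p.2 ≤ (m : ℤ)

/-- Weighted (undirected) edges of the alignment graph `AG^{n,m}(S)`:
horizontal and vertical edges of weight 1, and diagonal edges of weight 0
at the points of `S`. -/
def agEdge (S : Set (ℤ × ℤ)) (p q : ℤ × ℤ) (w : ℕ) : Prop :=
  (((q.1 = p.1 + 1 ∧ q.2 = p.2) ∨ (p.1 = q.1 + 1 ∧ p.2 = q.2) ∨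
    (q.1 = p.1 ∧ q.2 = p.2 + 1) ∨ (p.1 = q.1 ∧ p.2 = q.2 + 1)) ∧ w = 1) ∨
  (((q.1 = p.1 + 1 ∧ q.2 = p.2 + 1 ∧ p ∈ S) ∨
    (p.1 = q.1 + 1 ∧ p.2 = q.2 + 1 ∧ q ∈ S)) ∧ w = 0)

/-- `agWalkCost n m S p p' c` holds iff there is a walk in `AG^{n,m}(S)` from `p`
to `p'` of total weight `c`. -/
def agWalkCost (n m : ℕ) (S : Set (ℤ × ℤ)) (p p' : ℤ × ℤ) (c : ℕ) : Prop :=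
  ∃ (L : ℕ) (f : ℕ → ℤ × ℤ) (w : ℕ → ℕ),
    f 0 = p ∧ f L = p' ∧ (∀ i ≤ L, inGrid n m (f i)) ∧
    (∀ i < L, agEdge S (f i) (f (i + 1)) (w i)) ∧
    c = ∑ i ∈ Finset.range L, w i

/-- `C` is a chain contained in the point set `T` (strictly increasing in both
coordinates). -/
def chainIn (T : Set (ℤ × ℤ)) (C : Finset (ℤ × ℤ)) : Prop :=
  (↑C ⊆ T) ∧
  ∀ p ∈ C, ∀ q ∈ C, p ≠ q → (p.1 < q.1 ∧ p.2 < q.2) ∨ (q.1 < p.1 ∧ q.2 < p.2)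

namespace Stmt12

def box (a b c d : ℤ) : Set (ℤ × ℤ) := {p | a ≤ p.1 ∧ p.1 < c ∧ b ≤ p.2 ∧ p.2 < d}

def chainSet (S : Set (ℤ × ℤ)) (a b c d : ℤ) : Set ℕ :=
  {k | ∃ C : Finset (ℤ × ℤ), chainIn (S ∩ box a b c d) C ∧ C.card = k}

noncomputable def LL (S : Set (ℤ × ℤ)) (a b c d : ℤ) : ℕ := sSup (chainSet S a b c d)

lemma zero_mem_chainSet (S : Set (ℤ × ℤ)) (a b c d : ℤ) : 0 ∈ chainSet S a b c d :=
  ⟨∅, ⟨by simp, by simp⟩, rfl⟩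

lemma card_le_of_chainIn {S : Set (ℤ × ℤ)} {a b c d : ℤ} {C : Finset (ℤ × ℤ)}
    (h : chainIn (S ∩ box a b c d) C) : C.card ≤ (c - a).toNat := by
  have hinj : Set.InjOn Prod.fst (C : Set (ℤ × ℤ)) := by
    intro p hp q hq hpq
    by_contra hne
    rcases h.2 p hp q hq hne with ⟨h1, _⟩ | ⟨h1, _⟩ <;> omega
  calc C.card = (C.image Prod.fst).card := (Finset.card_image_of_injOn hinj).symm
    _ ≤ (Finset.Ico a c).card := by
        apply Finset.card_le_card
        intro t ht
        obtain ⟨p, hp, rfl⟩ := Finset.mem_image.mp ht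
        have := h.1 hp
        simp only [Set.mem_inter_iff, box, Set.mem_setOf_eq] at this
        exact Finset.mem_Ico.mpr ⟨this.2.1, this.2.2.1⟩
    _ = (c - a).toNat := Int.card_Ico a c

lemma bddAbove_chainSet (S : Set (ℤ × ℤ)) (a b c d : ℤ) : BddAbove (chainSet S a b c d) := by
  refine ⟨(c - a).toNat, ?_⟩
  rintro k ⟨C, hC, rfl⟩
  exact card_le_of_chainIn hC

lemma LL_mem (S : Set (ℤ × ℤ)) (a b c d : ℤ) : LL S a b c d ∈ chainSet S a b c d :=
  Nat.sSup_mem ⟨0, zero_mem_chainSet S a b c d⟩ (bddAbove_chainSet S a b c d)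

lemma le_LL {S : Set (ℤ × ℤ)} {a b c d : ℤ} {k : ℕ} (h : k ∈ chainSet S a b c d) :
    k ≤ LL S a b c d := le_csSup (bddAbove_chainSet S a b c d) h

lemma LL_le {S : Set (ℤ × ℤ)} {a b c d : ℤ} {B : ℕ}
    (h : ∀ k ∈ chainSet S a b c d, k ≤ B) : LL S a b c d ≤ B :=
  csSup_le ⟨0, zero_mem_chainSet S a b c d⟩ h

lemma isGreatest_LL (S : Set (ℤ × ℤ)) (a b c d : ℤ) :
    IsGreatest (chainSet S a b c d) (LL S a b c d) :=
  ⟨LL_mem S a b c d, fun _ hk => le_LL hk⟩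

lemma LL_empty {S : Set (ℤ × ℤ)} {a b c d : ℤ} (h : c ≤ a ∨ d ≤ b) : LL S a b c d = 0 := by
  refine Nat.le_zero.mp (LL_le ?_)
  rintro k ⟨C, hC, rfl⟩
  have : C = ∅ := by
    refine Finset.eq_empty_of_forall_notMem fun p hp => ?_
    have := hC.1 hp
    simp only [Set.mem_inter_iff, box, Set.mem_setOf_eq] at this
    omega
  simp [this]

lemma chainIn_mono {T T' : Set (ℤ × ℤ)} (h : T ⊆ T') {C : Finset (ℤ × ℤ)}
    (hC : chainIn T C) : chainIn T' C := ⟨fun p hp => h (hC.1 hp), hC.2⟩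

lemma LL_mono {S : Set (ℤ × ℤ)} {a b c d a' b' c' d' : ℤ}
    (hbox : box a b c d ⊆ box a' b' c' d') : LL S a b c d ≤ LL S a' b' c' d' := by
  apply LL_le
  rintro k ⟨C, hC, rfl⟩
  exact le_LL ⟨C, chainIn_mono (Set.inter_subset_inter_right S hbox) hC, rfl⟩

lemma LL_le_succ {S : Set (ℤ × ℤ)} {a b c d a' b' c' d' : ℤ}
    (P : ℤ × ℤ → Prop) [DecidablePred P]
    (hsub : ∀ p ∈ box a b c d, P p → p ∈ box a' b' c' d')
    (hone : ∀ p ∈ box a b c d, ∀ q ∈ box a b c d, ¬ P p → ¬ P q →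
      ¬ ((p.1 < q.1 ∧ p.2 < q.2) ∨ (q.1 < p.1 ∧ q.2 < p.2))) :
    LL S a b c d ≤ LL S a' b' c' d' + 1 := by
  apply LL_le
  rintro k ⟨C, hC, rfl⟩
  have hboxmem : ∀ p ∈ C, p ∈ box a b c d := by
    intro p hp
    exact (hC.1 hp).2
  have hfil : chainIn (S ∩ box a' b' c' d') (C.filter P) := by
    constructor
    · intro p hp
      simp only [Finset.coe_filter, Set.mem_setOf_eq] at hp
      exact ⟨(hC.1 hp.1).1, hsub p (hboxmem p hp.1) hp.2⟩
    · intro p hp q hq hne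
      exact hC.2 p (Finset.mem_of_mem_filter p hp) q (Finset.mem_of_mem_filter q hq) hne
  have h2 : (C.filter (fun p => ¬ P p)).card ≤ 1 := by
    refine Finset.card_le_one.mpr fun p hp q hq => ?_
    simp only [Finset.mem_filter] at hp hq
    by_contra hne
    exact hone p (hboxmem p hp.1) q (hboxmem q hq.1) hp.2 hq.2
      (hC.2 p hp.1 q hq.1 hne)
  have h3 := Finset.card_filter_add_card_filter_not (s := C) (p := P)
  have h4 : (C.filter P).card ≤ LL S a' b' c' d' := le_LL ⟨C.filter P, hfil, rfl⟩
  omega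

lemma LL_insert_max {S : Set (ℤ × ℤ)} {a b u v : ℤ} (hp : (u, v) ∈ S)
    (ha : a ≤ u) (hb : b ≤ v) :
    LL S a b u v + 1 ≤ LL S a b (u + 1) (v + 1) := by
  obtain ⟨C, hC, hcard⟩ := LL_mem S a b u v
  have hnot : (u, v) ∉ C := by
    intro h
    have := (hC.1 h).2
    simp only [box, Set.mem_setOf_eq] at this
    omega
  refine le_trans ?_ (le_LL ⟨insert (u, v) C, ?_, rfl⟩)
  · rw [Finset.card_insert_of_notMem hnot, hcard]
  constructor
  · intro p hpm
    simp only [Finset.coe_insert, Set.mem_insert_iff] at hpm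
    rcases hpm with rfl | hpm
    · exact ⟨hp, by simp only [box, Set.mem_setOf_eq]; omega⟩
    · have := hC.1 hpm
      refine ⟨this.1, ?_⟩
      have := this.2
      simp only [box, Set.mem_setOf_eq] at this ⊢
      omega
  · intro p hpm q hqm hne
    simp only [Finset.mem_insert] at hpm hqm
    have key : ∀ r ∈ C, r.1 < u ∧ r.2 < v := by
      intro r hr
      have := (hC.1 hr).2
      simp only [box, Set.mem_setOf_eq] at this
      omega
    rcases hpm with rfl | hpm <;> rcases hqm with rfl | hqm
    · exact absurd rfl hne
    · have := key q hqm; right; constructor <;> simp <;> omega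
    · have := key p hpm; left; constructor <;> simp <;> omega
    · exact hC.2 p hpm q hqm hne

lemma LL_insert_min {S : Set (ℤ × ℤ)} {u v c d : ℤ} (hp : (u, v) ∈ S)
    (hc : u < c) (hd : v < d) :
    LL S (u + 1) (v + 1) c d + 1 ≤ LL S u v c d := by
  obtain ⟨C, hC, hcard⟩ := LL_mem S (u + 1) (v + 1) c d
  have hnot : (u, v) ∉ C := by
    intro h
    have := (hC.1 h).2
    simp only [box, Set.mem_setOf_eq] at this
    omega
  refine le_trans ?_ (le_LL ⟨insert (u, v) C, ?_, rfl⟩)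
  · rw [Finset.card_insert_of_notMem hnot, hcard]
  constructor
  · intro p hpm
    simp only [Finset.coe_insert, Set.mem_insert_iff] at hpm
    rcases hpm with rfl | hpm
    · exact ⟨hp, by simp only [box, Set.mem_setOf_eq]; omega⟩
    · have := hC.1 hpm
      refine ⟨this.1, ?_⟩
      have := this.2
      simp only [box, Set.mem_setOf_eq] at this ⊢
      omega
  · intro p hpm q hqm hne
    simp only [Finset.mem_insert] at hpm hqm
    have key : ∀ r ∈ C, u < r.1 ∧ v < r.2 := by
      intro r hr
      have := (hC.1 hr).2
      simp only [box, Set.mem_setOf_eq] at this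
      omega
    rcases hpm with rfl | hpm <;> rcases hqm with rfl | hqm
    · exact absurd rfl hne
    · have := key q hqm; left; constructor <;> simp <;> omega
    · have := key p hpm; right; constructor <;> simp <;> omega
    · exact hC.2 p hpm q hqm hne

-- monotonicity in the four directions
lemma LL_mono_right {S : Set (ℤ × ℤ)} (a b c d : ℤ) : LL S a b c d ≤ LL S a b (c+1) d :=
  LL_mono (by intro p hp; simp only [box, Set.mem_setOf_eq] at hp ⊢; omega)

lemma LL_mono_top {S : Set (ℤ × ℤ)} (a b c d : ℤ) : LL S a b c d ≤ LL S a b c (d+1) :=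
  LL_mono (by intro p hp; simp only [box, Set.mem_setOf_eq] at hp ⊢; omega)

lemma LL_mono_left {S : Set (ℤ × ℤ)} (a b c d : ℤ) : LL S (a+1) b c d ≤ LL S a b c d :=
  LL_mono (by intro p hp; simp only [box, Set.mem_setOf_eq] at hp ⊢; omega)

lemma LL_mono_bot {S : Set (ℤ × ℤ)} (a b c d : ℤ) : LL S a (b+1) c d ≤ LL S a b c d :=
  LL_mono (by intro p hp; simp only [box, Set.mem_setOf_eq] at hp ⊢; omega)

-- +1 lemmas
lemma LL_add_col {S : Set (ℤ × ℤ)} (a b c d : ℤ) : LL S a b (c+1) d ≤ LL S a b c d + 1 := by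
  refine LL_le_succ (fun p => p.1 < c) ?_ ?_
  · intro p hp hP; simp only [box, Set.mem_setOf_eq] at hp ⊢; omega
  · intro p hp q hq hP hQ
    simp only [box, Set.mem_setOf_eq] at hp hq
    omega

lemma LL_add_row {S : Set (ℤ × ℤ)} (a b c d : ℤ) : LL S a b c (d+1) ≤ LL S a b c d + 1 := by
  refine LL_le_succ (fun p => p.2 < d) ?_ ?_
  · intro p hp hP; simp only [box, Set.mem_setOf_eq] at hp ⊢; omega
  · intro p hp q hq hP hQ
    simp only [box, Set.mem_setOf_eq] at hp hq
    omega

lemma LL_rem_col {S : Set (ℤ × ℤ)} (a b c d : ℤ) : LL S a b c d ≤ LL S (a+1) b c d + 1 := by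
  refine LL_le_succ (fun p => a < p.1) ?_ ?_
  · intro p hp hP; simp only [box, Set.mem_setOf_eq] at hp ⊢; omega
  · intro p hp q hq hP hQ
    simp only [box, Set.mem_setOf_eq] at hp hq
    omega

lemma LL_rem_row {S : Set (ℤ × ℤ)} (a b c d : ℤ) : LL S a b c d ≤ LL S a (b+1) c d + 1 := by
  refine LL_le_succ (fun p => b < p.2) ?_ ?_
  · intro p hp hP; simp only [box, Set.mem_setOf_eq] at hp ⊢; omega
  · intro p hp q hq hP hQ
    simp only [box, Set.mem_setOf_eq] at hp hq
    omega

lemma LL_diag_max {S : Set (ℤ × ℤ)} {a b u v : ℤ} (hp : (u, v) ∈ S)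
    (ha : a ≤ u) (hb : b ≤ v) :
    LL S a b (u + 1) (v + 1) = LL S a b u v + 1 := by
  refine le_antisymm ?_ (LL_insert_max hp ha hb)
  refine LL_le_succ (fun p => p.1 < u ∧ p.2 < v) ?_ ?_
  · intro p hpb hP; simp only [box, Set.mem_setOf_eq] at hpb ⊢; omega
  · intro p hpb q hqb hP hQ
    simp only [box, Set.mem_setOf_eq] at hpb hqb
    omega

lemma LL_diag_min {S : Set (ℤ × ℤ)} {u v c d : ℤ} (hp : (u, v) ∈ S)
    (hc : u < c) (hd : v < d) :
    LL S u v c d = LL S (u + 1) (v + 1) c d + 1 := by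
  refine le_antisymm ?_ (LL_insert_min hp hc hd)
  refine LL_le_succ (fun p => u < p.1 ∧ v < p.2) ?_ ?_
  · intro p hpb hP; simp only [box, Set.mem_setOf_eq] at hpb ⊢; omega
  · intro p hpb q hqb hP hQ
    simp only [box, Set.mem_setOf_eq] at hpb hqb
    omega


noncomputable def NN (S : Set (ℤ × ℤ)) (x y : ℤ) (p : ℤ × ℤ) : ℕ :=
  if x ≤ p.1 ∧ y ≤ p.2 then LL S x y p.1 p.2
  else if p.1 ≤ x ∧ p.2 ≤ y then LL S p.1 p.2 x y else 0

noncomputable def phi (S : Set (ℤ × ℤ)) (x y : ℤ) (p : ℤ × ℤ) : ℤ :=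
  |p.1 - x| + |p.2 - y| - 2 * NN S x y p

lemma phi_hstep (S : Set (ℤ × ℤ)) (x y u v : ℤ) :
    |phi S x y (u + 1, v) - phi S x y (u, v)| ≤ 1 := by
  unfold phi NN
  simp only
  rcases le_or_gt x u with hx | hx
  · rcases le_or_gt y v with hy | hy
    · rw [if_pos ⟨by omega, hy⟩, if_pos ⟨hx, hy⟩]
      have h1 : LL S x y u v ≤ LL S x y (u+1) v := LL_mono_right x y u v
      have h2 : LL S x y (u+1) v ≤ LL S x y u v + 1 := LL_add_col x y u v
      rw [abs_sub_le_iff]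
      rcases abs_cases (u + 1 - x) with ⟨e1, _⟩ | ⟨e1, _⟩ <;>
      rcases abs_cases (u - x) with ⟨e2, _⟩ | ⟨e2, _⟩ <;>
      rcases abs_cases (v - y) with ⟨e3, _⟩ | ⟨e3, _⟩ <;>
      omega
    · -- v < y, u ≥ x : both sides have NN = 0 (possibly via empty box)
      have hA : (if x ≤ u ∧ y ≤ v then LL S x y u v
          else if u ≤ x ∧ v ≤ y then LL S u v x y else 0) = 0 := by
        rw [if_neg (by omega)]
        split_ifs with h
        · exact LL_empty (by omega)
        · rfl
      have hB : (if x ≤ u + 1 ∧ y ≤ v then LL S x y (u+1) v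
          else if u + 1 ≤ x ∧ v ≤ y then LL S (u+1) v x y else 0) = 0 := by
        rw [if_neg (by omega)]
        split_ifs with h
        · exact LL_empty (by omega)
        · rfl
      rw [hA, hB]
      rw [abs_sub_le_iff]
      rcases abs_cases (u + 1 - x) with ⟨e1, _⟩ | ⟨e1, _⟩ <;>
      rcases abs_cases (u - x) with ⟨e2, _⟩ | ⟨e2, _⟩ <;>
      rcases abs_cases (v - y) with ⟨e3, _⟩ | ⟨e3, _⟩ <;>
      omega
  · rcases le_or_gt y v with hy | hy
    · -- u < x, v ≥ y : both NN = 0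
      have hA : (if x ≤ u ∧ y ≤ v then LL S x y u v
          else if u ≤ x ∧ v ≤ y then LL S u v x y else 0) = 0 := by
        rw [if_neg (by omega)]
        split_ifs with h
        · exact LL_empty (by omega)
        · rfl
      have hB : (if x ≤ u + 1 ∧ y ≤ v then LL S x y (u+1) v
          else if u + 1 ≤ x ∧ v ≤ y then LL S (u+1) v x y else 0) = 0 := by
        split_ifs with h h'
        · exact LL_empty (by omega)
        · exact LL_empty (by omega)
        · rfl
      rw [hA, hB]
      rw [abs_sub_le_iff]
      rcases abs_cases (u + 1 - x) with ⟨e1, _⟩ | ⟨e1, _⟩ <;>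
      rcases abs_cases (u - x) with ⟨e2, _⟩ | ⟨e2, _⟩ <;>
      rcases abs_cases (v - y) with ⟨e3, _⟩ | ⟨e3, _⟩ <;>
      omega
    · -- u < x, v < y : lower-left region
      rw [if_neg (by omega), if_pos ⟨by omega, by omega⟩,
        if_neg (by omega), if_pos ⟨by omega, by omega⟩]
      have h1 : LL S (u+1) v x y ≤ LL S u v x y := LL_mono_left u v x y
      have h2 : LL S u v x y ≤ LL S (u+1) v x y + 1 := LL_rem_col u v x y
      rw [abs_sub_le_iff]
      rcases abs_cases (u + 1 - x) with ⟨e1, _⟩ | ⟨e1, _⟩ <;>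
      rcases abs_cases (u - x) with ⟨e2, _⟩ | ⟨e2, _⟩ <;>
      rcases abs_cases (v - y) with ⟨e3, _⟩ | ⟨e3, _⟩ <;>
      omega


lemma phi_vstep (S : Set (ℤ × ℤ)) (x y u v : ℤ) :
    |phi S x y (u, v + 1) - phi S x y (u, v)| ≤ 1 := by
  unfold phi NN
  simp only
  rcases le_or_gt y v with hy | hy
  · rcases le_or_gt x u with hx | hx
    · rw [if_pos ⟨hx, by omega⟩, if_pos ⟨hx, hy⟩]
      have h1 : LL S x y u v ≤ LL S x y u (v+1) := LL_mono_top x y u v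
      have h2 : LL S x y u (v+1) ≤ LL S x y u v + 1 := LL_add_row x y u v
      rw [abs_sub_le_iff]
      rcases abs_cases (v + 1 - y) with ⟨e1, _⟩ | ⟨e1, _⟩ <;>
      rcases abs_cases (v - y) with ⟨e2, _⟩ | ⟨e2, _⟩ <;>
      rcases abs_cases (u - x) with ⟨e3, _⟩ | ⟨e3, _⟩ <;>
      omega
    · have hA : (if x ≤ u ∧ y ≤ v then LL S x y u v
          else if u ≤ x ∧ v ≤ y then LL S u v x y else 0) = 0 := by
        rw [if_neg (by omega)]
        split_ifs with h
        · exact LL_empty (by omega)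
        · rfl
      have hB : (if x ≤ u ∧ y ≤ v + 1 then LL S x y u (v+1)
          else if u ≤ x ∧ v + 1 ≤ y then LL S u (v+1) x y else 0) = 0 := by
        rw [if_neg (by omega)]
        split_ifs with h
        · exact LL_empty (by omega)
        · rfl
      rw [hA, hB]
      rw [abs_sub_le_iff]
      rcases abs_cases (v + 1 - y) with ⟨e1, _⟩ | ⟨e1, _⟩ <;>
      rcases abs_cases (v - y) with ⟨e2, _⟩ | ⟨e2, _⟩ <;>
      rcases abs_cases (u - x) with ⟨e3, _⟩ | ⟨e3, _⟩ <;>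
      omega
  · rcases le_or_gt x u with hx | hx
    · have hA : (if x ≤ u ∧ y ≤ v then LL S x y u v
          else if u ≤ x ∧ v ≤ y then LL S u v x y else 0) = 0 := by
        rw [if_neg (by omega)]
        split_ifs with h
        · exact LL_empty (by omega)
        · rfl
      have hB : (if x ≤ u ∧ y ≤ v + 1 then LL S x y u (v+1)
          else if u ≤ x ∧ v + 1 ≤ y then LL S u (v+1) x y else 0) = 0 := by
        split_ifs with h h'
        · exact LL_empty (by omega)
        · exact LL_empty (by omega)
        · rfl
      rw [hA, hB]
      rw [abs_sub_le_iff]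
      rcases abs_cases (v + 1 - y) with ⟨e1, _⟩ | ⟨e1, _⟩ <;>
      rcases abs_cases (v - y) with ⟨e2, _⟩ | ⟨e2, _⟩ <;>
      rcases abs_cases (u - x) with ⟨e3, _⟩ | ⟨e3, _⟩ <;>
      omega
    · rw [if_neg (by omega), if_pos ⟨by omega, by omega⟩,
        if_neg (by omega), if_pos ⟨by omega, by omega⟩]
      have h1 : LL S u (v+1) x y ≤ LL S u v x y := LL_mono_bot u v x y
      have h2 : LL S u v x y ≤ LL S u (v+1) x y + 1 := LL_rem_row u v x y
      rw [abs_sub_le_iff]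
      rcases abs_cases (v + 1 - y) with ⟨e1, _⟩ | ⟨e1, _⟩ <;>
      rcases abs_cases (v - y) with ⟨e2, _⟩ | ⟨e2, _⟩ <;>
      rcases abs_cases (u - x) with ⟨e3, _⟩ | ⟨e3, _⟩ <;>
      omega

lemma phi_diag (S : Set (ℤ × ℤ)) (x y : ℤ) {u v : ℤ} (hS : (u, v) ∈ S) :
    phi S x y (u + 1, v + 1) = phi S x y (u, v) := by
  unfold phi NN
  simp only
  rcases le_or_gt x u with hx | hx
  · rcases le_or_gt y v with hy | hy
    · rw [if_pos ⟨by omega, by omega⟩, if_pos ⟨hx, hy⟩]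
      have h1 : LL S x y (u+1) (v+1) = LL S x y u v + 1 := LL_diag_max hS hx hy
      rcases abs_cases (u + 1 - x) with ⟨e1, _⟩ | ⟨e1, _⟩ <;>
      rcases abs_cases (u - x) with ⟨e2, _⟩ | ⟨e2, _⟩ <;>
      rcases abs_cases (v + 1 - y) with ⟨e3, _⟩ | ⟨e3, _⟩ <;>
      rcases abs_cases (v - y) with ⟨e4, _⟩ | ⟨e4, _⟩ <;>
      omega
    · -- u ≥ x, v < y
      have hA : (if x ≤ u ∧ y ≤ v then LL S x y u v
          else if u ≤ x ∧ v ≤ y then LL S u v x y else 0) = 0 := by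
        rw [if_neg (by omega)]
        split_ifs with h
        · exact LL_empty (by omega)
        · rfl
      have hB : (if x ≤ u + 1 ∧ y ≤ v + 1 then LL S x y (u+1) (v+1)
          else if u + 1 ≤ x ∧ v + 1 ≤ y then LL S (u+1) (v+1) x y else 0) = 0 := by
        split_ifs with h h'
        · exact LL_empty (by omega)
        · exact LL_empty (by omega)
        · rfl
      rw [hA, hB]
      rcases abs_cases (u + 1 - x) with ⟨e1, _⟩ | ⟨e1, _⟩ <;>
      rcases abs_cases (u - x) with ⟨e2, _⟩ | ⟨e2, _⟩ <;>
      rcases abs_cases (v + 1 - y) with ⟨e3, _⟩ | ⟨e3, _⟩ <;>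
      rcases abs_cases (v - y) with ⟨e4, _⟩ | ⟨e4, _⟩ <;>
      omega
  · rcases le_or_gt y v with hy | hy
    · -- u < x, v ≥ y
      have hA : (if x ≤ u ∧ y ≤ v then LL S x y u v
          else if u ≤ x ∧ v ≤ y then LL S u v x y else 0) = 0 := by
        rw [if_neg (by omega)]
        split_ifs with h
        · exact LL_empty (by omega)
        · rfl
      have hB : (if x ≤ u + 1 ∧ y ≤ v + 1 then LL S x y (u+1) (v+1)
          else if u + 1 ≤ x ∧ v + 1 ≤ y then LL S (u+1) (v+1) x y else 0) = 0 := by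
        split_ifs with h h'
        · exact LL_empty (by omega)
        · exact LL_empty (by omega)
        · rfl
      rw [hA, hB]
      rcases abs_cases (u + 1 - x) with ⟨e1, _⟩ | ⟨e1, _⟩ <;>
      rcases abs_cases (u - x) with ⟨e2, _⟩ | ⟨e2, _⟩ <;>
      rcases abs_cases (v + 1 - y) with ⟨e3, _⟩ | ⟨e3, _⟩ <;>
      rcases abs_cases (v - y) with ⟨e4, _⟩ | ⟨e4, _⟩ <;>
      omega
    · -- u < x, v < y : lower-left
      have h1 : LL S u v x y = LL S (u+1) (v+1) x y + 1 := LL_diag_min hS hx hy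
      have hA : (if x ≤ u ∧ y ≤ v then LL S x y u v
          else if u ≤ x ∧ v ≤ y then LL S u v x y else 0) = LL S u v x y := by
        rw [if_neg (by omega), if_pos ⟨by omega, by omega⟩]
      have hB : (if x ≤ u + 1 ∧ y ≤ v + 1 then LL S x y (u+1) (v+1)
          else if u + 1 ≤ x ∧ v + 1 ≤ y then LL S (u+1) (v+1) x y else 0)
          = LL S (u+1) (v+1) x y := by
        split_ifs with h h'
        · -- u+1 = x and v+1 = y : both boxes empty
          have e1 : LL S x y (u+1) (v+1) = 0 := LL_empty (by omega)
          have e2 : LL S (u+1) (v+1) x y = 0 := LL_empty (by omega)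
          omega
        · rfl
        · omega
      rw [hA, hB]
      rcases abs_cases (u + 1 - x) with ⟨e1, _⟩ | ⟨e1, _⟩ <;>
      rcases abs_cases (u - x) with ⟨e2, _⟩ | ⟨e2, _⟩ <;>
      rcases abs_cases (v + 1 - y) with ⟨e3, _⟩ | ⟨e3, _⟩ <;>
      rcases abs_cases (v - y) with ⟨e4, _⟩ | ⟨e4, _⟩ <;>
      omega

lemma phi_edge {S : Set (ℤ × ℤ)} (x y : ℤ) {p q : ℤ × ℤ} {w : ℕ}
    (h : agEdge S p q w) : phi S x y q - phi S x y p ≤ (w : ℤ) := by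
  have hp : p = (p.1, p.2) := rfl
  have hq : q = (q.1, q.2) := rfl
  rcases h with ⟨h1 | h1 | h1 | h1, rfl⟩ | ⟨h1 | h1, rfl⟩
  · have := phi_hstep S x y p.1 p.2
    rw [hq, h1.1, h1.2]
    rw [← hp] at this
    rcases abs_le.mp this with ⟨_, h'⟩
    simpa using h'
  · have := phi_hstep S x y q.1 q.2
    rw [hp, h1.1, h1.2]
    rw [← hq] at this
    rcases abs_le.mp this with ⟨h', _⟩
    push_cast
    omega
  · have := phi_vstep S x y p.1 p.2
    rw [hq, h1.1, h1.2]
    rw [← hp] at this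
    rcases abs_le.mp this with ⟨_, h'⟩
    simpa using h'
  · have := phi_vstep S x y q.1 q.2
    rw [hp, h1.1, h1.2]
    rw [← hq] at this
    rcases abs_le.mp this with ⟨h', _⟩
    push_cast
    omega
  · obtain ⟨e1, e2, hmem⟩ := h1
    have hmem' : (p.1, p.2) ∈ S := hp ▸ hmem
    have heq := phi_diag S x y hmem'
    rw [hq, e1, e2, heq, ← hp]
    simp
  · obtain ⟨e1, e2, hmem⟩ := h1
    have hmem' : (q.1, q.2) ∈ S := hq ▸ hmem
    have heq := phi_diag S x y hmem'
    rw [hp, e1, e2, heq, ← hq]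
    simp


lemma walk_refl {n m : ℕ} {S : Set (ℤ × ℤ)} {p : ℤ × ℤ} (h : inGrid n m p) :
    agWalkCost n m S p p 0 :=
  ⟨0, fun _ => p, fun _ => 0, rfl, rfl, fun _ _ => h,
    fun i hi => absurd hi (Nat.not_lt_zero i), by simp⟩

lemma walk_single {n m : ℕ} {S : Set (ℤ × ℤ)} {p q : ℤ × ℤ} {w : ℕ}
    (h : agEdge S p q w) (hp : inGrid n m p) (hq : inGrid n m q) :
    agWalkCost n m S p q w := by
  refine ⟨1, fun i => if i = 0 then p else q, fun _ => w, by simp, by simp, ?_, ?_, by simp⟩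
  · intro i hi
    interval_cases i <;> simp [hp, hq]
  · intro i hi
    interval_cases i
    simpa using h

lemma walk_trans {n m : ℕ} {S : Set (ℤ × ℤ)} {p q r : ℤ × ℤ} {c1 c2 : ℕ}
    (h1 : agWalkCost n m S p q c1) (h2 : agWalkCost n m S q r c2) :
    agWalkCost n m S p r (c1 + c2) := by
  obtain ⟨L1, f1, w1, hf10, hf1L, hg1, he1, hs1⟩ := h1
  obtain ⟨L2, f2, w2, hf20, hf2L, hg2, he2, hs2⟩ := h2
  refine ⟨L1 + L2, fun i => if i < L1 then f1 i else f2 (i - L1),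
    fun i => if i < L1 then w1 i else w2 (i - L1), ?_, ?_, ?_, ?_, ?_⟩
  · simp only
    split_ifs with h
    · exact hf10
    · have hL1 : L1 = 0 := by omega
      have : f2 0 = p := by
        rw [hf20, ← hf10, ← hf1L, hL1]
      simpa using this
  · simp only
    rw [if_neg (by omega)]
    simpa using hf2L
  · intro i hi
    simp only
    split_ifs with h
    · exact hg1 i (by omega)
    · exact hg2 (i - L1) (by omega)
  · intro i hi
    simp only
    rcases lt_trichotomy (i + 1) L1 with h | h | h
    · simp only [if_pos (show i < L1 by omega), if_pos h]
      exact he1 i (by omega)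
    · simp only [if_pos (show i < L1 by omega), if_neg (show ¬ (i + 1 < L1) by omega)]
      have : f2 (i + 1 - L1) = f1 (i + 1) := by
        rw [show i + 1 - L1 = 0 by omega, hf20, ← hf1L, h]
      rw [this]
      exact he1 i (by omega)
    · simp only [if_neg (show ¬ (i < L1) by omega), if_neg (show ¬ (i + 1 < L1) by omega)]
      have e1 : i + 1 - L1 = (i - L1) + 1 := by omega
      rw [e1]
      exact he2 (i - L1) (by omega)
  · rw [hs1, hs2, Finset.sum_range_add]
    congr 1
    · exact Finset.sum_congr rfl fun i hi => (if_pos (Finset.mem_range.mp hi)).symm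
    · refine Finset.sum_congr rfl fun i _ => ?_
      rw [if_neg (show ¬ (L1 + i < L1) by omega), Nat.add_sub_cancel_left]

lemma walk_right {n m : ℕ} {S : Set (ℤ × ℤ)} (k : ℕ) (a b : ℤ)
    (h0 : inGrid n m (a, b)) (h1 : inGrid n m (a + k, b)) :
    agWalkCost n m S (a, b) (a + k, b) k := by
  induction k with
  | zero => simpa using walk_refl h0
  | succ k ih =>
    have hmid : inGrid n m (a + k, b) := by
      unfold inGrid at *
      simp only at *
      push_cast at *
      omega
    have hstep : agWalkCost n m S (a + k, b) (a + (k + 1 : ℕ), b) 1 := by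
      refine walk_single (Or.inl ⟨Or.inl ⟨?_, rfl⟩, rfl⟩) hmid h1
      simp only
      push_cast
      ring
    simpa using walk_trans (ih hmid) hstep

lemma walk_up {n m : ℕ} {S : Set (ℤ × ℤ)} (k : ℕ) (a b : ℤ)
    (h0 : inGrid n m (a, b)) (h1 : inGrid n m (a, b + k)) :
    agWalkCost n m S (a, b) (a, b + k) k := by
  induction k with
  | zero => simpa using walk_refl h0
  | succ k ih =>
    have hmid : inGrid n m (a, b + k) := by
      unfold inGrid at *
      simp only at *
      push_cast at *
      omega
    have hstep : agWalkCost n m S (a, b + k) (a, b + (k + 1 : ℕ)) 1 := by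
      refine walk_single (Or.inl ⟨Or.inr (Or.inr (Or.inl ⟨rfl, ?_⟩)), rfl⟩) hmid h1
      simp only
      push_cast
      ring
    simpa using walk_trans (ih hmid) hstep

lemma walk_mono {n m : ℕ} {S : Set (ℤ × ℤ)} {a b c d : ℤ}
    (h0 : inGrid n m (a, b)) (h1 : inGrid n m (c, d)) (hac : a ≤ c) (hbd : b ≤ d) :
    agWalkCost n m S (a, b) (c, d) ((c - a).toNat + (d - b).toNat) := by
  have hmid : inGrid n m (c, b) := by
    unfold inGrid at *
    simp only at *
    omega
  have e1 : a + ((c - a).toNat : ℤ) = c := by omega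
  have e2 : b + ((d - b).toNat : ℤ) = d := by omega
  have w1 : agWalkCost n m S (a, b) (c, b) (c - a).toNat := by
    have := walk_right (S := S) (c - a).toNat a b h0 (by rwa [e1])
    rwa [e1] at this
  have w2 : agWalkCost n m S (c, b) (c, d) (d - b).toNat := by
    have := walk_up (S := S) (d - b).toNat c b hmid (by rwa [e2])
    rwa [e2] at this
  exact walk_trans w1 w2


lemma upper (n m : ℕ) (S : Set (ℤ × ℤ)) (x' y' : ℤ) (hx'n : x' ≤ (n : ℤ)) (hy'm : y' ≤ (m : ℤ)) :
    ∀ (k : ℕ) (C : Finset (ℤ × ℤ)) (a b : ℤ), C.card = k →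
      chainIn (S ∩ box a b x' y') C → inGrid n m (a, b) → a ≤ x' → b ≤ y' →
      ∃ c : ℕ, (c : ℤ) = (x' - a) + (y' - b) - 2 * k ∧ agWalkCost n m S (a, b) (x', y') c := by
  intro k
  induction k with
  | zero =>
    intro C a b hcard hchain hg hax hby
    refine ⟨(x' - a).toNat + (y' - b).toNat, by push_cast; omega, ?_⟩
    have hg' : inGrid n m (x', y') := by
      unfold inGrid at *
      simp only at *
      omega
    exact walk_mono hg hg' hax hby
  | succ k ih =>
    intro C a b hcard hchain hg hax hby
    have hne : C.Nonempty := Finset.card_pos.mp (by omega)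
    obtain ⟨p, hpC, hmin⟩ := C.exists_min_image Prod.fst hne
    have hpmem := hchain.1 hpC
    have hpS : p ∈ S := hpmem.1
    have hpbox := hpmem.2
    simp only [box, Set.mem_setOf_eq] at hpbox
    have hdom : ∀ q ∈ C, q ≠ p → p.1 < q.1 ∧ p.2 < q.2 := by
      intro q hq hne'
      rcases hchain.2 p hpC q hq (Ne.symm hne') with h | h
      · exact h
      · exact absurd h.1 (by have := hmin q hq; omega)
    -- grid facts
    have hgp : inGrid n m (p.1, p.2) := by
      unfold inGrid at *
      simp only at *
      omega
    have hgp' : inGrid n m (p.1 + 1, p.2 + 1) := by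
      unfold inGrid at *
      simp only at *
      omega
    -- first leg
    have w1 : agWalkCost n m S (a, b) (p.1, p.2) ((p.1 - a).toNat + (p.2 - b).toNat) :=
      walk_mono hg hgp (by omega) (by omega)
    -- diagonal edge
    have hedge : agEdge S (p.1, p.2) (p.1 + 1, p.2 + 1) 0 := by
      refine Or.inr ⟨Or.inl ⟨rfl, rfl, ?_⟩, rfl⟩
      simpa using hpS
    have w2 : agWalkCost n m S (p.1, p.2) (p.1 + 1, p.2 + 1) 0 :=
      walk_single hedge hgp hgp'
    -- recursive leg
    have hchain' : chainIn (S ∩ box (p.1 + 1) (p.2 + 1) x' y') (C.erase p) := by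
      constructor
      · intro q hq
        simp only [Finset.coe_erase, Set.mem_diff, Set.mem_singleton_iff] at hq
        have hqmem := hchain.1 hq.1
        have := hdom q hq.1 hq.2
        refine ⟨hqmem.1, ?_⟩
        have := hqmem.2
        simp only [box, Set.mem_setOf_eq] at this ⊢
        omega
      · intro q1 h1 q2 h2 hne'
        exact hchain.2 q1 (Finset.mem_of_mem_erase h1) q2 (Finset.mem_of_mem_erase h2) hne'
    obtain ⟨c, hc, w3⟩ := ih (C.erase p) (p.1 + 1) (p.2 + 1)
      (by rw [Finset.card_erase_of_mem hpC, hcard]; omega) hchain' hgp' (by omega) (by omega)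
    refine ⟨(p.1 - a).toNat + (p.2 - b).toNat + 0 + c, ?_, ?_⟩
    · push_cast
      push_cast at hc
      omega
    · exact walk_trans (walk_trans w1 w2) w3

end Stmt12

/-- If `x ≤ x'` and `y ≤ y'`, then
`dist_G((x,y),(x',y')) = (x'−x) + (y'−y) − 2·LIS(S ∩ [x..x')×[y..y'))`. -/
theorem stmt12 (n m : ℕ) (S : Set (ℤ × ℤ))
    (hS : ∀ p ∈ S, 0 ≤ p.1 ∧ p.1 < (n : ℤ) ∧ 0 ≤ p.2 ∧ p.2 < (m : ℤ))
    (x y x' y' : ℤ) (hp : inGrid n m (x, y)) (hp' : inGrid n m (x', y'))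
    (hxx : x ≤ x') (hyy : y ≤ y')
    (d : ℕ) (hd : IsLeast {c | agWalkCost n m S (x, y) (x', y') c} d)
    (lis : ℕ)
    (hlis : IsGreatest {k | ∃ C : Finset (ℤ × ℤ),
        chainIn (S ∩ {p | x ≤ p.1 ∧ p.1 < x' ∧ y ≤ p.2 ∧ p.2 < y'}) C ∧ C.card = k} lis) :
    (d : ℤ) = (x' - x) + (y' - y) - 2 * (lis : ℤ) := by
  classical
  -- upper bound : d ≤ Δ - 2 lis
  obtain ⟨C, hchain, hcard⟩ := hlis.1
  have hchain' : chainIn (S ∩ Stmt12.box x y x' y') C := hchain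
  obtain ⟨c, hc, hwalk⟩ := Stmt12.upper n m S x' y' hp'.2.1 hp'.2.2.2 lis C x y hcard hchain'
    hp hxx hyy
  have hdc : d ≤ c := hd.2 hwalk
  -- lis = LL
  have hlisLL : lis = Stmt12.LL S x y x' y' :=
    hlis.unique (Stmt12.isGreatest_LL S x y x' y')
  -- lower bound via potential
  have tel : Stmt12.phi S x y (x', y') - Stmt12.phi S x y (x, y) ≤ (d : ℤ) := by
    obtain ⟨L, f, w, hf0, hfL, hgrid, hedge, hsum⟩ := hd.1
    have hle : ∑ i ∈ Finset.range L, (Stmt12.phi S x y (f (i + 1)) - Stmt12.phi S x y (f i))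
        ≤ ∑ i ∈ Finset.range L, (w i : ℤ) :=
      Finset.sum_le_sum fun i hi => Stmt12.phi_edge x y (hedge i (Finset.mem_range.mp hi))
    rw [Finset.sum_range_sub (fun i => Stmt12.phi S x y (f i)) L, hf0, hfL] at hle
    calc Stmt12.phi S x y (x', y') - Stmt12.phi S x y (x, y)
        ≤ ∑ i ∈ Finset.range L, (w i : ℤ) := hle
      _ = (d : ℤ) := by rw [hsum]; push_cast; ring
  have hstart : Stmt12.phi S x y (x, y) = 0 := by
    unfold Stmt12.phi Stmt12.NN
    simp only
    rw [if_pos ⟨le_refl x, le_refl y⟩, Stmt12.LL_empty (Or.inl le_rfl)]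
    simp
  have hend : Stmt12.phi S x y (x', y') =
      (x' - x) + (y' - y) - 2 * (Stmt12.LL S x y x' y' : ℤ) := by
    unfold Stmt12.phi Stmt12.NN
    simp only
    rw [if_pos ⟨hxx, hyy⟩, abs_of_nonneg (by omega), abs_of_nonneg (by omega)]
  rw [hstart, hend, sub_zero] at tel
  omega
end

section
/- Let π be a cut-path in the grid [0..n]×[0..m] and G = AG^{n,m}(S) an alignment graph. Then π, viewed as a sequence of vertices, is a path in G traversing only weight-1 edges, and for all a,b ∈ [0..n+m], dist_G(π_a, π_b) = |a − b|. -/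
lemma agEdge_symm {S : Set (ℤ × ℤ)} {p q : ℤ × ℤ} {w : ℕ}
    (h : agEdge S p q w) : agEdge S q p w := by
  unfold agEdge at h ⊢; tauto

lemma agEdge_diff {S : Set (ℤ × ℤ)} {p q : ℤ × ℤ} {w : ℕ}
    (h : agEdge S p q w) :
    ((q.1 - q.2) - (p.1 - p.2)).natAbs ≤ w := by
  rcases h with ⟨h, hw⟩ | ⟨h, hw⟩
  · rcases h with ⟨h1, h2⟩ | ⟨h1, h2⟩ | ⟨h1, h2⟩ | ⟨h1, h2⟩ <;> omega
  · rcases h with ⟨h1, h2, -⟩ | ⟨h1, h2, -⟩ <;> omega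

/-- A cut-path `π` is a path in `AG^{n,m}(S)` traversing only
weight-1 edges, and `dist_G(π_a, π_b) = |a − b|`. -/
theorem stmt14 (n m : ℕ) (S : Set (ℤ × ℤ))
    (hS : ∀ p ∈ S, 0 ≤ p.1 ∧ p.1 < (n : ℤ) ∧ 0 ≤ p.2 ∧ p.2 < (m : ℤ))
    (π : ℕ → ℤ × ℤ)
    (hgrid : ∀ d ≤ n + m, inGrid n m (π d))
    (hdiag : ∀ d ≤ n + m, (π d).1 - (π d).2 = (d : ℤ) - (m : ℤ))
    (hanti : ∀ d ≤ n + m, ∀ d' ≤ n + m, ¬((π d).1 < (π d').1 ∧ (π d).2 < (π d').2)) :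
    (∀ d, d + 1 ≤ n + m → agEdge S (π d) (π (d + 1)) 1) ∧
    (∀ a ≤ n + m, ∀ b ≤ n + m,
      IsLeast {c | agWalkCost n m S (π a) (π b) c} ((a : ℤ) - (b : ℤ)).natAbs) := by
  have hedge : ∀ d, d + 1 ≤ n + m → agEdge S (π d) (π (d + 1)) 1 := by
    intro d hd
    have h1 := hdiag d (by omega)
    have h2 := hdiag (d + 1) hd
    have h3 := hanti d (by omega) (d + 1) hd
    have h4 := hanti (d + 1) hd d (by omega)
    have hcase : ((π (d+1)).1 = (π d).1 + 1 ∧ (π (d+1)).2 = (π d).2) ∨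
        ((π d).1 = (π (d+1)).1 ∧ (π d).2 = (π (d+1)).2 + 1) := by omega
    exact Or.inl ⟨by tauto, rfl⟩
  refine ⟨hedge, fun a ha b hb => ⟨?_, ?_⟩⟩
  · -- membership
    rcases le_or_gt a b with hab | hab
    · refine ⟨b - a, fun i => π (a + i), fun _ => 1, by simp,
        by have h : a + (b - a) = b := by omega
           simp only [h],
        fun i hi => hgrid (a + i) (by omega), fun i hi => ?_, ?_⟩
      · show agEdge S (π (a + i)) (π (a + (i + 1))) 1
        have he : a + (i + 1) = (a + i) + 1 := by omega
        rw [he]; exact hedge (a + i) (by omega)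
      · simp only [Finset.sum_const, Finset.card_range, smul_eq_mul, mul_one]; omega
    · refine ⟨a - b, fun i => π (a - i), fun _ => 1, by simp,
        by have h : a - (a - b) = b := by omega
           simp only [h],
        fun i hi => hgrid (a - i) (by omega), fun i hi => ?_, ?_⟩
      · show agEdge S (π (a - i)) (π (a - (i + 1))) 1
        have h := agEdge_symm (hedge (a - i - 1) (by omega))
        have he1 : a - i - 1 + 1 = a - i := by omega
        have he2 : a - (i + 1) = a - i - 1 := by omega
        rw [he1] at h; rw [he2]; exact h
      · simp only [Finset.sum_const, Finset.card_range, smul_eq_mul, mul_one]; omega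
  · -- lower bound
    rintro c ⟨L, f, w, hf0, hfL, hg, he, hcsum⟩
    have key : ∀ i ≤ L,
        (((f i).1 - (f i).2) - ((f 0).1 - (f 0).2)).natAbs ≤ ∑ j ∈ Finset.range i, w j := by
      intro i
      induction i with
      | zero => simp
      | succ k ih =>
        intro hk
        have h1 := ih (by omega)
        have h2 := agEdge_diff (he k (by omega))
        rw [Finset.sum_range_succ]
        omega
    have hk := key L le_rfl
    rw [hf0, hfL, ← hcsum] at hk
    have ha' := hdiag a ha
    have hb' := hdiag b hb
    omega
end

section
/- Let G = SAG^{n,m}(π, π', S) be the slice alignment graph (the subgraph of AG^{n,m}(S) induced by the points between cut-paths π ⪯ π'), and define D_G[a,b] = dist_G(π_a, π'_b) and M_G[a,b] = (D_G[a,b] − a + b)/2 for a,b ∈ [0..n+m]. Then M_G[a,b] is a non-negative integer for all a,b, M_G[a,b] = 0 whenever a = n+m or b = 0, M_G[0,b] = b, and M_G[a, n+m] = n+m−a. -/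
/-- `p ⪯ q`: equal, or strictly smaller in both coordinates. -/
def prec_eq (p q : ℤ × ℤ) : Prop :=
  p = q ∨ (p.1 < q.1 ∧ p.2 < q.2)

/-- A cut-path in `[0..n]×[0..m]`: an antichain with `π d` on diagonal `x−y = d−m`. -/
def IsCutPath (n m : ℕ) (π : ℕ → ℤ × ℤ) : Prop :=
  (∀ d ≤ n + m, inGrid n m (π d)) ∧
  (∀ d ≤ n + m, (π d).1 - (π d).2 = (d : ℤ) - (m : ℤ)) ∧
  (∀ d ≤ n + m, ∀ d' ≤ n + m, ¬((π d).1 < (π d').1 ∧ (π d).2 < (π d').2))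

/-- Membership in the (closed) slice between cut-paths `π ⪯ π'`. -/
def inSlice (m : ℕ) (π π' : ℕ → ℤ × ℤ) (p : ℤ × ℤ) : Prop :=
  prec_eq (π (p.1 - p.2 + m).toNat) p ∧ prec_eq p (π' (p.1 - p.2 + m).toNat)

/-- `sagWalkCost`: existence of a walk of total weight `c` in the slice alignment
graph `SAG^{n,m}(π, π', S)` (the subgraph induced by the slice between `π` and `π'`). -/
def sagWalkCost (n m : ℕ) (π π' : ℕ → ℤ × ℤ) (S : Set (ℤ × ℤ))
    (p p' : ℤ × ℤ) (c : ℕ) : Prop :=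
  ∃ (L : ℕ) (f : ℕ → ℤ × ℤ) (w : ℕ → ℕ),
    f 0 = p ∧ f L = p' ∧
    (∀ i ≤ L, inGrid n m (f i) ∧ inSlice m π π' (f i)) ∧
    (∀ i < L, agEdge S (f i) (f (i + 1)) (w i)) ∧
    c = ∑ i ∈ Finset.range L, w i

lemma cutPath_step {n m : ℕ} {ρ : ℕ → ℤ × ℤ} (hρ : IsCutPath n m ρ)
    (S : Set (ℤ × ℤ)) {d : ℕ} (hd : d < n + m) :
    agEdge S (ρ d) (ρ (d + 1)) 1 := by
  obtain ⟨hg, hdiag, hanti⟩ := hρ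
  have h1 := hdiag d (by omega)
  have h2 := hdiag (d + 1) (by omega)
  have hA := hanti d (by omega) (d + 1) (by omega)
  have hB := hanti (d + 1) (by omega) d (by omega)
  left
  exact ⟨by omega, rfl⟩

lemma slice_left {n m : ℕ} {π π' : ℕ → ℤ × ℤ} (hπ : IsCutPath n m π)
    (hord : ∀ d ≤ n + m, prec_eq (π d) (π' d)) :
    ∀ d ≤ n + m, inSlice m π π' (π d) := by
  intro d hd
  have h := hπ.2.1 d hd
  unfold inSlice
  have h2 : ((π d).1 - (π d).2 + m) = (d : ℤ) := by omega
  rw [h2, Int.toNat_natCast]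
  exact ⟨Or.inl rfl, hord d hd⟩

lemma slice_right {n m : ℕ} {π π' : ℕ → ℤ × ℤ} (hπ' : IsCutPath n m π')
    (hord : ∀ d ≤ n + m, prec_eq (π d) (π' d)) :
    ∀ d ≤ n + m, inSlice m π π' (π' d) := by
  intro d hd
  have h := hπ'.2.1 d hd
  unfold inSlice
  have h2 : ((π' d).1 - (π' d).2 + m) = (d : ℤ) := by omega
  rw [h2, Int.toNat_natCast]
  exact ⟨hord d hd, Or.inl rfl⟩

lemma endpoints {n m : ℕ} {π π' : ℕ → ℤ × ℤ} (hπ : IsCutPath n m π)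
    (hπ' : IsCutPath n m π') : π (n + m) = π' (n + m) ∧ π 0 = π' 0 := by
  obtain ⟨hg, hd, -⟩ := hπ
  obtain ⟨hg', hd', -⟩ := hπ'
  have g1 := hg (n + m) le_rfl
  have g2 := hg' (n + m) le_rfl
  have g3 := hg 0 (by omega)
  have g4 := hg' 0 (by omega)
  have d1 := hd (n + m) le_rfl
  have d2 := hd' (n + m) le_rfl
  have d3 := hd 0 (by omega)
  have d4 := hd' 0 (by omega)
  unfold inGrid at g1 g2 g3 g4
  push_cast at d1 d2 d3 d4
  constructor <;> refine Prod.ext_iff.mpr ⟨by omega, by omega⟩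

lemma walk_up {n m : ℕ} {π π' ρ : ℕ → ℤ × ℤ} (S : Set (ℤ × ℤ))
    (hρ : IsCutPath n m ρ)
    (hmem : ∀ d ≤ n + m, inSlice m π π' (ρ d))
    {a b : ℕ} (hab : a ≤ b) (hb : b ≤ n + m) :
    sagWalkCost n m π π' S (ρ a) (ρ b) (b - a) := by
  refine ⟨b - a, fun i => ρ (a + i), fun _ => 1, rfl, ?_, ?_, ?_, by simp⟩
  · show ρ (a + (b - a)) = ρ b
    congr 1; omega
  · intro i hi
    exact ⟨hρ.1 _ (by omega), hmem _ (by omega)⟩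
  · intro i hi
    show agEdge S (ρ (a + i)) (ρ (a + (i + 1))) 1
    have h1 : a + (i + 1) = (a + i) + 1 := by omega
    rw [h1]
    exact cutPath_step hρ S (by omega)

lemma walk_down {n m : ℕ} {π π' ρ : ℕ → ℤ × ℤ} (S : Set (ℤ × ℤ))
    (hρ : IsCutPath n m ρ)
    (hmem : ∀ d ≤ n + m, inSlice m π π' (ρ d))
    {a b : ℕ} (hab : a ≤ b) (hb : b ≤ n + m) :
    sagWalkCost n m π π' S (ρ b) (ρ a) (b - a) := by
  refine ⟨b - a, fun i => ρ (b - i), fun _ => 1, by simp, ?_, ?_, ?_, by simp⟩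
  · show ρ (b - (b - a)) = ρ a
    congr 1; omega
  · intro i hi
    exact ⟨hρ.1 _ (by omega), hmem _ (by omega)⟩
  · intro i hi
    show agEdge S (ρ (b - i)) (ρ (b - (i + 1))) 1
    have h1 : b - i = (b - (i + 1)) + 1 := by omega
    rw [h1]
    exact agEdge_symm (cutPath_step hρ S (by omega))

lemma walk_lb {n m : ℕ} {π π' : ℕ → ℤ × ℤ} {S : Set (ℤ × ℤ)} {p q : ℤ × ℤ} {c : ℕ}
    (h : sagWalkCost n m π π' S p q c) :
    (2 ∣ ((c : ℤ) - (q.1 - q.2) + (p.1 - p.2))) ∧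
    (q.1 - q.2) - (p.1 - p.2) ≤ (c : ℤ) ∧
    (p.1 - p.2) - (q.1 - q.2) ≤ (c : ℤ) := by
  obtain ⟨L, f, w, h0, hL, hmem, hedge, hc⟩ := h
  have key : ∀ K, (∀ i < K, agEdge S (f i) (f (i + 1)) (w i)) →
      (2 ∣ ((∑ i ∈ Finset.range K, (w i : ℤ)) - ((f K).1 - (f K).2) + ((f 0).1 - (f 0).2))) ∧
      ((f K).1 - (f K).2) - ((f 0).1 - (f 0).2) ≤ ∑ i ∈ Finset.range K, (w i : ℤ) ∧
      ((f 0).1 - (f 0).2) - ((f K).1 - (f K).2) ≤ ∑ i ∈ Finset.range K, (w i : ℤ) := by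
    intro K
    induction K with
    | zero => intro _; simp
    | succ K ih =>
      intro hK
      obtain ⟨i1, i2, i3⟩ := ih (fun i hi => hK i (by omega))
      have he := hK K (by omega)
      unfold agEdge at he
      rw [Finset.sum_range_succ]
      rcases he with ⟨⟨e1, e2⟩ | ⟨e1, e2⟩ | ⟨e1, e2⟩ | ⟨e1, e2⟩, hw⟩ |
        ⟨⟨e1, e2, -⟩ | ⟨e1, e2, -⟩, hw⟩ <;> rw [hw] <;>
      refine ⟨by push_cast; omega, by push_cast; omega, by push_cast; omega⟩
  have hcz : (c : ℤ) = ∑ i ∈ Finset.range L, (w i : ℤ) := by rw [hc]; push_cast; rfl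
  have K := key L hedge
  rw [h0, hL, ← hcz] at K
  exact K

/-- for `D_G[a,b] = dist_G(π_a, π'_b)` and
`M_G[a,b] = (D_G[a,b] − a + b)/2`, the entries `M_G[a,b]` are non-negative
integers, `M_G[a,b] = 0` when `a = n+m` or `b = 0`, `M_G[0,b] = b`, and
`M_G[a,n+m] = n+m−a`. -/
theorem stmt15 (n m : ℕ) (π π' : ℕ → ℤ × ℤ) (S : Set (ℤ × ℤ))
    (hπ : IsCutPath n m π) (hπ' : IsCutPath n m π')
    (hord : ∀ d ≤ n + m, prec_eq (π d) (π' d))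
    (hS : ∀ p ∈ S, 0 ≤ p.1 ∧ p.1 < (n : ℤ) ∧ 0 ≤ p.2 ∧ p.2 < (m : ℤ))
    (D : ℕ → ℕ → ℕ)
    (hD : ∀ a ≤ n + m, ∀ b ≤ n + m,
      IsLeast {c | sagWalkCost n m π π' S (π a) (π' b) c} (D a b)) :
    ∀ a ≤ n + m, ∀ b ≤ n + m,
      (2 ∣ ((D a b : ℤ) - (a : ℤ) + (b : ℤ))) ∧
      0 ≤ ((D a b : ℤ) - (a : ℤ) + (b : ℤ)) / 2 ∧
      (a = n + m → ((D a b : ℤ) - (a : ℤ) + (b : ℤ)) / 2 = 0) ∧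
      (b = 0 → ((D a b : ℤ) - (a : ℤ) + (b : ℤ)) / 2 = 0) ∧
      (a = 0 → ((D a b : ℤ) - (a : ℤ) + (b : ℤ)) / 2 = (b : ℤ)) ∧
      (b = n + m → ((D a b : ℤ) - (a : ℤ) + (b : ℤ)) / 2 = (n : ℤ) + (m : ℤ) - (a : ℤ)) := by
  intro a ha b hb
  have hDl := hD a ha b hb
  have lb := walk_lb hDl.1
  have da := hπ.2.1 a ha
  have db := hπ'.2.1 b hb
  rw [da, db] at lb
  obtain ⟨lb1, lb2, lb3⟩ := lb
  have hend := endpoints hπ hπ'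
  have hmemL := slice_left hπ hord
  have hmemR := slice_right hπ' hord
  refine ⟨by omega, by omega, ?_, ?_, ?_, ?_⟩
  · intro h; subst h
    have w1 := walk_down S hπ' hmemR hb le_rfl
    rw [← hend.1] at w1
    have ub := hDl.2 w1
    omega
  · intro h; subst h
    have w1 := walk_down S hπ hmemL (Nat.zero_le a) ha
    rw [hend.2] at w1
    have ub := hDl.2 w1
    omega
  · intro h; subst h
    have w1 := walk_up S hπ' hmemR (Nat.zero_le b) hb
    rw [← hend.2] at w1
    have ub := hDl.2 w1
    omega
  · intro h; subst h
    have w1 := walk_up S hπ hmemL ha le_rfl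
    rw [hend.1] at w1
    have ub := hDl.2 w1
    omega
end

section
/- Let M_G be the matrix associated to a slice alignment graph G = SAG^{n,m}(π, π', S) via M_G[a,b] = (dist_G(π_a, π'_b) − a + b)/2, and let P_G = M_G^□ be its density matrix. Then P_G is an (n+m)×(n+m) permutation matrix: each row and each column of P_G contains exactly one entry equal to 1 and all other entries equal 0. -/
/- Part 0: generic helpers -/
lemma sum_range_add' {M : Type*} [AddCommMonoid M] (F : ℕ → M) (a b : ℕ) :
    ∑ i ∈ Finset.range (a + b), F i
      = (∑ i ∈ Finset.range a, F i) + ∑ i ∈ Finset.range b, F (a + i) := by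
  induction b with
  | zero => simp
  | succ b ih =>
      rw [show a + (b+1) = (a+b)+1 from rfl, Finset.sum_range_succ, ih,
        Finset.sum_range_succ, add_assoc]

lemma zmod2_self_add (x : ZMod 2) : x + x = 0 := by
  have : (2 : ZMod 2) = 0 := by decide
  calc x + x = 2 * x := by ring
  _ = 0 := by rw [this]; ring

lemma telescope_zmod2 (F : ℕ → ZMod 2) (L : ℕ) :
    ∑ i ∈ Finset.range L, (F i + F (i+1)) = F 0 + F L := by
  induction L with
  | zero => rw [Finset.sum_range_zero, eq_comm, zmod2_self_add]
  | succ L ih =>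
      rw [Finset.sum_range_succ, ih, add_assoc, ← add_assoc (F L), zmod2_self_add, zero_add]

/- Part 1: cut-path geometry -/
section cutpath
variable {n m : ℕ} {π π' : ℕ → ℤ × ℤ}

lemma cutPath_mono (hπ : IsCutPath n m π) {d d' : ℕ} (h : d ≤ d') (h' : d' ≤ n + m) :
    (π d).1 ≤ (π d').1 ∧ (π d').2 ≤ (π d).2 := by
  obtain ⟨hg, hdg, ha⟩ := hπ
  have e1 := hdg d (le_trans h h')
  have e2 := hdg d' h'
  have a1 := ha d (le_trans h h') d' h'
  have a2 := ha d' h' d (le_trans h h')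
  constructor
  · by_contra hc
    exact a2 ⟨by omega, by omega⟩
  · by_contra hc
    exact a1 ⟨by omega, by omega⟩

lemma cutPath_adj (hπ : IsCutPath n m π) {d : ℕ} (h : d + 1 ≤ n + m) :
    ((π (d+1)).1 = (π d).1 + 1 ∧ (π (d+1)).2 = (π d).2) ∨
    ((π (d+1)).1 = (π d).1 ∧ (π (d+1)).2 = (π d).2 - 1) := by
  have e1 := hπ.2.1 d (by omega)
  have e2 := hπ.2.1 (d+1) h
  have hm := cutPath_mono hπ (by omega : d ≤ d+1) h
  push_cast at e2
  omega

lemma cutPath_zero (hπ : IsCutPath n m π) : (π 0).1 = 0 ∧ (π 0).2 = (m : ℤ) := by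
  have e := hπ.2.1 0 (by omega)
  have g := hπ.1 0 (by omega)
  obtain ⟨g1, g2, g3, g4⟩ := g
  push_cast at e
  omega

lemma cutPath_last (hπ : IsCutPath n m π) : (π (n+m)).1 = (n : ℤ) ∧ (π (n+m)).2 = 0 := by
  have e := hπ.2.1 (n+m) (le_refl _)
  have g := hπ.1 (n+m) (le_refl _)
  obtain ⟨g1, g2, g3, g4⟩ := g
  push_cast at e
  omega

lemma pi_mem_slice (hπ : IsCutPath n m π) (hord : ∀ d ≤ n + m, prec_eq (π d) (π' d))
    {d : ℕ} (h : d ≤ n + m) : inGrid n m (π d) ∧ inSlice m π π' (π d) := by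
  refine ⟨hπ.1 d h, ?_, ?_⟩ <;>
  · have e := hπ.2.1 d h
    have : ((π d).1 - (π d).2 + m).toNat = d := by omega
    rw [this]
    first
    | exact Or.inl rfl
    | exact hord d h

lemma pi'_mem_slice (hπ' : IsCutPath n m π') (hord : ∀ d ≤ n + m, prec_eq (π d) (π' d))
    {d : ℕ} (h : d ≤ n + m) : inGrid n m (π' d) ∧ inSlice m π π' (π' d) := by
  refine ⟨hπ'.1 d h, ?_, ?_⟩ <;>
  · have e := hπ'.2.1 d h
    have : ((π' d).1 - (π' d).2 + m).toNat = d := by omega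
    rw [this]
    first
    | exact hord d h
    | exact Or.inl rfl

end cutpath
/- Part 2: walk machinery -/
section walks
variable {n m : ℕ} {π π' : ℕ → ℤ × ℤ} {S : Set (ℤ × ℤ)}

lemma agEdge_arith {p q : ℤ × ℤ} {w : ℕ} (h : agEdge S p q w) :
    (((q.1 = p.1 + 1 ∧ q.2 = p.2) ∨ (p.1 = q.1 + 1 ∧ p.2 = q.2) ∨
      (q.1 = p.1 ∧ q.2 = p.2 + 1) ∨ (p.1 = q.1 ∧ p.2 = q.2 + 1)) ∧ w = 1) ∨
    (((q.1 = p.1 + 1 ∧ q.2 = p.2 + 1) ∨ (p.1 = q.1 + 1 ∧ p.2 = q.2 + 1)) ∧ w = 0) := by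
  unfold agEdge at h; tauto

lemma walk_diag_bound {p p' : ℤ × ℤ} {c : ℕ}
    (h : sagWalkCost n m π π' S p p' c) :
    (p'.1 - p'.2) - (p.1 - p.2) ≤ (c : ℤ) ∧ (p.1 - p.2) - (p'.1 - p'.2) ≤ (c : ℤ) := by
  obtain ⟨L, f, w, h0, hL, _, he, hc⟩ := h
  subst h0 hL hc
  have key : ∀ i ≤ L, ((f i).1 - (f i).2) - ((f 0).1 - (f 0).2) ≤ (∑ k ∈ Finset.range i, w k : ℤ) ∧
      ((f 0).1 - (f 0).2) - ((f i).1 - (f i).2) ≤ (∑ k ∈ Finset.range i, w k : ℤ) := by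
    intro i hi
    induction i with
    | zero => simp
    | succ i ih =>
        have hi' : i ≤ L := by omega
        obtain ⟨ih1, ih2⟩ := ih hi'
        have hedge := agEdge_arith (he i (by omega))
        rw [Finset.sum_range_succ]
        push_cast
        omega
  have := key L le_rfl
  push_cast
  exact this

lemma walk_parity {p p' : ℤ × ℤ} {c : ℕ}
    (h : sagWalkCost n m π π' S p p' c) :
    (2 : ℤ) ∣ ((p'.1 + p'.2) - (p.1 + p.2) - c) := by
  obtain ⟨L, f, w, h0, hL, _, he, hc⟩ := h
  subst h0 hL hc
  have key : ∀ i ≤ L,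
      (2:ℤ) ∣ (((f i).1 + (f i).2) - ((f 0).1 + (f 0).2) - (∑ k ∈ Finset.range i, w k : ℤ)) := by
    intro i hi
    induction i with
    | zero => simp
    | succ i ih =>
        have ih' := ih (by omega)
        have hedge := agEdge_arith (he i (by omega))
        rw [Finset.sum_range_succ]
        push_cast
        omega
  have := key L le_rfl
  push_cast
  exact this

lemma mk_walk (L : ℕ) (f : ℕ → ℤ × ℤ)
    (hf : ∀ i ≤ L, inGrid n m (f i) ∧ inSlice m π π' (f i))
    (he : ∀ i < L, agEdge S (f i) (f (i+1)) 1) :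
    sagWalkCost n m π π' S (f 0) (f L) L :=
  ⟨L, f, fun _ => 1, rfl, rfl, hf, he, by simp⟩

lemma walk_trans {p p' p'' : ℤ × ℤ} {c c' : ℕ}
    (h : sagWalkCost n m π π' S p p' c) (h' : sagWalkCost n m π π' S p' p'' c') :
    sagWalkCost n m π π' S p p'' (c + c') := by
  obtain ⟨L, f, w, h0, hL, hm, he, hc⟩ := h
  obtain ⟨L', g, v, g0, gL, gm, ge, gc⟩ := h'
  refine ⟨L + L', fun t => if t < L then f t else g (t - L),
    fun t => if t < L then w t else v (t - L), ?_, ?_, ?_, ?_, ?_⟩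
  · by_cases h0' : 0 < L
    · simpa [h0'] using h0
    · have : L = 0 := by omega
      simp [this, g0, ← h0, this ▸ hL]
  · have : ¬ (L + L' < L) := by omega
    simp only [this, if_false]
    rw [show L + L' - L = L' from by omega, gL]
  · intro i hi
    by_cases hiL : i < L
    · simpa [hiL] using hm i (by omega)
    · simp only [hiL, if_false]
      exact gm (i - L) (by omega)
  · intro i hi
    by_cases h1 : i + 1 < L
    · have : i < L := by omega
      simpa [this, h1] using he i (by omega)
    · by_cases h2 : i < L
      · have hL1 : i + 1 = L := by omega
        simp only [h2, h1, if_pos, if_false]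
        rw [show i + 1 - L = 0 from by omega, g0, ← hL, ← hL1]
        exact he i (by omega)
      · simp only [h2, h1, if_false]
        rw [show i + 1 - L = (i - L) + 1 from by omega]
        exact ge (i - L) (by omega)
  · rw [hc, gc, sum_range_add']
    congr 1
    · exact Finset.sum_congr rfl (fun i hi => by
        have : i < L := Finset.mem_range.mp hi
        simp [this])
    · exact Finset.sum_congr rfl (fun i hi => by
        have : ¬ (L + i < L) := by omega
        simp only [this, if_false]
        rw [show L + i - L = i from by omega])

lemma walk_prefix {p p' : ℤ × ℤ} (L : ℕ) (f : ℕ → ℤ × ℤ) (w : ℕ → ℕ)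
    (h0 : f 0 = p) (hL : f L = p')
    (hm : ∀ i ≤ L, inGrid n m (f i) ∧ inSlice m π π' (f i))
    (he : ∀ i < L, agEdge S (f i) (f (i+1)) (w i)) (i0 : ℕ) (hi0 : i0 ≤ L) :
    sagWalkCost n m π π' S p (f i0) (∑ k ∈ Finset.range i0, w k) :=
  ⟨i0, f, w, h0, rfl, fun i hi => hm i (by omega), fun i hi => he i (by omega), rfl⟩

lemma walk_suffix {p p' : ℤ × ℤ} (L : ℕ) (f : ℕ → ℤ × ℤ) (w : ℕ → ℕ)
    (h0 : f 0 = p) (hL : f L = p')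
    (hm : ∀ i ≤ L, inGrid n m (f i) ∧ inSlice m π π' (f i))
    (he : ∀ i < L, agEdge S (f i) (f (i+1)) (w i)) (i0 : ℕ) (hi0 : i0 ≤ L) :
    sagWalkCost n m π π' S (f i0) p' (∑ k ∈ Finset.range (L - i0), w (i0 + k)) := by
  refine ⟨L - i0, fun t => f (i0 + t), fun t => w (i0 + t), rfl, ?_, ?_, ?_, rfl⟩
  · show f (i0 + (L - i0)) = p'
    rw [show i0 + (L - i0) = L from by omega, hL]
  · intro i hi
    exact hm (i0 + i) (by omega)
  · intro i hi
    show agEdge S (f (i0 + i)) (f (i0 + (i+1))) (w (i0 + i))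
    rw [show i0 + (i+1) = (i0 + i) + 1 from by omega]
    exact he (i0 + i) (by omega)

end walks
/- Part 3: parity/crossing machinery -/

/-- crossing of the downward vertical ray from `p` by edge `{u,v}`,
counted at a right-endpoint lying strictly below `p` on the ray's line. -/
def crossE (u v p : ℤ × ℤ) : ZMod 2 :=
  (if u.1 + 1 = p.1 ∧ v.1 = p.1 ∧ v.2 < p.2 then 1 else 0) +
  (if v.1 + 1 = p.1 ∧ u.1 = p.1 ∧ u.2 < p.2 then 1 else 0)

/-- indicator that `z` lies strictly below the left endpoint of step `{p,q}`
(zero for vertical steps). -/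
def sIn (p q z : ℤ × ℤ) : ZMod 2 :=
  if (p.1 + 1 = q.1 ∧ z.1 = p.1 ∧ z.2 < p.2) ∨ (q.1 + 1 = p.1 ∧ z.1 = q.1 ∧ z.2 < q.2)
  then 1 else 0

/-- edge shapes occurring in alignment graphs (unit steps and NE diagonals). -/
def EdgeShape (p q : ℤ × ℤ) : Prop :=
  (q.1 = p.1 + 1 ∧ q.2 = p.2) ∨ (p.1 = q.1 + 1 ∧ p.2 = q.2) ∨
  (q.1 = p.1 ∧ q.2 = p.2 + 1) ∨ (p.1 = q.1 ∧ p.2 = q.2 + 1) ∨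
  (q.1 = p.1 + 1 ∧ q.2 = p.2 + 1) ∨ (p.1 = q.1 + 1 ∧ p.2 = q.2 + 1)

lemma agEdge_shape {S : Set (ℤ × ℤ)} {p q : ℤ × ℤ} {w : ℕ} (h : agEdge S p q w) :
    EdgeShape p q := by
  unfold agEdge at h; unfold EdgeShape; tauto

lemma crossE_comm (u v p : ℤ × ℤ) : crossE u v p = crossE v u p := by
  unfold crossE
  exact add_comm _ _

lemma sIn_comm (p q z : ℤ × ℤ) : sIn p q z = sIn q p z := by
  unfold sIn
  exact if_congr or_comm rfl rfl

/-- normalized (up-right) edge shapes. -/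
def NormShape (p q : ℤ × ℤ) : Prop :=
  (q.1 = p.1 + 1 ∧ q.2 = p.2) ∨ (q.1 = p.1 ∧ q.2 = p.2 + 1) ∨
  (q.1 = p.1 + 1 ∧ q.2 = p.2 + 1)

lemma edgeShape_norm {p q : ℤ × ℤ} (h : EdgeShape p q) :
    NormShape p q ∨ NormShape q p := by
  unfold EdgeShape at h
  unfold NormShape
  tauto

set_option maxHeartbeats 4000000 in
lemma edge_key_norm {ux uy vx vy px py qx qy : ℤ}
    (hee : NormShape (ux, uy) (vx, vy)) (hs : NormShape (px, py) (qx, qy))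
    (h1 : ¬(ux = px ∧ uy = py)) (h2 : ¬(ux = qx ∧ uy = qy))
    (h3 : ¬(vx = px ∧ vy = py)) (h4 : ¬(vx = qx ∧ vy = qy)) :
    crossE (ux, uy) (vx, vy) (px, py) + crossE (ux, uy) (vx, vy) (qx, qy)
      = sIn (px, py) (qx, qy) (ux, uy) + sIn (px, py) (qx, qy) (vx, vy) := by
  unfold NormShape at hee hs
  unfold crossE sIn
  dsimp only at hee hs ⊢
  rcases hee with ⟨e1, e2⟩ | ⟨e1, e2⟩ | ⟨e1, e2⟩ <;>
    rcases hs with ⟨s1, s2⟩ | ⟨s1, s2⟩ | ⟨s1, s2⟩ <;>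
    subst e1 e2 s1 s2 <;>
    split_ifs <;> first | decide | (exfalso; omega)

/-- The key local parity identity. -/
lemma edge_key {u v p q : ℤ × ℤ} (hee : EdgeShape u v) (hs : EdgeShape p q)
    (h1 : u ≠ p) (h2 : u ≠ q) (h3 : v ≠ p) (h4 : v ≠ q) :
    crossE u v p + crossE u v q = sIn p q u + sIn p q v := by
  obtain ⟨ux, uy⟩ := u
  obtain ⟨vx, vy⟩ := v
  obtain ⟨px, py⟩ := p
  obtain ⟨qx, qy⟩ := q
  simp only [ne_eq, Prod.mk.injEq, not_and] at h1 h2 h3 h4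
  have h1' : ¬(ux = px ∧ uy = py) := by tauto
  have h2' : ¬(ux = qx ∧ uy = qy) := by tauto
  have h3' : ¬(vx = px ∧ vy = py) := by tauto
  have h4' : ¬(vx = qx ∧ vy = qy) := by tauto
  rcases edgeShape_norm hee with he | he <;> rcases edgeShape_norm hs with hp | hp
  · exact edge_key_norm he hp h1' h2' h3' h4'
  · have key := edge_key_norm he hp h2' h1' h4' h3'
    simp only [sIn_comm (px, py) (qx, qy)]
    linear_combination key
  · have key := edge_key_norm he hp h3' h4' h1' h2'
    simp only [crossE_comm (ux, uy) (vx, vy)]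
    linear_combination key
  · have key := edge_key_norm he hp h4' h3' h2' h1'
    simp only [crossE_comm (ux, uy) (vx, vy), sIn_comm (px, py) (qx, qy)]
    linear_combination key
/- Part 4: boundary walks and boundary values of D -/
section boundary
variable {n m : ℕ} {π π' : ℕ → ℤ × ℤ} {S : Set (ℤ × ℤ)}

lemma walk_pi_down (hπ : IsCutPath n m π) (hord : ∀ d ≤ n + m, prec_eq (π d) (π' d))
    {a : ℕ} (ha : a ≤ n + m) : sagWalkCost n m π π' S (π a) (π 0) a := by
  have := mk_walk (π := π) (π' := π') (S := S) a (fun i => π (a - i))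
    (fun i hi => pi_mem_slice hπ hord (by omega))
    (fun i hi => by
      have hadj := cutPath_adj hπ (show (a - i - 1) + 1 ≤ n + m by omega)
      rw [show (a - i - 1) + 1 = a - i from by omega] at hadj
      show agEdge S (π (a - i)) (π (a - (i+1))) 1
      rw [show a - (i+1) = a - i - 1 from by omega]
      unfold agEdge
      rcases hadj with ⟨hx, hy⟩ | ⟨hx, hy⟩
      · exact Or.inl ⟨Or.inr (Or.inl ⟨hx, hy⟩), rfl⟩
      · exact Or.inl ⟨Or.inr (Or.inr (Or.inl ⟨hx.symm, by omega⟩)), rfl⟩)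
  simpa using this

lemma walk_pi_up (hπ : IsCutPath n m π) (hord : ∀ d ≤ n + m, prec_eq (π d) (π' d))
    {a : ℕ} (ha : a ≤ n + m) : sagWalkCost n m π π' S (π a) (π (n + m)) (n + m - a) := by
  have := mk_walk (π := π) (π' := π') (S := S) (n + m - a) (fun i => π (a + i))
    (fun i hi => pi_mem_slice hπ hord (by omega))
    (fun i hi => by
      have hadj := cutPath_adj hπ (show (a + i) + 1 ≤ n + m by omega)
      show agEdge S (π (a + i)) (π ((a + i) + 1)) 1
      unfold agEdge
      rcases hadj with ⟨hx, hy⟩ | ⟨hx, hy⟩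
      · exact Or.inl ⟨Or.inl ⟨hx, hy⟩, rfl⟩
      · exact Or.inl ⟨Or.inr (Or.inr (Or.inr ⟨hx.symm, by omega⟩)), rfl⟩)
  simpa [show a + (n + m - a) = n + m from by omega] using this

lemma walk_pi'_up (hπ' : IsCutPath n m π') (hord : ∀ d ≤ n + m, prec_eq (π d) (π' d))
    {b : ℕ} (hb : b ≤ n + m) : sagWalkCost n m π π' S (π' 0) (π' b) b := by
  have := mk_walk (π := π) (π' := π') (S := S) b (fun i => π' i)
    (fun i hi => pi'_mem_slice hπ' hord (by omega))
    (fun i hi => by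
      have hadj := cutPath_adj hπ' (show i + 1 ≤ n + m by omega)
      show agEdge S (π' i) (π' (i + 1)) 1
      unfold agEdge
      rcases hadj with ⟨hx, hy⟩ | ⟨hx, hy⟩
      · exact Or.inl ⟨Or.inl ⟨hx, hy⟩, rfl⟩
      · exact Or.inl ⟨Or.inr (Or.inr (Or.inr ⟨hx.symm, by omega⟩)), rfl⟩)
  simpa using this

lemma walk_pi'_down (hπ' : IsCutPath n m π') (hord : ∀ d ≤ n + m, prec_eq (π d) (π' d))
    {b : ℕ} (hb : b ≤ n + m) : sagWalkCost n m π π' S (π' (n + m)) (π' b) (n + m - b) := by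
  have := mk_walk (π := π) (π' := π') (S := S) (n + m - b) (fun i => π' (n + m - i))
    (fun i hi => pi'_mem_slice hπ' hord (by omega))
    (fun i hi => by
      have hadj := cutPath_adj hπ' (show (n + m - i - 1) + 1 ≤ n + m by omega)
      rw [show (n + m - i - 1) + 1 = n + m - i from by omega] at hadj
      show agEdge S (π' (n + m - i)) (π' (n + m - (i+1))) 1
      rw [show n + m - (i+1) = n + m - i - 1 from by omega]
      unfold agEdge
      rcases hadj with ⟨hx, hy⟩ | ⟨hx, hy⟩
      · exact Or.inl ⟨Or.inr (Or.inl ⟨hx, hy⟩), rfl⟩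
      · exact Or.inl ⟨Or.inr (Or.inr (Or.inl ⟨hx.symm, by omega⟩)), rfl⟩)
  simpa [show n + m - (n + m - b) = b from by omega] using this

end boundary

section Dfacts
variable {n m : ℕ} {π π' : ℕ → ℤ × ℤ} {S : Set (ℤ × ℤ)} {D : ℕ → ℕ → ℕ}
variable (hπ : IsCutPath n m π) (hπ' : IsCutPath n m π')
  (hord : ∀ d ≤ n + m, prec_eq (π d) (π' d))
  (hD : ∀ a ≤ n + m, ∀ b ≤ n + m,
      IsLeast {c | sagWalkCost n m π π' S (π a) (π' b) c} (D a b))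
include hπ hπ' hord hD

lemma pi'_zero_eq : π' 0 = π 0 := by
  have h1 := cutPath_zero hπ
  have h2 := cutPath_zero hπ'
  exact Prod.ext (by omega) (by omega)

lemma pi'_last_eq : π' (n + m) = π (n + m) := by
  have h1 := cutPath_last hπ
  have h2 := cutPath_last hπ'
  exact Prod.ext (by omega) (by omega)

lemma D_lower {a b : ℕ} (ha : a ≤ n + m) (hb : b ≤ n + m) :
    (a : ℤ) - b ≤ (D a b : ℤ) ∧ (b : ℤ) - a ≤ (D a b : ℤ) := by
  have hw := (hD a ha b hb).1
  have hbd := walk_diag_bound hw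
  have e1 := hπ.2.1 a ha
  have e2 := hπ'.2.1 b hb
  omega

lemma D_a0 {a : ℕ} (ha : a ≤ n + m) : D a 0 = a := by
  have hub := (hD a ha 0 (by omega)).2 (by
    show sagWalkCost n m π π' S (π a) (π' 0) a
    rw [pi'_zero_eq hπ hπ' hord hD]
    exact walk_pi_down hπ hord ha)
  have hlb := (D_lower hπ hπ' hord hD ha (show 0 ≤ n+m by omega)).1
  omega

lemma D_0b {b : ℕ} (hb : b ≤ n + m) : D 0 b = b := by
  have hub := (hD 0 (by omega) b hb).2 (by
    show sagWalkCost n m π π' S (π 0) (π' b) b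
    rw [← pi'_zero_eq hπ hπ' hord hD]
    exact walk_pi'_up hπ' hord hb)
  have hlb := (D_lower hπ hπ' hord hD (show 0 ≤ n+m by omega) hb).2
  omega

lemma D_aN {a : ℕ} (ha : a ≤ n + m) : D a (n + m) = n + m - a := by
  have hub := (hD a ha (n + m) le_rfl).2 (by
    show sagWalkCost n m π π' S (π a) (π' (n + m)) (n + m - a)
    rw [pi'_last_eq hπ hπ' hord hD]
    exact walk_pi_up hπ hord ha)
  have hlb := (D_lower hπ hπ' hord hD ha le_rfl).2
  omega

lemma D_Nb {b : ℕ} (hb : b ≤ n + m) : D (n + m) b = n + m - b := by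
  have hub := (hD (n + m) le_rfl b hb).2 (by
    show sagWalkCost n m π π' S (π (n + m)) (π' b) (n + m - b)
    rw [← pi'_last_eq hπ hπ' hord hD]
    exact walk_pi'_down hπ' hord hb)
  have hlb := (D_lower hπ hπ' hord hD le_rfl hb).1
  omega

lemma D_parity {a b : ℕ} (ha : a ≤ n + m) (hb : b ≤ n + m) :
    (2 : ℤ) ∣ ((D a b : ℤ) - a + b) := by
  have hw := (hD a ha b hb).1
  have hp := walk_parity hw
  have e1 := hπ.2.1 a ha
  have e2 := hπ'.2.1 b hb
  omega

end Dfacts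
/- Part 5: chain sums and reciprocity -/

def Xcr (LB : ℕ) (B : ℕ → ℤ × ℤ) (p : ℤ × ℤ) : ZMod 2 :=
  ∑ j ∈ Finset.range LB, crossE (B j) (B (j+1)) p

def Ucr (LA : ℕ) (A : ℕ → ℤ × ℤ) (z : ℤ × ℤ) : ZMod 2 :=
  ∑ i ∈ Finset.range LA, sIn (A i) (A (i+1)) z

lemma recip (LA LB : ℕ) (A B : ℕ → ℤ × ℤ)
    (hA : ∀ i < LA, EdgeShape (A i) (A (i+1)))
    (hB : ∀ j < LB, EdgeShape (B j) (B (j+1)))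
    (hdisj : ∀ i ≤ LA, ∀ j ≤ LB, A i ≠ B j) :
    Xcr LB B (A 0) + Xcr LB B (A LA) = Ucr LA A (B 0) + Ucr LA A (B LB) := by
  have step1 := (telescope_zmod2 (fun i => Xcr LB B (A i)) LA).symm
  rw [step1]
  have step2 : ∀ i ∈ Finset.range LA,
      Xcr LB B (A i) + Xcr LB B (A (i+1))
        = sIn (A i) (A (i+1)) (B 0) + sIn (A i) (A (i+1)) (B LB) := by
    intro i hi
    have hi' := Finset.mem_range.mp hi
    unfold Xcr
    rw [← Finset.sum_add_distrib]
    have hcong : ∀ j ∈ Finset.range LB,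
        crossE (B j) (B (j+1)) (A i) + crossE (B j) (B (j+1)) (A (i+1))
          = sIn (A i) (A (i+1)) (B j) + sIn (A i) (A (i+1)) (B (j+1)) := by
      intro j hj
      have hj' := Finset.mem_range.mp hj
      exact edge_key (hB j hj') (hA i hi')
        ((hdisj i (by omega) j (by omega)).symm)
        ((hdisj (i+1) (by omega) j (by omega)).symm)
        ((hdisj i (by omega) (j+1) (by omega)).symm)
        ((hdisj (i+1) (by omega) (j+1) (by omega)).symm)
    rw [Finset.sum_congr rfl hcong]
    exact telescope_zmod2 (fun j => sIn (A i) (A (i+1)) (B j)) LB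
  rw [Finset.sum_congr rfl step2, Finset.sum_add_distrib]
  rfl

/-- appending two chains -/
def chainApp (L1 : ℕ) (A1 A2 : ℕ → ℤ × ℤ) : ℕ → ℤ × ℤ :=
  fun i => if i ≤ L1 then A1 i else A2 (i - L1)

lemma chainApp_le (L1 : ℕ) (A1 A2 : ℕ → ℤ × ℤ) {i : ℕ} (h : i ≤ L1) :
    chainApp L1 A1 A2 i = A1 i := if_pos h

lemma chainApp_ge (L1 : ℕ) (A1 A2 : ℕ → ℤ × ℤ) (hint : A2 0 = A1 L1) {t : ℕ} :
    chainApp L1 A1 A2 (L1 + t) = A2 t := by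
  unfold chainApp
  rcases Nat.eq_zero_or_pos t with rfl | ht
  · simp [hint]
  · rw [if_neg (by omega), show L1 + t - L1 = t from by omega]

lemma chainApp_shape (L1 L2 : ℕ) (A1 A2 : ℕ → ℤ × ℤ) (hint : A2 0 = A1 L1)
    (h1 : ∀ i < L1, EdgeShape (A1 i) (A1 (i+1)))
    (h2 : ∀ i < L2, EdgeShape (A2 i) (A2 (i+1))) :
    ∀ i < L1 + L2, EdgeShape (chainApp L1 A1 A2 i) (chainApp L1 A1 A2 (i+1)) := by
  intro i hi
  by_cases hle : i + 1 ≤ L1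
  · rw [chainApp_le _ _ _ (by omega), chainApp_le _ _ _ hle]
    exact h1 i (by omega)
  · have h1le : L1 ≤ i := by omega
    obtain ⟨t, rfl⟩ := Nat.exists_eq_add_of_le h1le
    rw [chainApp_ge _ _ _ hint, show L1 + t + 1 = L1 + (t+1) from by omega,
      chainApp_ge _ _ _ hint]
    exact h2 t (by omega)

lemma chainApp_mem (L1 L2 : ℕ) (A1 A2 : ℕ → ℤ × ℤ) (hint : A2 0 = A1 L1) {i : ℕ}
    (hi : i ≤ L1 + L2) :
    (∃ j ≤ L1, chainApp L1 A1 A2 i = A1 j) ∨ (∃ t ≤ L2, chainApp L1 A1 A2 i = A2 t) := by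
  by_cases hle : i ≤ L1
  · exact Or.inl ⟨i, hle, chainApp_le _ _ _ hle⟩
  · have h1le : L1 ≤ i := by omega
    obtain ⟨t, rfl⟩ := Nat.exists_eq_add_of_le h1le
    exact Or.inr ⟨t, by omega, chainApp_ge _ _ _ hint⟩

lemma Xcr_app (L1 L2 : ℕ) (A1 A2 : ℕ → ℤ × ℤ) (hint : A2 0 = A1 L1) (p : ℤ × ℤ) :
    Xcr (L1 + L2) (chainApp L1 A1 A2) p = Xcr L1 A1 p + Xcr L2 A2 p := by
  unfold Xcr
  rw [sum_range_add']
  congr 1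
  · refine Finset.sum_congr rfl (fun j hj => ?_)
    have := Finset.mem_range.mp hj
    rw [chainApp_le _ _ _ (by omega), chainApp_le _ _ _ (by omega)]
  · refine Finset.sum_congr rfl (fun t ht => ?_)
    rw [chainApp_ge _ _ _ hint, show L1 + t + 1 = L1 + (t+1) from by omega,
      chainApp_ge _ _ _ hint]

lemma Ucr_app (L1 L2 : ℕ) (A1 A2 : ℕ → ℤ × ℤ) (hint : A2 0 = A1 L1) (p : ℤ × ℤ) :
    Ucr (L1 + L2) (chainApp L1 A1 A2) p = Ucr L1 A1 p + Ucr L2 A2 p := by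
  unfold Ucr
  rw [sum_range_add']
  congr 1
  · refine Finset.sum_congr rfl (fun j hj => ?_)
    have := Finset.mem_range.mp hj
    rw [chainApp_le _ _ _ (by omega), chainApp_le _ _ _ (by omega)]
  · refine Finset.sum_congr rfl (fun t ht => ?_)
    rw [chainApp_ge _ _ _ hint, show L1 + t + 1 = L1 + (t+1) from by omega,
      chainApp_ge _ _ _ hint]

lemma Xcr_far (LB : ℕ) (B : ℕ → ℤ × ℤ) (p : ℤ × ℤ)
    (h : ∀ j ≤ LB, (B j).1 < p.1) : Xcr LB B p = 0 := by
  unfold Xcr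
  refine Finset.sum_eq_zero (fun j hj => ?_)
  have hj' := Finset.mem_range.mp hj
  have h1 := h j (by omega)
  have h2 := h (j+1) (by omega)
  unfold crossE
  rw [if_neg (by omega), if_neg (by omega), add_zero]

lemma Ucr_far (LA : ℕ) (A : ℕ → ℤ × ℤ) (z : ℤ × ℤ)
    (h : ∀ i ≤ LA, (A i).1 ≠ z.1) : Ucr LA A z = 0 := by
  unfold Ucr
  refine Finset.sum_eq_zero (fun i hi => ?_)
  have hi' := Finset.mem_range.mp hi
  have h1 := h i (by omega)
  have h2 := h (i+1) (by omega)
  unfold sIn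
  rw [if_neg (by omega)]
/- Part 6: geometric evaluation lemmas -/
lemma prec_coords {p q : ℤ × ℤ} (h : prec_eq p q) :
    (p.1 = q.1 ∧ p.2 = q.2) ∨ (p.1 < q.1 ∧ p.2 < q.2) := by
  rcases h with h | h
  · exact Or.inl ⟨by rw [h], by rw [h]⟩
  · exact Or.inr h

section geom
variable {n m : ℕ} {π π' : ℕ → ℤ × ℤ}

/-- the lower bounding-path constraint of `inSlice`, in coordinates, at the
correct index. -/
lemma slice_lo {p : ℤ × ℤ} (hg : inGrid n m p) (hs : inSlice m π π' p) {t : ℕ}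
    (ht : (t : ℤ) = p.1 - p.2 + m) :
    ((π t).1 = p.1 ∧ (π t).2 = p.2) ∨ ((π t).1 < p.1 ∧ (π t).2 < p.2) := by
  have : (p.1 - p.2 + (m:ℤ)).toNat = t := by omega
  have h := hs.1
  rw [this] at h
  exact prec_coords h

lemma slice_hi {p : ℤ × ℤ} (hg : inGrid n m p) (hs : inSlice m π π' p) {t : ℕ}
    (ht : (t : ℤ) = p.1 - p.2 + m) :
    (p.1 = (π' t).1 ∧ p.2 = (π' t).2) ∨ (p.1 < (π' t).1 ∧ p.2 < (π' t).2) := by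
  have : (p.1 - p.2 + (m:ℤ)).toNat = t := by omega
  have h := hs.2
  rw [this] at h
  exact prec_coords h

/-- no alignment-graph edge inside the slice reaches, from the left, a point
strictly below `π a` on its column. -/
lemma aux_pi_left (hπ : IsCutPath n m π) {a : ℕ} (ha : a ≤ n + m) {u v : ℤ × ℤ}
    (hu : inGrid n m u ∧ inSlice m π π' u) (hv : inGrid n m v ∧ inSlice m π π' v)
    (hsh : EdgeShape u v) :
    ¬ (u.1 + 1 = (π a).1 ∧ v.1 = (π a).1 ∧ v.2 < (π a).2) := by
  rintro ⟨c1, c2, c3⟩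
  have hy : u.2 = v.2 ∨ v.2 = u.2 + 1 := by
    unfold EdgeShape at hsh; omega
  obtain ⟨hug1, hug2, hug3, hug4⟩ := hu.1
  have hea := hπ.2.1 a ha
  set t := (u.1 - u.2 + m).toNat with hts
  have htval : (t : ℤ) = u.1 - u.2 + m := Int.toNat_of_nonneg (by omega)
  have hlo := slice_lo hu.1 hu.2 htval
  have hta : a ≤ t := by omega
  have htN : t ≤ n + m := by omega
  have hmono := cutPath_mono hπ hta htN
  omega

lemma crossE_pi_zero (hπ : IsCutPath n m π) {a : ℕ} (ha : a ≤ n + m) {u v : ℤ × ℤ}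
    (hu : inGrid n m u ∧ inSlice m π π' u) (hv : inGrid n m v ∧ inSlice m π π' v)
    (hsh : EdgeShape u v) : crossE u v (π a) = 0 := by
  have hsh' : EdgeShape v u := by unfold EdgeShape at hsh ⊢; tauto
  unfold crossE
  rw [if_neg (aux_pi_left hπ ha hu hv hsh), if_neg (aux_pi_left hπ ha hv hu hsh'),
    add_zero]

/-- no alignment-graph edge inside the slice passes, rightwards, strictly above
`π' b` on its column. -/
lemma aux_pi'_up (hπ' : IsCutPath n m π') {b : ℕ} (hb : b ≤ n + m) {u v : ℤ × ℤ}
    (hu : inGrid n m u ∧ inSlice m π π' u) (hv : inGrid n m v ∧ inSlice m π π' v)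
    (hsh : EdgeShape u v) :
    ¬ (u.1 + 1 = v.1 ∧ (π' b).1 = u.1 ∧ (π' b).2 < u.2) := by
  rintro ⟨c1, c2, c3⟩
  have hy : v.2 = u.2 ∨ v.2 = u.2 + 1 := by
    unfold EdgeShape at hsh; omega
  obtain ⟨hug1, hug2, hug3, hug4⟩ := hu.1
  obtain ⟨hvg1, hvg2, hvg3, hvg4⟩ := hv.1
  have heb := hπ'.2.1 b hb
  set t := (u.1 - u.2 + m).toNat with hts
  have htval : (t : ℤ) = u.1 - u.2 + m := Int.toNat_of_nonneg (by omega)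
  have hhi := slice_hi hu.1 hu.2 htval
  have htb : t ≤ b := by omega
  have hmono := cutPath_mono hπ' htb hb
  set s := (v.1 - v.2 + m).toNat with hss
  have hsval : (s : ℤ) = v.1 - v.2 + m := Int.toNat_of_nonneg (by omega)
  have hhi' := slice_hi hv.1 hv.2 hsval
  have hsb : s ≤ b := by omega
  have hmono' := cutPath_mono hπ' hsb hb
  omega

lemma sIn_pi'_zero (hπ' : IsCutPath n m π') {b : ℕ} (hb : b ≤ n + m) {u v : ℤ × ℤ}
    (hu : inGrid n m u ∧ inSlice m π π' u) (hv : inGrid n m v ∧ inSlice m π π' v)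
    (hsh : EdgeShape u v) : sIn u v (π' b) = 0 := by
  have hsh' : EdgeShape v u := by unfold EdgeShape at hsh ⊢; tauto
  have A1 := aux_pi'_up hπ' hb hu hv hsh
  have A2 := aux_pi'_up hπ' hb hv hu hsh'
  unfold sIn
  rw [if_neg]
  rintro (⟨h1, h2, h3⟩ | ⟨h1, h2, h3⟩)
  · exact A1 ⟨h1, h2, h3⟩
  · exact A2 ⟨h1, h2, h3⟩

lemma q_not_slice (hπ' : IsCutPath n m π') {c : ℕ} (hc : c ≤ n + m) {k : ℤ}
    (hk : 1 ≤ k) : ¬ inSlice m π π' ((π' c).1 + k, (π' c).2 + k) := by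
  intro hs
  have he := hπ'.2.1 c hc
  have hcoord : ((c : ℤ)) = ((π' c).1 + k) - ((π' c).2 + k) + m := by omega
  have := prec_coords (by
    have h2 := hs.2
    rw [show ((((π' c).1 + k, (π' c).2 + k) : ℤ × ℤ).1 - (((π' c).1 + k, (π' c).2 + k) : ℤ × ℤ).2 + (m:ℤ)).toNat = c from by simp; omega] at h2
    exact h2)
  simp at this
  omega

lemma q2_not_slice (hπ : IsCutPath n m π) {c : ℕ} (hc : c ≤ n + m) {k : ℤ}
    (hk : 1 ≤ k) : ¬ inSlice m π π' ((π c).1 - k, (π c).2 - k) := by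
  intro hs
  have he := hπ.2.1 c hc
  have := prec_coords (by
    have h2 := hs.1
    rw [show ((((π c).1 - k, (π c).2 - k) : ℤ × ℤ).1 - (((π c).1 - k, (π c).2 - k) : ℤ × ℤ).2 + (m:ℤ)).toNat = c from by simp; omega] at h2
    exact h2)
  simp at this
  omega

end geom
/- Part 7: the crossing argument and the Monge property -/
section monge
variable {n m : ℕ} {π π' : ℕ → ℤ × ℤ} {S : Set (ℤ × ℤ)} {D : ℕ → ℕ → ℕ}
variable (hπ : IsCutPath n m π) (hπ' : IsCutPath n m π')
  (hord : ∀ d ≤ n + m, prec_eq (π d) (π' d))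
  (hD : ∀ a ≤ n + m, ∀ b ≤ n + m,
      IsLeast {c | sagWalkCost n m π π' S (π a) (π' b) c} (D a b))
include hπ hπ' hord hD

omit hπ hπ' hord hD in
lemma crossE_of_step {u v p : ℤ × ℤ} (h : v.1 = u.1 + 1) :
    crossE u v p = if u.1 + 1 = p.1 ∧ v.1 = p.1 ∧ v.2 < p.2 then 1 else 0 := by
  unfold crossE
  have hno : ¬ (v.1 + 1 = p.1 ∧ u.1 = p.1 ∧ u.2 < p.2) := by omega
  rw [if_neg hno, add_zero]

lemma monge {a b : ℕ} (ha : a + 1 ≤ n + m) (hb : b + 1 ≤ n + m) :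
    D a b + D (a+1) (b+1) ≤ D a (b+1) + D (a+1) b := by
  have ha0 : a ≤ n + m := by omega
  have hb0 : b ≤ n + m := by omega
  obtain ⟨L1, f1, w1, h10, h1L, h1m, h1e, h1c⟩ := (hD a ha0 (b+1) hb).1
  obtain ⟨L2, f2, w2, h20, h2L, h2m, h2e, h2c⟩ := (hD (a+1) ha b hb0).1
  by_cases hshare : ∃ i ≤ L1, ∃ j ≤ L2, f1 i = f2 j
  · -- a common vertex: exchange the tails
    obtain ⟨i0, hi0, j0, hj0, hmid⟩ := hshare
    have Wab : sagWalkCost n m π π' S (π a) (π' b)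
        ((∑ k ∈ Finset.range i0, w1 k) + ∑ k ∈ Finset.range (L2 - j0), w2 (j0 + k)) := by
      refine walk_trans (walk_prefix L1 f1 w1 h10 h1L h1m h1e i0 hi0) ?_
      rw [hmid]
      exact walk_suffix L2 f2 w2 h20 h2L h2m h2e j0 hj0
    have Wab1 : sagWalkCost n m π π' S (π (a+1)) (π' (b+1))
        ((∑ k ∈ Finset.range j0, w2 k) + ∑ k ∈ Finset.range (L1 - i0), w1 (i0 + k)) := by
      refine walk_trans (walk_prefix L2 f2 w2 h20 h2L h2m h2e j0 hj0) ?_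
      rw [← hmid]
      exact walk_suffix L1 f1 w1 h10 h1L h1m h1e i0 hi0
    have e1 := (hD a ha0 b hb0).2 Wab
    have e2 := (hD (a+1) ha (b+1) hb).2 Wab1
    have s1 : (∑ k ∈ Finset.range i0, w1 k) + ∑ k ∈ Finset.range (L1 - i0), w1 (i0 + k)
        = D a (b+1) := by
      rw [← sum_range_add', show i0 + (L1 - i0) = L1 from by omega, ← h1c]
    have s2 : (∑ k ∈ Finset.range j0, w2 k) + ∑ k ∈ Finset.range (L2 - j0), w2 (j0 + k)
        = D (a+1) b := by
      rw [← sum_range_add', show j0 + (L2 - j0) = L2 from by omega, ← h2c]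
    omega
  · -- no common vertex: contradiction with the crossing parity identity
    exfalso
    push_neg at hshare
    -- the two escape rays
    set X := (π (a+1)).1 with hX
    set K1 : ℕ := n + 2 with hK1
    set K2 : ℕ := X.toNat + 2 with hK2
    have hXg := hπ.1 (a+1) ha
    obtain ⟨hXg1, hXg2, hXg3, hXg4⟩ := hXg
    have hK2val : (K2 : ℤ) = X + 2 := by
      rw [hK2]
      push_cast
      omega
    set Q : ℕ → ℤ × ℤ := fun k => ((π' (b+1)).1 + k, (π' (b+1)).2 + k) with hQ
    set Q2 : ℕ → ℤ × ℤ := fun j => ((π (a+1)).1 - K2 + j, (π (a+1)).2 - K2 + j) with hQ2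
    have hQ0 : Q 0 = f1 L1 := by rw [h1L]; simp [hQ]
    have hQ2K : f2 0 = Q2 K2 := by rw [h20]; simp [hQ2]
    set A := chainApp L1 f1 Q with hA
    set B := chainApp K2 Q2 f2 with hB
    set LA := L1 + K1 with hLA
    set LB := K2 + L2 with hLB
    -- grid facts
    have hb'g := hπ'.1 (b+1) hb
    obtain ⟨hb'1, hb'2, hb'3, hb'4⟩ := hb'g
    -- edge shapes
    have hAsh : ∀ i < LA, EdgeShape (A i) (A (i+1)) := by
      refine chainApp_shape L1 K1 f1 Q hQ0 (fun i hi => agEdge_shape (h1e i hi)) ?_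
      intro k hk
      refine Or.inr (Or.inr (Or.inr (Or.inr (Or.inl ⟨?_, ?_⟩)))) <;> simp [hQ] <;> push_cast <;> ring
    have hBsh : ∀ j < LB, EdgeShape (B j) (B (j+1)) := by
      refine chainApp_shape K2 L2 Q2 f2 hQ2K ?_ (fun j hj => agEdge_shape (h2e j hj))
      intro k hk
      refine Or.inr (Or.inr (Or.inr (Or.inr (Or.inl ⟨?_, ?_⟩)))) <;> simp [hQ2] <;> push_cast <;> ring
    -- disjointness
    have hf1Q2 : ∀ i ≤ L1, ∀ t ≤ K2, f1 i ≠ Q2 t := by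
      intro i hi t ht hne
      rcases Nat.lt_or_ge t K2 with htl | hte
      · have hns := q2_not_slice (π' := π') hπ ha (show 1 ≤ (K2 : ℤ) - t from by omega)
        have heq2 : Q2 t = ((π (a+1)).1 - ((K2 :ℤ) - t), (π (a+1)).2 - ((K2:ℤ) - t)) := by
          simp only [hQ2, Prod.mk.injEq]
          constructor <;> ring
        have hmem := (h1m i hi).2
        rw [hne, heq2] at hmem
        exact hns hmem
      · have : t = K2 := by omega
        subst this
        exact hshare i hi 0 (by omega) (hne.trans hQ2K.symm)
    have hQf2 : ∀ k ≤ K1, ∀ j ≤ L2, Q k ≠ f2 j := by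
      intro k hk j hj hne
      rcases Nat.eq_zero_or_pos k with rfl | hkpos
      · exact hshare L1 le_rfl j hj (hQ0 ▸ hne)
      · have hns := q_not_slice (π := π) hπ' hb (show 1 ≤ (k:ℤ) from by omega)
        have hmem := (h2m j hj).2
        rw [← hne] at hmem
        simp only [hQ] at hmem
        exact hns hmem
    have hdisj : ∀ i ≤ LA, ∀ j ≤ LB, A i ≠ B j := by
      intro i hi j hj
      rw [hA, hB]
      have hi' : i ≤ L1 + K1 := by omega
      have hj' : j ≤ K2 + L2 := by omega
      rcases chainApp_mem L1 K1 f1 Q hQ0 hi' with ⟨i', hi', hAi⟩ | ⟨k, hk, hAi⟩ <;>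
        rcases chainApp_mem K2 L2 Q2 f2 hQ2K hj' with ⟨t, ht, hBj⟩ | ⟨j', hj', hBj⟩ <;>
        rw [hAi, hBj]
      · exact hf1Q2 i' hi' t ht
      · intro hne
        exact hshare i' hi' j' hj' hne
      · -- Q k vs Q2 t
        rcases Nat.eq_zero_or_pos k with rfl | hkpos
        · rw [hQ0]
          exact hf1Q2 L1 le_rfl t ht
        rcases Nat.lt_or_ge t K2 with htl | hte
        · intro hne
          have c1 := congrArg Prod.fst hne
          have c2 := congrArg Prod.snd hne
          simp only [hQ, hQ2] at c1 c2
          have d1 := hπ.2.1 (a+1) ha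
          have d2 := hπ'.2.1 (b+1) hb
          have hab : a = b := by omega
          subst hab
          have := prec_coords (hord (a+1) ha)
          omega
        · have : t = K2 := by omega
          subst this
          rw [← hQ2K]
          exact hQf2 k hk 0 (by omega)
      · exact hQf2 k hk j' hj'
    -- the reciprocity identity
    have hrec := recip LA LB A B hAsh hBsh hdisj
    -- endpoints
    have hA0 : A 0 = π a := by rw [hA, chainApp_le _ _ _ (Nat.zero_le _), h10]
    have hALA : A LA = Q K1 := by rw [hA, hLA, chainApp_ge _ _ _ hQ0]
    have hB0 : B 0 = Q2 0 := by rw [hB, chainApp_le _ _ _ (Nat.zero_le _)]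
    have hBLB : B LB = π' b := by rw [hB, hLB, chainApp_ge _ _ _ hQ2K, h2L]
    rw [hA0, hALA, hB0, hBLB] at hrec
    -- evaluate the four parities
    have hXsplit : ∀ p, Xcr LB B p = Xcr K2 Q2 p + Xcr L2 f2 p := by
      intro p
      rw [hB, hLB]
      exact Xcr_app K2 L2 Q2 f2 hQ2K p
    have hUsplit : ∀ z, Ucr LA A z = Ucr L1 f1 z + Ucr K1 Q z := by
      intro z
      rw [hA, hLA]
      exact Ucr_app L1 K1 f1 Q hQ0 z
    -- (1) Xcr at π a : W2-part vanishes
    have e_f2_pia : Xcr L2 f2 (π a) = 0 := by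
      refine Finset.sum_eq_zero (fun j hj => ?_)
      have hj' := Finset.mem_range.mp hj
      exact crossE_pi_zero hπ ha0 (h2m j (by omega)) (h2m (j+1) (by omega))
        (agEdge_shape (h2e j hj'))
    -- (2) Xcr of the SW ray at π a equals 1
    have e_q2_pia : Xcr K2 Q2 (π a) = 1 := by
      have hadj := cutPath_adj hπ (show a + 1 ≤ n + m from ha)
      have hea := hπ.2.1 a ha0
      have hea1 := hπ.2.1 (a+1) ha
      set j0 : ℕ := if (π (a+1)).1 = (π a).1 + 1 then K2 - 2 else K2 - 1 with hj0
      have hsummand : ∀ j ∈ Finset.range K2,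
          crossE (Q2 j) (Q2 (j+1)) (π a) = if j = j0 then 1 else 0 := by
        intro j hj
        have hjK := Finset.mem_range.mp hj
        rw [crossE_of_step (by simp only [hQ2]; push_cast; omega)]
        by_cases hcase : (π (a+1)).1 = (π a).1 + 1
        · rw [hj0, if_pos hcase]
          by_cases hjj : j = K2 - 2
          · rw [if_pos hjj, if_pos]
            subst hjj
            simp only [hQ2]
            push_cast
            omega
          · rw [if_neg hjj, if_neg]
            simp only [hQ2]
            push_cast
            omega
        · rw [hj0, if_neg hcase]
          by_cases hjj : j = K2 - 1
          · rw [if_pos hjj, if_pos]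
            subst hjj
            simp only [hQ2]
            push_cast
            omega
          · rw [if_neg hjj, if_neg]
            simp only [hQ2]
            push_cast
            omega
      unfold Xcr
      rw [Finset.sum_congr rfl hsummand, Finset.sum_ite_eq' (Finset.range K2) j0 (fun _ => (1 : ZMod 2))]
      rw [if_pos]
      refine Finset.mem_range.mpr ?_
      rw [hj0]
      split_ifs <;> omega
    -- (3) Xcr at the far point vanishes
    have e_far : Xcr K2 Q2 (Q K1) = 0 ∧ Xcr L2 f2 (Q K1) = 0 := by
      constructor
      · refine Xcr_far _ _ _ (fun j hj => ?_)
        simp only [hQ2, hQ]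
        push_cast
        omega
      · refine Xcr_far _ _ _ (fun j hj => ?_)
        have := (h2m j hj).1
        obtain ⟨g1, g2, g3, g4⟩ := this
        simp only [hQ]
        push_cast
        omega
    -- (4) Ucr at the far SW point vanishes
    have e_far2 : Ucr L1 f1 (Q2 0) = 0 ∧ Ucr K1 Q (Q2 0) = 0 := by
      constructor
      · refine Ucr_far _ _ _ (fun i hi => ?_)
        have := (h1m i hi).1
        obtain ⟨g1, g2, g3, g4⟩ := this
        simp only [hQ2]
        push_cast
        omega
      · refine Ucr_far _ _ _ (fun k hk => ?_)
        simp only [hQ, hQ2]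
        push_cast
        omega
    -- (5) Ucr at π' b vanishes
    have e_pib : Ucr L1 f1 (π' b) = 0 ∧ Ucr K1 Q (π' b) = 0 := by
      constructor
      · refine Finset.sum_eq_zero (fun i hi => ?_)
        have hi' := Finset.mem_range.mp hi
        exact sIn_pi'_zero hπ' hb0 (h1m i (by omega)) (h1m (i+1) (by omega))
          (agEdge_shape (h1e i hi'))
      · refine Finset.sum_eq_zero (fun k hk => ?_)
        unfold sIn
        rw [if_neg]
        have d1 := hπ'.2.1 b hb0
        have d2 := hπ'.2.1 (b+1) hb
        simp only [hQ]
        push_cast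
        omega
    rw [hXsplit, hXsplit, hUsplit, hUsplit, e_f2_pia, e_q2_pia, e_far.1, e_far.2,
      e_far2.1, e_far2.2, e_pib.1, e_pib.2] at hrec
    simp at hrec
end monge
/- Part 8: final assembly -/
/-- the density matrix `P_G = M_G^□` of
`M_G[a,b] = (dist_G(π_a, π'_b) − a + b)/2` is an `(n+m)×(n+m)` permutation
matrix: every entry is `0` or `1` and each row and column has exactly one `1`. -/
theorem stmt16 (n m : ℕ) (π π' : ℕ → ℤ × ℤ) (S : Set (ℤ × ℤ))
    (hπ : IsCutPath n m π) (hπ' : IsCutPath n m π')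
    (hord : ∀ d ≤ n + m, prec_eq (π d) (π' d))
    (hS : ∀ p ∈ S, 0 ≤ p.1 ∧ p.1 < (n : ℤ) ∧ 0 ≤ p.2 ∧ p.2 < (m : ℤ))
    (D : ℕ → ℕ → ℕ)
    (hD : ∀ a ≤ n + m, ∀ b ≤ n + m,
      IsLeast {c | sagWalkCost n m π π' S (π a) (π' b) c} (D a b))
    (M : ℕ → ℕ → ℤ)
    (hM : ∀ a ≤ n + m, ∀ b ≤ n + m, M a b = ((D a b : ℤ) - (a : ℤ) + (b : ℤ)) / 2)
    (P : ℕ → ℕ → ℤ)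
    (hP : ∀ a b, a < n + m → b < n + m →
      P a b = M (a + 1) b + M a (b + 1) - M a b - M (a + 1) (b + 1)) :
    (∀ a < n + m, ∀ b < n + m, P a b = 0 ∨ P a b = 1) ∧
    (∀ a < n + m, ∃! b, b < n + m ∧ P a b = 1) ∧
    (∀ b < n + m, ∃! a, a < n + m ∧ P a b = 1) := by
  set N := n + m with hN
  have key : ∀ a ≤ N, ∀ b ≤ N, 2 * M a b = (D a b : ℤ) - a + b := by
    intro a ha b hb
    have hpar := D_parity hπ hπ' hord hD ha hb
    rw [hM a ha b hb]
    exact Int.mul_ediv_cancel' hpar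
  have hMa0 : ∀ a ≤ N, M a 0 = 0 := by
    intro a ha
    have h1 := key a ha 0 (by omega)
    have h2 := D_a0 hπ hπ' hord hD ha
    omega
  have hM0b : ∀ b ≤ N, M 0 b = b := by
    intro b hb
    have h1 := key 0 (by omega) b hb
    have h2 := D_0b hπ hπ' hord hD hb
    omega
  have hMaN : ∀ a ≤ N, M a N = N - a := by
    intro a ha
    have h1 := key a ha N le_rfl
    have h2 := D_aN hπ hπ' hord hD ha
    rw [← hN] at h2
    omega
  have hMNb : ∀ b ≤ N, M N b = 0 := by
    intro b hb
    have h1 := key N le_rfl b hb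
    have h2 := D_Nb hπ hπ' hord hD hb
    rw [← hN] at h2
    omega
  have hnonneg : ∀ a < N, ∀ b < N, 0 ≤ P a b := by
    intro a ha b hb
    have hmo := monge hπ hπ' hord hD (show a + 1 ≤ N from ha) (show b + 1 ≤ N from hb)
    have k1 := key a (by omega) b (by omega)
    have k2 := key (a+1) (by omega) b (by omega)
    have k3 := key a (by omega) (b+1) (by omega)
    have k4 := key (a+1) (by omega) (b+1) (by omega)
    have hp := hP a b ha hb
    omega
  have hrow : ∀ a < N, ∑ b ∈ Finset.range N, P a b = 1 := by
    intro a ha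
    have : ∀ b ∈ Finset.range N, P a b
        = (fun b => M a b - M (a+1) b) (b+1) - (fun b => M a b - M (a+1) b) b := by
      intro b hb
      have := hP a b ha (Finset.mem_range.mp hb)
      simp only
      omega
    rw [Finset.sum_congr rfl this, Finset.sum_range_sub (fun b => M a b - M (a+1) b) N]
    have e1 := hMaN a (by omega)
    have e2 := hMaN (a+1) (by omega)
    have e3 := hMa0 a (by omega)
    have e4 := hMa0 (a+1) (by omega)
    show M a N - M (a+1) N - (M a 0 - M (a+1) 0) = 1
    omega
  have hcol : ∀ b < N, ∑ a ∈ Finset.range N, P a b = 1 := by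
    intro b hb
    have : ∀ a ∈ Finset.range N, P a b
        = (fun a => M a (b+1) - M a b) a - (fun a => M a (b+1) - M a b) (a+1) := by
      intro a ha
      have := hP a b (Finset.mem_range.mp ha) hb
      simp only
      omega
    rw [Finset.sum_congr rfl this, Finset.sum_range_sub' (fun a => M a (b+1) - M a b) N]
    have e1 := hM0b b (by omega)
    have e2 := hM0b (b+1) (by omega)
    have e3 := hMNb b (by omega)
    have e4 := hMNb (b+1) (by omega)
    show M 0 (b+1) - M 0 b - (M N (b+1) - M N b) = 1
    omega
  have hle1row : ∀ a < N, ∀ b < N, P a b ≤ 1 := by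
    intro a ha b hb
    have := Finset.single_le_sum (f := fun b => P a b)
      (fun i hi => hnonneg a ha i (Finset.mem_range.mp hi)) (Finset.mem_range.mpr hb)
    rw [hrow a ha] at this
    exact this
  have h01 : ∀ a < N, ∀ b < N, P a b = 0 ∨ P a b = 1 := by
    intro a ha b hb
    have h1 := hnonneg a ha b hb
    have h2 := hle1row a ha b hb
    omega
  refine ⟨h01, ?_, ?_⟩
  · intro a ha
    have hex : ∃ b ∈ Finset.range N, P a b ≠ 0 := by
      by_contra hcon
      push_neg at hcon
      have hr := hrow a ha
      rw [Finset.sum_eq_zero hcon] at hr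
      exact absurd hr (by norm_num)
    obtain ⟨b0, hb0mem, hb0⟩ := hex
    have hb0N := Finset.mem_range.mp hb0mem
    have hb01 : P a b0 = 1 := by
      rcases h01 a ha b0 hb0N with h | h
      · exact absurd h hb0
      · exact h
    refine ⟨b0, ⟨hb0N, hb01⟩, ?_⟩
    rintro y ⟨hyN, hy1⟩
    by_contra hne
    have hsub : ({y, b0} : Finset ℕ) ⊆ Finset.range N := by
      intro x hx
      simp only [Finset.mem_insert, Finset.mem_singleton] at hx
      rcases hx with rfl | rfl <;> exact Finset.mem_range.mpr (by omega)
    have hpair : ∑ x ∈ ({y, b0} : Finset ℕ), P a x = 2 := by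
      rw [Finset.sum_pair hne, hy1, hb01]
      norm_num
    have hmono := Finset.sum_le_sum_of_subset_of_nonneg hsub
      (fun i hi _ => hnonneg a ha i (Finset.mem_range.mp hi))
    rw [hpair, hrow a ha] at hmono
    omega
  · intro b hb
    have hex : ∃ a ∈ Finset.range N, P a b ≠ 0 := by
      by_contra hcon
      push_neg at hcon
      have hr := hcol b hb
      rw [Finset.sum_eq_zero hcon] at hr
      exact absurd hr (by norm_num)
    obtain ⟨a0, ha0mem, ha0⟩ := hex
    have ha0N := Finset.mem_range.mp ha0mem
    have ha01 : P a0 b = 1 := by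
      rcases h01 a0 ha0N b hb with h | h
      · exact absurd h ha0
      · exact h
    refine ⟨a0, ⟨ha0N, ha01⟩, ?_⟩
    rintro y ⟨hyN, hy1⟩
    by_contra hne
    have hsub : ({y, a0} : Finset ℕ) ⊆ Finset.range N := by
      intro x hx
      simp only [Finset.mem_insert, Finset.mem_singleton] at hx
      rcases hx with rfl | rfl <;> exact Finset.mem_range.mpr (by omega)
    have hpair : ∑ x ∈ ({y, a0} : Finset ℕ), P x b = 2 := by
      rw [Finset.sum_pair hne, hy1, ha01]
      norm_num
    have hmono := Finset.sum_le_sum_of_subset_of_nonneg hsub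
      (fun i hi _ => hnonneg i (Finset.mem_range.mp hi) b hb)
    rw [hpair, hcol b hb] at hmono
    omega
end

section
/- Let G = SAG^{n,m}(π, π', S) be a slice alignment graph, let π'' be a cut-path with π ⪯ π'' ⪯ π', and set G_L = SAG^{n,m}(π, π'', S ∩ slice[π..π'')) and G_R = SAG^{n,m}(π'', π', S ∩ slice[π''..π')). Then the distance matrices satisfy D_G = D_{G_L} ⊙ D_{G_R}, where (A ⊙ B)[a,b] = min_c (A[a,c] + B[c,b]). -/
/-- Membership in the half-open slice `slice[π..π') = {p : π_d ⪯ p ≺ π'_d}`. -/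
def inHalfSlice (m : ℕ) (π π' : ℕ → ℤ × ℤ) (p : ℤ × ℤ) : Prop :=
  prec_eq (π (p.1 - p.2 + m).toNat) p ∧
  (p.1 < (π' (p.1 - p.2 + m).toNat).1 ∧ p.2 < (π' (p.1 - p.2 + m).toNat).2)


/-!
A walk of the slice alignment graph from a point weakly left of the cut-path `κ` to a point
weakly right of it must visit `κ`: since consecutive points of a cut-path differ by a unit step,
an edge leaving a point strictly left of `κ` never lands strictly right of it. Splitting a
shortest walk there gives `D ≥ D_L ⊙ D_R`, provided each half can be moved into its own slice
without increasing its cost. This is done by the maps `p ↦ p ⊓ κ_d` and `p ↦ p ⊔ κ_d`, where `d`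
is the diagonal of `p`: they send each edge of the alignment graph to an edge of the same weight
or collapse it, and a diagonal edge survives only when its lower end lies in the half-open slice.
The inequality `D ≤ D_L ⊙ D_R` is concatenation of walks.
-/

inductive CostWalk {α : Type*} (E : α → α → ℕ → Prop) (V : α → Prop) : α → α → ℕ → Prop
  | nil {p : α} (hp : V p) : CostWalk E V p p 0
  | cons {p q r : α} {w c : ℕ} (hp : V p) (he : E p q w) (hw : CostWalk E V q r c) :
      CostWalk E V p r (w + c)

namespace CostWalk

variable {α β : Type*} {E : α → α → ℕ → Prop} {V : α → Prop} {p q r : α} {c : ℕ}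

theorem src (h : CostWalk E V p q c) : V p := by
  cases h with
  | nil hp => exact hp
  | cons hp _ _ => exact hp

theorem mono {E' : α → α → ℕ → Prop} {V' : α → Prop} (h : CostWalk E V p q c)
    (hE : ∀ a b w, E a b w → E' a b w) (hV : ∀ a, V a → V' a) : CostWalk E' V' p q c := by
  induction h with
  | nil hp => exact .nil (hV _ hp)
  | cons hp he _ ih => exact .cons (hV _ hp) (hE _ _ _ he) ih

theorem append {c' : ℕ} (h : CostWalk E V p q c) (h' : CostWalk E V q r c') :
    CostWalk E V p r (c + c') := by
  induction h with
  | nil _ => simpa using h'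
  | cons hp he _ ih =>
    rw [Nat.add_assoc]
    exact .cons hp he (ih h')

theorem exists_map_le {E' : β → β → ℕ → Prop} {V' : β → Prop} (f : α → β)
    (hV : ∀ a, V a → V' (f a))
    (hE : ∀ a b w, V a → V b → E a b w → f a = f b ∨ E' (f a) (f b) w)
    (h : CostWalk E V p q c) : ∃ c' ≤ c, CostWalk E' V' (f p) (f q) c' := by
  induction h with
  | nil hp => exact ⟨0, le_rfl, .nil (hV _ hp)⟩
  | cons hp he hw ih =>
    obtain ⟨c', hc', hw'⟩ := ih
    rcases hE _ _ _ hp hw.src he with heq | he'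
    · exact ⟨c', by omega, heq ▸ hw'⟩
    · exact ⟨_ + c', by omega, .cons (hV _ hp) he' hw'⟩

theorem exists_split {A B : α → Prop}
    (hstep : ∀ a b w, V a → V b → E a b w → A a → ¬ B a → A b)
    (h : CostWalk E V p r c) (hp : A p) (hr : A r → B r) :
    ∃ q c₁ c₂, B q ∧ c₁ + c₂ = c ∧ CostWalk E V p q c₁ ∧ CostWalk E V q r c₂ := by
  induction h with
  | nil hp' => exact ⟨_, 0, 0, hr hp, rfl, .nil hp', .nil hp'⟩
  | @cons p q' r w c hp' he hw ih =>
    by_cases hB : B p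
    · exact ⟨p, 0, w + c, hB, by omega, .nil hp', .cons hp' he hw⟩
    · obtain ⟨q, c₁, c₂, hq, hc, h₁, h₂⟩ := ih (hstep _ _ _ hp' hw.src he hp hB) hr
      exact ⟨q, w + c₁, c₂, hq, by omega, .cons hp' he h₁, h₂⟩

end CostWalk

def sagVertex (n m : ℕ) (π π' : ℕ → ℤ × ℤ) (p : ℤ × ℤ) : Prop :=
  inGrid n m p ∧ inSlice m π π' p

theorem sagWalkCost_iff {n m : ℕ} {π π' : ℕ → ℤ × ℤ} {S : Set (ℤ × ℤ)} {p p' : ℤ × ℤ}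
    {c : ℕ} : sagWalkCost n m π π' S p p' c ↔ CostWalk (agEdge S) (sagVertex n m π π') p p' c := by
  constructor
  · rintro ⟨L, f, w, rfl, rfl, hV, hE, rfl⟩
    induction L generalizing f w with
    | zero => exact .nil (hV 0 le_rfl)
    | succ L ih =>
      rw [Finset.sum_range_succ', add_comm _ (w 0)]
      exact .cons (hV 0 (by omega)) (hE 0 (by omega))
        (ih (fun i => f (i + 1)) (fun i => w (i + 1)) (fun i hi => hV (i + 1) (by omega))
          (fun i hi => hE (i + 1) (by omega)))
  · intro h
    induction h with
    | @nil p hp => exact ⟨0, fun _ => p, fun _ => 0, rfl, rfl, fun _ _ => hp, by simp, by simp⟩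
    | @cons p q r w₀ c hp he _ ih =>
      obtain ⟨L, f, w, rfl, rfl, hV, hE, rfl⟩ := ih
      refine ⟨L + 1, Nat.rec p fun i _ => f i, Nat.rec w₀ fun i _ => w i, rfl, rfl, ?_, ?_, ?_⟩
      · rintro (_ | i) hi
        exacts [hp, hV i (by omega)]
      · rintro (_ | i) hi
        exacts [he, hE i (by omega)]
      · rw [Finset.sum_range_succ', Nat.add_comm]
        rfl

/-- The index `d` of the diagonal `x - y = d - m` through `p`. -/
def diagIdx (m : ℕ) (p : ℤ × ℤ) : ℕ := (p.1 - p.2 + m).toNat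

theorem diagIdx_spec {n m : ℕ} {p : ℤ × ℤ} (hp : inGrid n m p) :
    (diagIdx m p : ℤ) = p.1 - p.2 + m ∧ diagIdx m p ≤ n + m := by
  obtain ⟨_, _, _, _⟩ := hp
  unfold diagIdx
  omega

theorem prec_eq_of_fst_le {p q : ℤ × ℤ} (hd : p.1 - p.2 = q.1 - q.2) (h : p.1 ≤ q.1) :
    prec_eq p q := by
  rcases h.eq_or_lt with h | h
  · exact Or.inl (Prod.ext h (by omega))
  · exact Or.inr ⟨h, by omega⟩

theorem prec_eq.le {p q : ℤ × ℤ} (h : prec_eq p q) : p ≤ q := by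
  rcases h with rfl | ⟨h₁, h₂⟩
  exacts [le_rfl, ⟨h₁.le, h₂.le⟩]

theorem prec_eq.trans {p q r : ℤ × ℤ} (h₁ : prec_eq p q) (h₂ : prec_eq q r) : prec_eq p r := by
  rcases h₁ with rfl | h₁
  · exact h₂
  rcases h₂ with rfl | h₂
  · exact Or.inr h₁
  · exact Or.inr ⟨h₁.1.trans h₂.1, h₁.2.trans h₂.2⟩

theorem sagVertex.mono {n m : ℕ} {π₁ π₂ π₁' π₂' : ℕ → ℤ × ℤ} {p : ℤ × ℤ}
    (h₁ : ∀ d ≤ n + m, prec_eq (π₁' d) (π₁ d)) (h₂ : ∀ d ≤ n + m, prec_eq (π₂ d) (π₂' d))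
    (hp : sagVertex n m π₁ π₂ p) : sagVertex n m π₁' π₂' p :=
  ⟨hp.1, (h₁ _ (diagIdx_spec hp.1).2).trans hp.2.1, hp.2.2.trans (h₂ _ (diagIdx_spec hp.1).2)⟩

namespace IsCutPath

variable {n m : ℕ} {κ : ℕ → ℤ × ℤ}

theorem diagIdx_apply (hκ : IsCutPath n m κ) {d : ℕ} (hd : d ≤ n + m) : diagIdx m (κ d) = d := by
  have := hκ.2.1 d hd
  unfold diagIdx
  omega

theorem sagVertex_apply (hκ : IsCutPath n m κ) {α β : ℕ → ℤ × ℤ} {d : ℕ} (hd : d ≤ n + m)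
    (hα : prec_eq (α d) (κ d)) (hβ : prec_eq (κ d) (β d)) : sagVertex n m α β (κ d) := by
  refine ⟨hκ.1 d hd, ?_⟩
  change prec_eq (α (diagIdx m (κ d))) _ ∧ prec_eq _ (β (diagIdx m (κ d)))
  rw [hκ.diagIdx_apply hd]
  exact ⟨hα, hβ⟩

theorem sub_diagIdx (hκ : IsCutPath n m κ) {p : ℤ × ℤ} (hp : inGrid n m p) :
    (κ (diagIdx m p)).1 - (κ (diagIdx m p)).2 = p.1 - p.2 := by
  have := diagIdx_spec hp
  have := hκ.2.1 _ this.2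
  omega

theorem fst_le_fst_diagIdx (hκ : IsCutPath n m κ) {p q : ℤ × ℤ} (hp : inGrid n m p)
    (hq : inGrid n m q) (hpq : q.1 - q.2 = p.1 - p.2 + 1) :
    (κ (diagIdx m p)).1 ≤ (κ (diagIdx m q)).1 ∧ (κ (diagIdx m q)).1 ≤ (κ (diagIdx m p)).1 + 1 := by
  have hp' := diagIdx_spec hp
  have hq' := diagIdx_spec hq
  have := hκ.2.1 _ hp'.2
  have := hκ.2.1 _ hq'.2
  have := hκ.2.2 _ hp'.2 _ hq'.2
  have := hκ.2.2 _ hq'.2 _ hp'.2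
  omega

end IsCutPath

theorem agEdge_mono {S T : Set (ℤ × ℤ)} {p q : ℤ × ℤ} {w : ℕ} (hST : S ⊆ T)
    (h : agEdge S p q w) : agEdge T p q w := by
  unfold agEdge at *
  rcases h with h | ⟨⟨h₁, h₂, h₃⟩ | ⟨h₁, h₂, h₃⟩, hw⟩
  exacts [Or.inl h, Or.inr ⟨Or.inl ⟨h₁, h₂, hST h₃⟩, hw⟩, Or.inr ⟨Or.inr ⟨h₁, h₂, hST h₃⟩, hw⟩]

theorem agEdge_comm {S : Set (ℤ × ℤ)} {p q : ℤ × ℤ} {w : ℕ} :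
    agEdge S p q w ↔ agEdge S q p w := by
  unfold agEdge
  tauto

theorem agEdge_of_diag_succ (S : Set (ℤ × ℤ)) {p q : ℤ × ℤ} (hpq : q.1 - q.2 = p.1 - p.2 + 1)
    (h₁ : p.1 ≤ q.1) (h₂ : q.1 ≤ p.1 + 1) : agEdge S p q 1 :=
  Or.inl ⟨by omega, rfl⟩

theorem unitStep_cases {p q : ℤ × ℤ}
    (h : (q.1 = p.1 + 1 ∧ q.2 = p.2) ∨ (p.1 = q.1 + 1 ∧ p.2 = q.2) ∨
      (q.1 = p.1 ∧ q.2 = p.2 + 1) ∨ (p.1 = q.1 ∧ p.2 = q.2 + 1)) :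
    (q.1 - q.2 = p.1 - p.2 + 1 ∧ p.1 ≤ q.1 ∧ q.1 ≤ p.1 + 1) ∨
      (p.1 - p.2 = q.1 - q.2 + 1 ∧ q.1 ≤ p.1 ∧ p.1 ≤ q.1 + 1) := by
  omega

theorem IsCutPath.fst_le_of_agEdge {n m : ℕ} {κ : ℕ → ℤ × ℤ} {S : Set (ℤ × ℤ)} {p q : ℤ × ℤ}
    {w : ℕ} (hκ : IsCutPath n m κ) (hp : inGrid n m p) (hq : inGrid n m q) (he : agEdge S p q w)
    (hle : p.1 ≤ (κ (diagIdx m p)).1) (hne : p ≠ κ (diagIdx m p)) :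
    q.1 ≤ (κ (diagIdx m q)).1 := by
  have := diagIdx_spec hp
  have := diagIdx_spec hq
  have := hκ.sub_diagIdx hp
  have := hκ.sub_diagIdx hq
  have : p.1 ≠ (κ (diagIdx m p)).1 := fun h => hne (Prod.ext h (by omega))
  rcases he with ⟨hunit, -⟩ | ⟨_, -⟩
  · rcases unitStep_cases hunit with ⟨hpq, _⟩ | ⟨hpq, _⟩
    · have := hκ.fst_le_fst_diagIdx hp hq hpq
      omega
    · have := hκ.fst_le_fst_diagIdx hq hp hpq
      omega
  · have hd : diagIdx m q = diagIdx m p := by omega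
    rw [hd]
    omega

section Projection

variable {n m : ℕ} {α β κ : ℕ → ℤ × ℤ} {S : Set (ℤ × ℤ)} {p q : ℤ × ℤ} {w : ℕ}

def cutInf (m : ℕ) (κ : ℕ → ℤ × ℤ) (p : ℤ × ℤ) : ℤ × ℤ := p ⊓ κ (diagIdx m p)

def cutSup (m : ℕ) (κ : ℕ → ℤ × ℤ) (p : ℤ × ℤ) : ℤ × ℤ := p ⊔ κ (diagIdx m p)

theorem inf_eq_of_sub_eq {p k : ℤ × ℤ} (h : k.1 - k.2 = p.1 - p.2) :
    (p.1 ≤ k.1 ∧ p ⊓ k = p) ∨ (k.1 ≤ p.1 ∧ p ⊓ k = k) := by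
  rcases le_total p.1 k.1 with hle | hle
  · exact Or.inl ⟨hle, inf_eq_left.2 ⟨hle, by omega⟩⟩
  · exact Or.inr ⟨hle, inf_eq_right.2 ⟨hle, by omega⟩⟩

theorem sup_eq_of_sub_eq {p k : ℤ × ℤ} (h : k.1 - k.2 = p.1 - p.2) :
    (k.1 ≤ p.1 ∧ p ⊔ k = p) ∨ (p.1 ≤ k.1 ∧ p ⊔ k = k) := by
  rcases le_total k.1 p.1 with hle | hle
  · exact Or.inl ⟨hle, sup_eq_left.2 ⟨hle, by omega⟩⟩
  · exact Or.inr ⟨hle, sup_eq_right.2 ⟨hle, by omega⟩⟩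

theorem cutInf_mem (hκ : IsCutPath n m κ) (hακ : ∀ d ≤ n + m, prec_eq (α d) (κ d))
    (hp : sagVertex n m α β p) : sagVertex n m α κ (cutInf m κ p) := by
  have hd := (diagIdx_spec hp.1).2
  rcases inf_eq_of_sub_eq (hκ.sub_diagIdx hp.1) with ⟨hle, h⟩ | ⟨-, h⟩ <;>
    rw [cutInf, h]
  · exact ⟨hp.1, hp.2.1, prec_eq_of_fst_le (hκ.sub_diagIdx hp.1).symm hle⟩
  · exact hκ.sagVertex_apply hd (hακ _ hd) (Or.inl rfl)

theorem cutSup_mem (hκ : IsCutPath n m κ) (hκβ : ∀ d ≤ n + m, prec_eq (κ d) (β d))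
    (hp : sagVertex n m α β p) : sagVertex n m κ β (cutSup m κ p) := by
  have hd := (diagIdx_spec hp.1).2
  rcases sup_eq_of_sub_eq (hκ.sub_diagIdx hp.1) with ⟨hle, h⟩ | ⟨-, h⟩ <;>
    rw [cutSup, h]
  · exact ⟨hp.1, prec_eq_of_fst_le (hκ.sub_diagIdx hp.1) hle, hp.2.2⟩
  · exact hκ.sagVertex_apply hd (Or.inl rfl) (hκβ _ hd)

theorem cutInf_diagEdge (hκ : IsCutPath n m κ) (hp : inGrid n m p)
    (hα : prec_eq (α (diagIdx m p)) p) (h₁ : q.1 = p.1 + 1) (h₂ : q.2 = p.2 + 1) (hS : p ∈ S) :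
    cutInf m κ p = cutInf m κ q ∨
      agEdge (S ∩ {x | inHalfSlice m α κ x}) (cutInf m κ p) (cutInf m κ q) 0 := by
  have hd : diagIdx m q = diagIdx m p := by unfold diagIdx; omega
  have := hκ.sub_diagIdx hp
  rw [cutInf, cutInf, hd]
  by_cases hlt : p.1 < (κ (diagIdx m p)).1
  · have hp' : p ⊓ κ (diagIdx m p) = p := inf_eq_left.2 (Prod.le_def.2 ⟨hlt.le, by omega⟩)
    have hq' : q ⊓ κ (diagIdx m p) = q := inf_eq_left.2 (Prod.le_def.2 ⟨by omega, by omega⟩)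
    have hhalf : inHalfSlice m α κ p := ⟨hα, hlt, (by omega : p.2 < (κ (diagIdx m p)).2)⟩
    rw [hp', hq']
    exact Or.inr (Or.inr ⟨Or.inl ⟨h₁, h₂, hS, hhalf⟩, rfl⟩)
  · left
    rw [inf_eq_right.2 (Prod.le_def.2 ⟨by omega, by omega⟩),
      inf_eq_right.2 (Prod.le_def.2 ⟨by omega, by omega⟩)]

theorem cutSup_diagEdge (hκ : IsCutPath n m κ) (hp : inGrid n m p)
    (hβ : prec_eq q (β (diagIdx m q))) (h₁ : q.1 = p.1 + 1) (h₂ : q.2 = p.2 + 1) (hS : p ∈ S) :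
    cutSup m κ p = cutSup m κ q ∨
      agEdge (S ∩ {x | inHalfSlice m κ β x}) (cutSup m κ p) (cutSup m κ q) 0 := by
  have hd : diagIdx m q = diagIdx m p := by unfold diagIdx; omega
  have := hκ.sub_diagIdx hp
  obtain ⟨hqβ₁, hqβ₂⟩ := hβ.le
  rw [hd] at hqβ₁ hqβ₂
  rw [cutSup, cutSup, hd]
  by_cases hle : (κ (diagIdx m p)).1 ≤ p.1
  · have hp' : p ⊔ κ (diagIdx m p) = p := sup_eq_left.2 (Prod.le_def.2 ⟨hle, by omega⟩)
    have hq' : q ⊔ κ (diagIdx m p) = q := sup_eq_left.2 (Prod.le_def.2 ⟨by omega, by omega⟩)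
    have hhalf : inHalfSlice m κ β p :=
      ⟨(prec_eq_of_fst_le (by omega) hle : prec_eq (κ (diagIdx m p)) p),
        (by omega : p.1 < (β (diagIdx m p)).1), (by omega : p.2 < (β (diagIdx m p)).2)⟩
    rw [hp', hq']
    exact Or.inr (Or.inr ⟨Or.inl ⟨h₁, h₂, hS, hhalf⟩, rfl⟩)
  · left
    rw [sup_eq_right.2 (Prod.le_def.2 ⟨by omega, by omega⟩),
      sup_eq_right.2 (Prod.le_def.2 ⟨by omega, by omega⟩)]

theorem cutInf_unitEdge (hκ : IsCutPath n m κ) (hp : inGrid n m p)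
    (hq : inGrid n m q) (hpq : q.1 - q.2 = p.1 - p.2 + 1) (h₁ : p.1 ≤ q.1) (h₂ : q.1 ≤ p.1 + 1) :
    agEdge S (cutInf m κ p) (cutInf m κ q) 1 := by
  have := hκ.sub_diagIdx hp
  have := hκ.sub_diagIdx hq
  have := hκ.fst_le_fst_diagIdx hp hq hpq
  apply agEdge_of_diag_succ <;> simp only [cutInf, Prod.fst_inf, Prod.snd_inf] <;> omega

theorem cutSup_unitEdge (hκ : IsCutPath n m κ) (hp : inGrid n m p)
    (hq : inGrid n m q) (hpq : q.1 - q.2 = p.1 - p.2 + 1) (h₁ : p.1 ≤ q.1) (h₂ : q.1 ≤ p.1 + 1) :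
    agEdge S (cutSup m κ p) (cutSup m κ q) 1 := by
  have := hκ.sub_diagIdx hp
  have := hκ.sub_diagIdx hq
  have := hκ.fst_le_fst_diagIdx hp hq hpq
  apply agEdge_of_diag_succ <;> simp only [cutSup, Prod.fst_sup, Prod.snd_sup] <;> omega

theorem cutInf_agEdge (hκ : IsCutPath n m κ) (hp : sagVertex n m α β p) (hq : sagVertex n m α β q)
    (he : agEdge S p q w) :
    cutInf m κ p = cutInf m κ q ∨
      agEdge (S ∩ {x | inHalfSlice m α κ x}) (cutInf m κ p) (cutInf m κ q) w := by
  rcases he with ⟨hunit, rfl⟩ | ⟨⟨h₁, h₂, hS⟩ | ⟨h₁, h₂, hS⟩, rfl⟩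
  · right
    rcases unitStep_cases hunit with ⟨hpq, h₁, h₂⟩ | ⟨hpq, h₁, h₂⟩
    · exact cutInf_unitEdge hκ hp.1 hq.1 hpq h₁ h₂
    · exact agEdge_comm.1 (cutInf_unitEdge hκ hq.1 hp.1 hpq h₁ h₂)
  · exact cutInf_diagEdge hκ hp.1 hp.2.1 h₁ h₂ hS
  · exact (cutInf_diagEdge hκ hq.1 hq.2.1 h₁ h₂ hS).imp Eq.symm agEdge_comm.1

theorem cutSup_agEdge (hκ : IsCutPath n m κ) (hp : sagVertex n m α β p) (hq : sagVertex n m α β q)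
    (he : agEdge S p q w) :
    cutSup m κ p = cutSup m κ q ∨
      agEdge (S ∩ {x | inHalfSlice m κ β x}) (cutSup m κ p) (cutSup m κ q) w := by
  rcases he with ⟨hunit, rfl⟩ | ⟨⟨h₁, h₂, hS⟩ | ⟨h₁, h₂, hS⟩, rfl⟩
  · right
    rcases unitStep_cases hunit with ⟨hpq, h₁, h₂⟩ | ⟨hpq, h₁, h₂⟩
    · exact cutSup_unitEdge hκ hp.1 hq.1 hpq h₁ h₂
    · exact agEdge_comm.1 (cutSup_unitEdge hκ hq.1 hp.1 hpq h₁ h₂)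
  · exact cutSup_diagEdge hκ hp.1 hq.2.2 h₁ h₂ hS
  · exact (cutSup_diagEdge hκ hq.1 hp.2.2 h₁ h₂ hS).imp Eq.symm agEdge_comm.1

end Projection

section Split

variable {n m : ℕ} {α β κ : ℕ → ℤ × ℤ} {S : Set (ℤ × ℤ)} {p r : ℤ × ℤ} {c : ℕ}

theorem sagWalkCost.append_of_cut {S₁ S₂ : Set (ℤ × ℤ)} {q : ℤ × ℤ} {c₁ c₂ : ℕ}
    (hακ : ∀ d ≤ n + m, prec_eq (α d) (κ d)) (hκβ : ∀ d ≤ n + m, prec_eq (κ d) (β d))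
    (hS₁ : S₁ ⊆ S) (hS₂ : S₂ ⊆ S) (h₁ : sagWalkCost n m α κ S₁ p q c₁)
    (h₂ : sagWalkCost n m κ β S₂ q r c₂) : sagWalkCost n m α β S p r (c₁ + c₂) := by
  rw [sagWalkCost_iff] at *
  have h₁' := h₁.mono (fun _ _ _ => agEdge_mono hS₁) fun _ =>
    sagVertex.mono (fun _ _ => Or.inl rfl) hκβ
  have h₂' := h₂.mono (fun _ _ _ => agEdge_mono hS₂) fun _ =>
    sagVertex.mono hακ fun _ _ => Or.inl rfl
  exact h₁'.append h₂'

theorem sagWalkCost.exists_split_of_cut (hκ : IsCutPath n m κ)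
    (hακ : ∀ d ≤ n + m, prec_eq (α d) (κ d)) (hκβ : ∀ d ≤ n + m, prec_eq (κ d) (β d))
    (h : sagWalkCost n m α β S p r c) (hp : prec_eq p (κ (diagIdx m p)))
    (hr : prec_eq (κ (diagIdx m r)) r) :
    ∃ e ≤ n + m, ∃ c₁ c₂, c₁ + c₂ ≤ c ∧
      sagWalkCost n m α κ (S ∩ {x | inHalfSlice m α κ x}) p (κ e) c₁ ∧
      sagWalkCost n m κ β (S ∩ {x | inHalfSlice m κ β x}) (κ e) r c₂ := by
  rw [sagWalkCost_iff] at h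
  obtain ⟨q, c₁, c₂, hq, hc, h₁, h₂⟩ :=
    h.exists_split (A := fun x => x.1 ≤ (κ (diagIdx m x)).1) (B := fun x => x = κ (diagIdx m x))
      (fun _ _ _ ha hb he => hκ.fst_le_of_agEdge ha.1 hb.1 he) hp.le.1 fun hr₁ => by
        rcases hr with hr | hr
        exacts [hr.symm, absurd hr₁ hr.1.not_ge]
  obtain ⟨c₁', hc₁, h₁'⟩ :=
    h₁.exists_map_le (cutInf m κ) (fun _ => cutInf_mem hκ hακ) fun _ _ _ => cutInf_agEdge hκ
  obtain ⟨c₂', hc₂, h₂'⟩ :=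
    h₂.exists_map_le (cutSup m κ) (fun _ => cutSup_mem hκ hκβ) fun _ _ _ => cutSup_agEdge hκ
  rw [cutInf, cutInf, inf_eq_left.2 hp.le, inf_eq_left.2 hq.le, hq] at h₁'
  rw [cutSup, cutSup, sup_eq_left.2 hr.le, sup_eq_left.2 hq.ge, hq] at h₂'
  exact ⟨diagIdx m q, (diagIdx_spec h₂.src.1).2, c₁', c₂', by omega, sagWalkCost_iff.2 h₁',
    sagWalkCost_iff.2 h₂'⟩

end Split

theorem stmt17_general (n m : ℕ) (π π'' π' : ℕ → ℤ × ℤ) (S : Set (ℤ × ℤ))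
    (hπ : IsCutPath n m π) (hπ'' : IsCutPath n m π'') (hπ' : IsCutPath n m π')
    (hord1 : ∀ d ≤ n + m, prec_eq (π d) (π'' d))
    (hord2 : ∀ d ≤ n + m, prec_eq (π'' d) (π' d))
    (D DL DR : ℕ → ℕ → ℕ)
    (hD : ∀ a ≤ n + m, ∀ b ≤ n + m,
      IsLeast {c | sagWalkCost n m π π' S (π a) (π' b) c} (D a b))
    (hDL : ∀ a ≤ n + m, ∀ b ≤ n + m,
      IsLeast {c | sagWalkCost n m π π''
        (S ∩ {p | inHalfSlice m π π'' p}) (π a) (π'' b) c} (DL a b))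
    (hDR : ∀ a ≤ n + m, ∀ b ≤ n + m,
      IsLeast {c | sagWalkCost n m π'' π'
        (S ∩ {p | inHalfSlice m π'' π' p}) (π'' a) (π' b) c} (DR a b)) :
    ∀ a ≤ n + m, ∀ b ≤ n + m,
      IsLeast {v : ℕ | ∃ c ≤ n + m, v = DL a c + DR c b} (D a b) := by
  intro a ha b hb
  have hle : ∀ e ≤ n + m, D a b ≤ DL a e + DR e b := fun e he =>
    (hD a ha b hb).2 <| sagWalkCost.append_of_cut hord1 hord2 Set.inter_subset_left
      Set.inter_subset_left (hDL a ha e he).1 (hDR e he b hb).1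
  have hπa : prec_eq (π a) (π'' (diagIdx m (π a))) := by
    rw [hπ.diagIdx_apply ha]
    exact hord1 a ha
  have hπ'b : prec_eq (π'' (diagIdx m (π' b))) (π' b) := by
    rw [hπ'.diagIdx_apply hb]
    exact hord2 b hb
  obtain ⟨e, he, c₁, c₂, hc, h₁, h₂⟩ :=
    sagWalkCost.exists_split_of_cut hπ'' hord1 hord2 (hD a ha b hb).1 hπa hπ'b
  have := (hDL a ha e he).2 h₁
  have := (hDR e he b hb).2 h₂
  refine ⟨⟨e, he, le_antisymm (hle e he) (by omega)⟩, ?_⟩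
  rintro v ⟨e', he', rfl⟩
  exact hle e' he'

/-- with `π ⪯ π'' ⪯ π'` and `G_L`, `G_R` the two slice alignment
graphs split along `π''` (with `S` split accordingly),
`D_G[a,b] = min_c (D_{G_L}[a,c] + D_{G_R}[c,b])`, i.e. `D_G = D_{G_L} ⊙ D_{G_R}`. -/
theorem stmt17 (n m : ℕ) (π π'' π' : ℕ → ℤ × ℤ) (S : Set (ℤ × ℤ))
    (hπ : IsCutPath n m π) (hπ'' : IsCutPath n m π'') (hπ' : IsCutPath n m π')
    (hord1 : ∀ d ≤ n + m, prec_eq (π d) (π'' d))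
    (hord2 : ∀ d ≤ n + m, prec_eq (π'' d) (π' d))
    (hS : ∀ p ∈ S, 0 ≤ p.1 ∧ p.1 < (n : ℤ) ∧ 0 ≤ p.2 ∧ p.2 < (m : ℤ))
    (hSin : ∀ p ∈ S, inHalfSlice m π π' p)
    (D DL DR : ℕ → ℕ → ℕ)
    (hD : ∀ a ≤ n + m, ∀ b ≤ n + m,
      IsLeast {c | sagWalkCost n m π π' S (π a) (π' b) c} (D a b))
    (hDL : ∀ a ≤ n + m, ∀ b ≤ n + m,
      IsLeast {c | sagWalkCost n m π π''
        (S ∩ {p | inHalfSlice m π π'' p}) (π a) (π'' b) c} (DL a b))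
    (hDR : ∀ a ≤ n + m, ∀ b ≤ n + m,
      IsLeast {c | sagWalkCost n m π'' π'
        (S ∩ {p | inHalfSlice m π'' π' p}) (π'' a) (π' b) c} (DR a b)) :
    ∀ a ≤ n + m, ∀ b ≤ n + m,
      IsLeast {v : ℕ | ∃ c ≤ n + m, v = DL a c + DR c b} (D a b) :=
  stmt17_general n m π π'' π' S hπ hπ'' hπ' hord1 hord2 D DL DR hD hDL hDR
end

section
/- Consider an m×m table with non-negative real values on its cells, and define the table's score as the maximum total value over monotone lattice paths of 2m−1 cells from the bottom-left corner to the top-right corner (each step moves up or right). For any positive integer Δ, there exists a family of pairwise non-conflicting Δ-multisegments whose total covered value is at least (Δ−1)/Δ times the table's score. -/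
/-- A segment in an `m×m` table: a set of consecutive cells in one row
(`horiz = true`, cells `(c, line)` for `lo ≤ c ≤ hi`) or in one column
(`horiz = false`, cells `(line, r)` for `lo ≤ r ≤ hi`). Cells are pairs
(column, row), with `(0,0)` the bottom-left corner. -/
structure Seg (m : ℕ) where
  horiz : Bool
  line : ℕ
  lo : ℕ
  hi : ℕ
  hlo : lo ≤ hi
  hhi : hi < m
  hline : line < m

/-- The set of cells covered by a segment. -/
def Seg.cells {m : ℕ} (s : Seg m) : Finset (ℕ × ℕ) :=
  if s.horiz then (Finset.Icc s.lo s.hi).image fun c => (c, s.line)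
  else (Finset.Icc s.lo s.hi).image fun r => (s.line, r)

/-- The first (leftmost/bottommost) cell of a segment. -/
def Seg.first {m : ℕ} (s : Seg m) : ℕ × ℕ :=
  if s.horiz then (s.lo, s.line) else (s.line, s.lo)

/-- The last (rightmost/topmost) cell of a segment. -/
def Seg.last {m : ℕ} (s : Seg m) : ℕ × ℕ :=
  if s.horiz then (s.hi, s.line) else (s.line, s.hi)

/-- `A` precedes `B`: every cell of `A` is strictly above and strictly to the
right of every cell of `B`. -/
def segPrecedes {m : ℕ} (A B : Seg m) : Prop :=
  ∀ cA ∈ A.cells, ∀ cB ∈ B.cells, cB.1 < cA.1 ∧ cB.2 < cA.2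

/-- A `Δ`-multisegment: `Δ` segments listed in order. -/
def MultiSeg (Δ m : ℕ) := Fin Δ → Seg m

/-- The chaining condition: the last cell of each segment coincides with the
first cell of the next one. -/
def MultiSeg.chain {Δ m : ℕ} (F : MultiSeg Δ m) : Prop :=
  ∀ i : ℕ, (h : i + 1 < Δ) → (F ⟨i, by omega⟩).last = (F ⟨i + 1, h⟩).first

/-- The cells covered by a multisegment. -/
def MultiSeg.cells {Δ m : ℕ} (F : MultiSeg Δ m) : Finset (ℕ × ℕ) :=
  Finset.univ.biUnion fun i => (F i).cells

/-- Two multisegments are non-conflicting if each segment of one precedes or is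
preceded by each segment of the other. -/
def msNonConf {Δ m : ℕ} (F G : MultiSeg Δ m) : Prop :=
  ∀ i j, segPrecedes (F i) (G j) ∨ segPrecedes (G j) (F i)

/-- The value of a multisegment: the sum of the values of the cells it covers. -/
def msValue {Δ m : ℕ} (v : ℕ → ℕ → ℝ) (F : MultiSeg Δ m) : ℝ :=
  ∑ c ∈ F.cells, v c.1 c.2

/-- A monotone lattice path of `2m−1` cells from the bottom-left corner `(0,0)`
to the top-right corner `(m−1, m−1)`, each step moving up or right. -/
def isPath (m : ℕ) (f : ℕ → ℕ × ℕ) : Prop :=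
  f 0 = (0, 0) ∧ f (2 * m - 2) = (m - 1, m - 1) ∧
  ∀ i < 2 * m - 2, f (i + 1) = ((f i).1 + 1, (f i).2) ∨ f (i + 1) = ((f i).1, (f i).2 + 1)

/-!
Take an optimal path and list its corners (the indices where it turns) in order. For some
residue `r < Δ`, the corners whose rank is `≡ r (mod Δ)` carry at most a `1/Δ` share of the
path's value; delete those cells. Every remaining run of the path contains at most `Δ - 1`
corners, so it is a chain of at most `Δ` straight segments, i.e. a `Δ`-multisegment once
padded with one-cell segments. Across a deleted corner the path moves one step right and one
step up, so the cells of different runs are strictly separated in both coordinates, which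
makes the multisegments pairwise non-conflicting.
-/

open Finset

section

variable {m : ℕ} {f : ℕ → ℕ × ℕ}

theorem isPath.step (hf : isPath m f) {i : ℕ} (hi : i < 2 * m - 2) :
    (f (i + 1)).1 = (f i).1 + 1 ∧ (f (i + 1)).2 = (f i).2 ∨
      (f (i + 1)).1 = (f i).1 ∧ (f (i + 1)).2 = (f i).2 + 1 := by
  rcases hf.2.2 i hi with h | h <;> simp [h]

theorem isPath.fst_add_snd (hf : isPath m f) : ∀ i ≤ 2 * m - 2, (f i).1 + (f i).2 = i
  | 0, _ => by simp [hf.1]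
  | i + 1, hi => by
    have := hf.fst_add_snd i (by omega)
    rcases hf.step (i := i) (by omega) with h | h <;> omega

theorem isPath.monotoneOn (hf : isPath m f) : MonotoneOn f (Set.Iic (2 * m - 2)) := by
  intro i _ j hj hij
  rw [Set.mem_Iic] at hj
  induction j, hij using Nat.le_induction with
  | base => rfl
  | succ j _ ih =>
    refine (ih (by omega)).trans ?_
    rw [Prod.le_def]
    rcases hf.step (i := j) (by omega) with h | h <;> omega

theorem isPath.le_of_le (hf : isPath m f) {i j : ℕ} (hij : i ≤ j) (hj : j ≤ 2 * m - 2) :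
    (f i).1 ≤ (f j).1 ∧ (f i).2 ≤ (f j).2 :=
  Prod.le_def.1 (hf.monotoneOn (hij.trans hj) hj hij)

theorem isPath.injOn (hf : isPath m f) : Set.InjOn f (Set.Iic (2 * m - 2)) := by
  intro i hi j hj h
  have hi' := hf.fst_add_snd i hi
  have hj' := hf.fst_add_snd j hj
  rw [h] at hi'
  omega

theorem isPath.coords_lt (hm : 0 < m) (hf : isPath m f) {i : ℕ} (hi : i ≤ 2 * m - 2) :
    (f i).1 < m ∧ (f i).2 < m := by
  have h := hf.le_of_le hi le_rfl
  rw [hf.2.1] at h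
  omega

-- On a path, `f (p - 1)` and `f (p + 1)` differ in both coordinates exactly when it turns at `p`.
def corners (m : ℕ) (f : ℕ → ℕ × ℕ) : Finset ℕ :=
  (Ioo 0 (2 * m - 2)).filter fun p => (f (p - 1)).1 ≠ (f (p + 1)).1 ∧ (f (p - 1)).2 ≠ (f (p + 1)).2

theorem corners_subset_range : corners m f ⊆ range (2 * m - 1) := fun p hp => by
  simp only [corners, mem_filter, mem_Ioo] at hp
  simp only [mem_range]
  omega

theorem isPath.lt_of_lt_corner (hf : isPath m f) {p i j : ℕ} (hp : p ∈ corners m f)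
    (hi : i < p) (hj : p < j) (hjN : j ≤ 2 * m - 2) : (f i).1 < (f j).1 ∧ (f i).2 < (f j).2 := by
  simp only [corners, mem_filter, mem_Ioo] at hp
  have h₁ := hf.le_of_le (show i ≤ p - 1 by omega) (by omega)
  have h₂ := hf.le_of_le (show p - 1 ≤ p + 1 by omega) (by omega)
  have h₃ := hf.le_of_le (show p + 1 ≤ j by omega) hjN
  omega

theorem isPath.collinear_of_no_corner (hf : isPath m f) {u v : ℕ} (huv : u ≤ v)
    (hv : v ≤ 2 * m - 2) (h : Disjoint (corners m f) (Ioo u v)) :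
    (f u).1 = (f v).1 ∨ (f u).2 = (f v).2 := by
  induction v, huv using Nat.le_induction with
  | base => simp
  | succ v huv ih =>
    have ih := ih (by omega) (h.mono_right (Ioo_subset_Ioo_right (by omega)))
    have hstep := hf.step (i := v) (by omega)
    rcases huv.eq_or_lt with rfl | huv
    · omega
    -- `v` is not a corner, so the steps into and out of `v` go the same way.
    have hturn : ¬ ((f (v - 1)).1 ≠ (f (v + 1)).1 ∧ (f (v - 1)).2 ≠ (f (v + 1)).2) := fun hc =>
      disjoint_left.1 h (show v ∈ corners m f by simp [corners]; omega) (by simp; omega)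
    have hprev := hf.step (i := v - 1) (by omega)
    have hmono := hf.le_of_le (show u ≤ v - 1 by omega) (by omega)
    rw [Nat.sub_add_cancel (by omega : 1 ≤ v)] at hprev
    omega

theorem isPath.swap (hf : isPath m f) : isPath m (Prod.swap ∘ f) := by
  refine ⟨by simp [hf.1], by simp [hf.2.1], fun i hi => ?_⟩
  rcases hf.2.2 i hi with h | h <;> simp [h]

theorem isPath.exists_horizontal_seg (hm : 0 < m) (hf : isPath m f) {u v : ℕ} (huv : u ≤ v)
    (hv : v ≤ 2 * m - 2) (h : (f u).2 = (f v).2) :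
    ∃ s : Seg m, s.first = f u ∧ s.last = f v ∧ s.cells = (Icc u v).image f := by
  have hcell : ∀ i, u ≤ i → i ≤ v → (f i).1 = (f u).1 + (i - u) ∧ (f i).2 = (f u).2 := by
    intro i hui hiv
    have := hf.le_of_le hui (hiv.trans hv)
    have := hf.le_of_le hiv hv
    have := hf.fst_add_snd i (hiv.trans hv)
    have := hf.fst_add_snd u (huv.trans hv)
    omega
  have hfv := hcell v huv le_rfl
  refine ⟨⟨true, (f u).2, (f u).1, (f v).1, by omega, (hf.coords_lt hm hv).1,
    (hf.coords_lt hm (huv.trans hv)).2⟩, rfl, by simp [Seg.last, h], ?_⟩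
  ext ⟨x, y⟩
  simp only [Seg.cells, if_true, mem_image, mem_Icc, Prod.ext_iff]
  constructor
  · rintro ⟨c, hc, rfl, rfl⟩
    have := hcell (u + (c - (f u).1)) (by omega) (by omega)
    exact ⟨u + (c - (f u).1), by omega, by omega, this.2⟩
  · rintro ⟨i, hi, rfl, rfl⟩
    have := hcell i hi.1 hi.2
    exact ⟨(f i).1, by omega, rfl, this.2.symm⟩

def Seg.swap (s : Seg m) : Seg m := { s with horiz := !s.horiz }

theorem Seg.first_swap (s : Seg m) : s.swap.first = s.first.swap := by
  cases h : s.horiz <;> simp [Seg.swap, Seg.first, h]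

theorem Seg.last_swap (s : Seg m) : s.swap.last = s.last.swap := by
  cases h : s.horiz <;> simp [Seg.swap, Seg.last, h]

theorem Seg.cells_swap (s : Seg m) : s.swap.cells = s.cells.image Prod.swap := by
  cases h : s.horiz <;> simp [Seg.swap, Seg.cells, h, image_image, Function.comp_def]

theorem isPath.exists_seg (hm : 0 < m) (hf : isPath m f) {u v : ℕ} (huv : u ≤ v)
    (hv : v ≤ 2 * m - 2) (h : (f u).1 = (f v).1 ∨ (f u).2 = (f v).2) :
    ∃ s : Seg m, s.first = f u ∧ s.last = f v ∧ s.cells = (Icc u v).image f := by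
  rcases h with h | h
  · obtain ⟨s, hfirst, hlast, hcells⟩ := hf.swap.exists_horizontal_seg hm huv hv h
    refine ⟨s.swap, ?_, ?_, ?_⟩
    · simp [Seg.first_swap, hfirst]
    · simp [Seg.last_swap, hlast]
    · simp [Seg.cells_swap, hcells, image_image, Function.comp_def]
  · exact hf.exists_horizontal_seg hm huv hv h

theorem MultiSeg.chain_cons {n : ℕ} (s : Seg m) (G : MultiSeg (n + 1) m)
    (hs : s.last = (G 0).first) (hG : G.chain) :
    MultiSeg.chain (Fin.cons s G : MultiSeg (n + 2) m) := by
  rintro (_ | i) hi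
  · exact hs
  · exact hG i (by omega)

theorem MultiSeg.cells_cons {n : ℕ} (s : Seg m) (G : MultiSeg n m) :
    MultiSeg.cells (Fin.cons s G : MultiSeg (n + 1) m) = s.cells ∪ G.cells := by
  ext c
  simp only [MultiSeg.cells, mem_biUnion, mem_univ, true_and, mem_union, Fin.exists_fin_succ]
  rfl

theorem exists_split_at_first (C : Finset ℕ) {a b n : ℕ} (hab : a ≤ b)
    (h : #(C ∩ Ioo a b) ≤ n + 1) :
    ∃ p, a ≤ p ∧ p ≤ b ∧ Disjoint C (Ioo a p) ∧ #(C ∩ Ioo p b) ≤ n := by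
  by_cases hne : (C ∩ Ioo a b).Nonempty
  · set p := (C ∩ Ioo a b).min' hne
    have hp : p ∈ C ∩ Ioo a b := min'_mem _ hne
    simp only [mem_inter, mem_Ioo] at hp
    refine ⟨p, by omega, by omega, disjoint_left.2 fun q hq hqp => ?_, ?_⟩
    · simp only [mem_Ioo] at hqp
      have := min'_le (C ∩ Ioo a b) q (mem_inter.2 ⟨hq, mem_Ioo.2 ⟨hqp.1, by omega⟩⟩)
      omega
    · have : C ∩ Ioo p b ⊂ C ∩ Ioo a b :=
        ssubset_iff_of_subset (inter_subset_inter_left (Ioo_subset_Ioo_left (by omega)))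
          |>.2 ⟨p, by simp; omega, by simp⟩
      have := card_lt_card this
      omega
  · rw [not_nonempty_iff_eq_empty] at hne
    exact ⟨a, le_rfl, hab, by simp, by simp [hne]⟩

theorem isPath.exists_multiSeg (hm : 0 < m) (hf : isPath m f) :
    ∀ (n : ℕ) {a b : ℕ}, a ≤ b → b ≤ 2 * m - 2 → #(corners m f ∩ Ioo a b) ≤ n →
      ∃ F : MultiSeg (n + 1) m, F.chain ∧ (F 0).first = f a ∧ F.cells = (Icc a b).image f
  | 0, a, b, hab, hb, hn => by
    have hfree : Disjoint (corners m f) (Ioo a b) := by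
      rwa [disjoint_iff_inter_eq_empty, ← card_eq_zero, ← Nat.le_zero]
    obtain ⟨s, hfirst, -, hcells⟩ :=
      hf.exists_seg hm hab hb (hf.collinear_of_no_corner hab hb hfree)
    refine ⟨fun _ => s, fun i hi => absurd hi (by omega), hfirst, ?_⟩
    simp [MultiSeg.cells, hcells]
  | n + 1, a, b, hab, hb, hn => by
    -- Without a corner in `(a, b)` we get `p = a`, and `s` is the one-cell padding segment.
    obtain ⟨p, hap, hpb, hfree, hcount⟩ := exists_split_at_first (corners m f) hab hn
    obtain ⟨s, hfirst, hlast, hcells⟩ :=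
      hf.exists_seg hm hap (hpb.trans hb) (hf.collinear_of_no_corner hap (hpb.trans hb) hfree)
    obtain ⟨G, hG, hGfirst, hGcells⟩ := hf.exists_multiSeg hm n hpb hb hcount
    refine ⟨Fin.cons s G, MultiSeg.chain_cons s G (hlast.trans hGfirst.symm) hG, hfirst, ?_⟩
    rw [MultiSeg.cells_cons, hcells, hGcells, ← image_union]
    congr 1
    ext i
    simp only [mem_union, mem_Icc]
    omega

theorem exists_mod_eq_mem_Ico (c : ℕ) {Δ r : ℕ} (hr : r < Δ) :
    ∃ j, c ≤ j ∧ j < c + Δ ∧ j % Δ = r := by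
  -- the largest `j ≤ c + Δ - 1` with `j % Δ = r`
  set X := c + Δ - 1 - r
  refine ⟨r + Δ * (X / Δ), ?_, ?_, by simp [Nat.mod_eq_of_lt hr]⟩ <;>
  · have := Nat.div_add_mod X Δ
    have := Nat.mod_lt X (show Δ > 0 by omega)
    omega

theorem exists_light_hitting_subset {M : Type*} [AddCommMonoid M] [LinearOrder M]
    [IsOrderedCancelAddMonoid M] (C : Finset ℕ) (w : ℕ → M) {Δ : ℕ} (hΔ : 0 < Δ) :
    ∃ R ⊆ C, Δ • ∑ p ∈ R, w p ≤ ∑ p ∈ C, w p ∧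
      ∀ a b, Disjoint R (Icc a b) → #(C ∩ Icc a b) < Δ := by
  set rank := Nat.count (· ∈ C)
  obtain ⟨r, hr, hR⟩ : ∃ r ∈ range Δ, Δ • ∑ p ∈ C with rank p % Δ = r, w p ≤ ∑ p ∈ C, w p := by
    apply exists_le_of_sum_le (nonempty_range_iff.2 hΔ.ne')
    rw [← smul_sum, sum_fiberwise_of_maps_to fun p _ => mem_range.2 (Nat.mod_lt _ hΔ),
      sum_const, card_range]
  refine ⟨C.filter (rank · % Δ = r), filter_subset _ _, hR, fun a b hdisj => ?_⟩
  by_contra! hcard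
  have hspread : #(C ∩ Icc a b) ≤ rank (b + 1) - rank a := by
    rw [← Nat.card_Ico]
    refine card_le_card_of_injOn rank (fun x hx => ?_) fun x hx y hy h => ?_
    · simp only [coe_inter, Set.mem_inter_iff, mem_coe, coe_Icc, Set.mem_Icc] at hx
      simp only [coe_Ico, Set.mem_Ico]
      exact ⟨Nat.count_monotone _ hx.2.1, Nat.count_strict_mono hx.1 (by omega)⟩
    · simp only [coe_inter, Set.mem_inter_iff, mem_coe] at hx hy
      exact Nat.count_injective hx.1 hy.1 h
  obtain ⟨j, hj₁, hj₂, hjr⟩ := exists_mod_eq_mem_Ico (rank a) (mem_range.1 hr)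
  have hfin : (Set.ofPred (· ∈ C)).Finite := C.finite_toSet
  have hj : j < #hfin.toFinset := (show j < rank (b + 1) by omega).trans_le
    (Nat.count_le_card hfin _)
  -- the element of `C` of rank `j` lies in `R ∩ [a, b]`
  set x := Nat.nth (· ∈ C) j
  have hx : x ∈ C := Nat.nth_mem_of_lt_card hfin hj
  have hxj : rank x = j := Nat.count_nth_of_lt_card_finite hfin hj
  have hax : a ≤ x := by
    by_contra! hxa
    have : rank x < rank a := Nat.count_strict_mono hx hxa
    omega
  have hxb : x < b + 1 := Nat.lt_of_count_lt_count (show rank x < rank (b + 1) by omega)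
  exact disjoint_left.1 hdisj (mem_filter.2 ⟨hx, hxj ▸ hjr⟩) (mem_Icc.2 ⟨hax, by omega⟩)

theorem exists_run_start (R : Finset ℕ) {k : ℕ} (hk : k ∉ R) :
    ∃ a ≤ k, Disjoint R (Icc a k) ∧ (a = 0 ∨ a - 1 ∈ R) := by
  induction k with
  | zero => exact ⟨0, le_rfl, by simpa using hk, Or.inl rfl⟩
  | succ k ih =>
    by_cases hk' : k ∈ R
    · exact ⟨k + 1, le_rfl, by simpa using hk, Or.inr hk'⟩
    · obtain ⟨a, hak, hfree, ha⟩ := ih hk'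
      refine ⟨a, by omega, disjoint_left.2 fun i hi hia => ?_, ha⟩
      rcases (mem_Icc.1 hia).2.eq_or_lt with rfl | hlt
      · exact hk hi
      · exact disjoint_left.1 hfree hi (mem_Icc.2 ⟨(mem_Icc.1 hia).1, by omega⟩)

theorem sum_range_sdiff_eq_add {M : Type*} [AddCommMonoid M] (g : ℕ → M) {R : Finset ℕ}
    {a k : ℕ} (hak : a ≤ k) (hfree : Disjoint R (Icc a k)) (ha : a = 0 ∨ a - 1 ∈ R) :
    ∑ i ∈ range (k + 1) \ R, g i = ∑ i ∈ range (a - 1) \ R, g i + ∑ i ∈ Icc a k, g i := by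
  rw [← sum_union (disjoint_left.2 fun i hi hi' => by simp at hi hi'; omega)]
  congr 1
  ext i
  have hfree_i : i ∈ Icc a k → i ∉ R := fun hi hiR => disjoint_left.1 hfree hiR hi
  simp only [mem_sdiff, mem_range, mem_union, mem_Icc] at hfree_i ⊢
  constructor
  · rintro ⟨hik, hiR⟩
    by_cases hia : a ≤ i
    · exact Or.inr ⟨hia, by omega⟩
    · rcases ha with rfl | ha
      · omega
      · have : i ≠ a - 1 := fun h => hiR (h ▸ ha)
        exact Or.inl ⟨by omega, hiR⟩
  · rintro (⟨hia, hiR⟩ | hi)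
    · exact ⟨by omega, hiR⟩
    · exact ⟨by omega, hfree_i hi⟩

theorem msNonConf_of_cells {Δ : ℕ} {F G : MultiSeg Δ m}
    (h : ∀ c ∈ F.cells, ∀ c' ∈ G.cells, c'.1 < c.1 ∧ c'.2 < c.2) : msNonConf F G :=
  fun i j => Or.inl fun c hc c' hc' =>
    h c (mem_biUnion.2 ⟨i, mem_univ _, hc⟩) c' (mem_biUnion.2 ⟨j, mem_univ _, hc'⟩)

theorem msNonConf.symm {Δ : ℕ} {F G : MultiSeg Δ m} (h : msNonConf F G) : msNonConf G F :=
  fun i j => (h j i).symm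

theorem isPath.msValue_eq_sum {Δ : ℕ} (hf : isPath m f) (v : ℕ → ℕ → ℝ) {F : MultiSeg Δ m}
    {a b : ℕ} (hb : b ≤ 2 * m - 2) (hF : F.cells = (Icc a b).image f) :
    msValue v F = ∑ i ∈ Icc a b, v (f i).1 (f i).2 := by
  rw [msValue, hF, sum_image]
  exact hf.injOn.mono fun i hi => (mem_Icc.1 hi).2.trans hb

theorem isPath.exists_multiSeg_list (hm : 0 < m) (hf : isPath m f) (n : ℕ) (v : ℕ → ℕ → ℝ)
    {R : Finset ℕ} (hR : R ⊆ corners m f)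
    (hsparse : ∀ a b, Disjoint R (Icc a b) → #(corners m f ∩ Icc a b) ≤ n) :
    ∀ k ≤ 2 * m - 1, ∃ L : List (MultiSeg (n + 1) m),
      (∀ F ∈ L, F.chain ∧ F.cells ⊆ (range k).image f) ∧ L.Pairwise msNonConf ∧
        (L.map (msValue v)).sum = ∑ i ∈ range k \ R, v (f i).1 (f i).2 := by
  intro k
  induction k using Nat.strong_induction_on with
  | _ k ih =>
  intro hk
  rcases k with _ | k
  · exact ⟨[], by simp, by simp, by simp⟩
  by_cases hkR : k ∈ R
  · obtain ⟨L, hL, hpair, hsum⟩ := ih k (by omega) (by omega)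
    refine ⟨L, fun F hF => ⟨(hL F hF).1, (hL F hF).2.trans ?_⟩, hpair, ?_⟩
    · exact image_subset_image (range_subset_range.2 (by omega))
    · rw [hsum, range_add_one, insert_sdiff_of_mem _ hkR]
  obtain ⟨a, hak, hfree, ha⟩ := exists_run_start R hkR
  have hcount : #(corners m f ∩ Ioo a k) ≤ n :=
    (card_le_card (inter_subset_inter_left Ioo_subset_Icc_self)).trans (hsparse a k hfree)
  obtain ⟨G, hG, -, hGcells⟩ := hf.exists_multiSeg hm n hak (by omega) hcount
  obtain ⟨L, hL, hpair, hsum⟩ := ih (a - 1) (by omega) (by omega)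
  have hsep : ∀ F ∈ L, msNonConf G F := fun F hF => msNonConf_of_cells fun c hc c' hc' => by
    rw [hGcells, mem_image] at hc
    obtain ⟨j, hj, rfl⟩ := hc
    obtain ⟨i, hi, rfl⟩ := mem_image.1 ((hL F hF).2 hc')
    rw [mem_Icc] at hj
    rw [mem_range] at hi
    rcases ha with rfl | ha
    · omega
    · exact hf.lt_of_lt_corner (hR ha) hi (by omega) (by omega)
  refine ⟨G :: L, ?_, List.pairwise_cons.2 ⟨hsep, hpair⟩, ?_⟩
  · rintro F (_ | ⟨_, hF⟩)
    · refine ⟨hG, hGcells ▸ image_subset_image fun i hi => ?_⟩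
      simp only [mem_Icc, mem_range] at hi ⊢
      omega
    · exact ⟨(hL F hF).1,
        (hL F hF).2.trans (image_subset_image (range_subset_range.2 (by omega)))⟩
  · rw [List.map_cons, List.sum_cons, hsum, hf.msValue_eq_sum v (by omega) hGcells,
      sum_range_sdiff_eq_add _ hak hfree ha, add_comm]

end

/-- for any `Δ ≥ 1`, there is a family of pairwise non-conflicting
`Δ`-multisegments whose total covered value is at least `(Δ−1)/Δ` times the
table's score (the maximum value of a monotone lattice path). -/
theorem stmt18 (m Δ : ℕ) (hm : 0 < m) (hΔ : 0 < Δ)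
    (v : ℕ → ℕ → ℝ) (hv : ∀ x y, 0 ≤ v x y)
    (score : ℝ)
    (hscore : IsGreatest
      {t : ℝ | ∃ f : ℕ → ℕ × ℕ, isPath m f ∧
        t = ∑ i ∈ Finset.range (2 * m - 1), v (f i).1 (f i).2}
      score) :
    ∃ (k : ℕ) (F : Fin k → MultiSeg Δ m),
      (∀ t, (F t).chain) ∧
      (∀ t t', t ≠ t' → msNonConf (F t) (F t')) ∧
      ((Δ : ℝ) - 1) / (Δ : ℝ) * score ≤ ∑ t, msValue v (F t) := by
  obtain ⟨f, hf, rfl⟩ := hscore.1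
  obtain ⟨n, rfl⟩ : ∃ n, Δ = n + 1 := ⟨Δ - 1, by omega⟩
  set g := fun i => v (f i).1 (f i).2
  obtain ⟨R, hRC, hRsum, hRsparse⟩ := exists_light_hitting_subset (corners m f) g n.succ_pos
  obtain ⟨L, hL, hpair, hsum⟩ := hf.exists_multiSeg_list hm n v hRC
    (fun a b h => Nat.lt_succ_iff.1 (hRsparse a b h)) (2 * m - 1) le_rfl
  have hCsum : ∑ p ∈ corners m f, g p ≤ ∑ i ∈ range (2 * m - 1), g i :=
    sum_le_sum_of_subset_of_nonneg corners_subset_range fun i _ _ => hv _ _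
  refine ⟨L.length, fun t => L[t.1], fun t => (hL _ (List.getElem_mem _)).1,
    fun t t' htt' => ?_, ?_⟩
  · rcases lt_or_gt_of_ne htt' with h | h
    · exact List.pairwise_iff_getElem.1 hpair _ _ _ _ h
    · exact (List.pairwise_iff_getElem.1 hpair _ _ _ _ h).symm
  · have hR : ((n + 1 : ℕ) : ℝ) * ∑ p ∈ R, g p ≤ ∑ i ∈ range (2 * m - 1), g i :=
      nsmul_eq_mul (n + 1) (∑ p ∈ R, g p) ▸ hRsum.trans hCsum
    rw [Fin.sum_univ_fun_getElem, hsum,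
      eq_sub_of_add_eq (sum_sdiff (f := g) (hRC.trans corners_subset_range))]
    rw [div_mul_eq_mul_div, div_le_iff₀ (by positivity)]
    push_cast at hR ⊢
    linarith
end

section
/- Let (a_i) be a sequence partitioned into consecutive 'baskets' by boundary layers, and for an element a_j in basket i define a basket-compatible increasing subsequence ending at a_j as an increasing subsequence ending at a_j that contains one element from the boundary layer of each basket 1,...,i−1; let b'_j be its maximum length. Then for every boundary element a_{f(i,k)} of basket i > 1, b'_{f(i,k)} = max over boundary elements a_{f(i-1,j)} of basket i−1 of (b'_{f(i-1,j)} + M_i[j,k] − 1), where M_i[j,k] is the length of the longest increasing subsequence starting at a_{f(i-1,j)} and ending at a_{f(i,k)} when f(i−1,j) < f(i,k) and a_{f(i-1,j)} < a_{f(i,k)}, and M_i[j,k] ≤ −n otherwise. -/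
/-- recurrence for the maximum lengths `b'` of basket-compatible
increasing subsequences at boundary elements:
`b'_q = max_{p ∈ boundary (i−1)} (b'_p + M p q − 1)` for every boundary element
`q` of basket `i > 1`. -/
theorem stmt19 (n : ℕ) (a : Fin n → ℝ) (ha : Function.Injective a)
    -- basket index of each element (baskets are numbered starting from 1)
    (B : Fin n → ℕ) (hB1 : ∀ j, 1 ≤ B j)
    -- boundary layer of each basket
    (boundary : ℕ → Finset (Fin n))
    (hbd : ∀ i, ∀ p ∈ boundary i, B p = i)
    -- `bc i j s`: `s` is a basket-compatible increasing subsequence ending at `j`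
    -- for an element of basket `i`, i.e. an increasing subsequence ending at `j`
    -- containing an element of the boundary layer of each basket `1, …, i−1`.
    (bc : ℕ → Fin n → Finset (Fin n) → Prop)
    (hbc : ∀ i j s, bc i j s ↔
      ((∀ p ∈ s, ∀ q ∈ s, p < q → a p < a q) ∧ j ∈ s ∧ (∀ t ∈ s, t ≤ j) ∧
        ∀ i', 1 ≤ i' → i' < i → ∃ t ∈ s, t ∈ boundary i'))
    -- `b' j` is the maximum length of a basket-compatible increasing subsequence
    -- ending at `j`
    (b' : Fin n → ℕ)
    (hb' : ∀ j, IsGreatest {k | ∃ s, bc (B j) j s ∧ s.card = k} (b' j))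
    (hbpos : ∀ j, 0 < b' j ∧ b' j ≤ n)
    -- `M p q` is the length of the longest increasing subsequence starting at `p`
    -- and ending at `q` when `p < q` and `a p < a q`, and `M p q ≤ −n` otherwise
    (M : Fin n → Fin n → ℤ)
    (hM : ∀ p q : Fin n,
      (p < q ∧ a p < a q →
        ∃ k : ℕ, M p q = (k : ℤ) ∧ IsGreatest
          {c | ∃ s : Finset (Fin n), (∀ u ∈ s, ∀ w ∈ s, u < w → a u < a w) ∧
            p ∈ s ∧ q ∈ s ∧ (∀ t ∈ s, p ≤ t ∧ t ≤ q) ∧ s.card = c} k) ∧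
      (¬(p < q ∧ a p < a q) → M p q ≤ -(n : ℤ)))
    -- context: every basket-compatible subsequence ending in basket `i > 1` passes
    -- through the boundary of basket `i − 1`
    (hpass : ∀ j s, 1 < B j → bc (B j) j s → ∃ p ∈ boundary (B j - 1), p ∈ s)
    -- context: every prefix of a basket-compatible subsequence is basket-compatible
    (hprefix : ∀ j s, bc (B j) j s → ∀ p ∈ s, bc (B p) p (s.filter (· ≤ p)))
    (i : ℕ) (hi : 1 < i) (hne : (boundary (i - 1)).Nonempty)
    (q : Fin n) (hq : q ∈ boundary i) :
    IsGreatest {v : ℤ | ∃ p ∈ boundary (i - 1), v = (b' p : ℤ) + M p q - 1}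
      ((b' q : ℤ)) := by

  have hBq : B q = i := hbd i q hq
  -- upper bound part
  have hub : ∀ p ∈ boundary (i - 1), (b' p : ℤ) + M p q - 1 ≤ (b' q : ℤ) := by
    intro p hp
    have hBp : B p = i - 1 := hbd _ p hp
    by_cases hc : p < q ∧ a p < a q
    · obtain ⟨k, hMk, hkGr⟩ := (hM p q).1 hc
      obtain ⟨s1, hs1, hcard1⟩ := (hb' p).1
      obtain ⟨s2, hinc2, hps2, hqs2, hbet2, hcard2⟩ := hkGr.1
      rw [hbc] at hs1
      obtain ⟨hinc1, hps1, hle1, hbd1⟩ := hs1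
      have hinc : ∀ u ∈ s1 ∪ s2, ∀ w ∈ s1 ∪ s2, u < w → a u < a w := by
        intro u hu w hw huw
        rw [Finset.mem_union] at hu hw
        rcases hu with hu | hu <;> rcases hw with hw | hw
        · exact hinc1 u hu w hw huw
        · rcases (hle1 u hu).lt_or_eq with h | h
          · refine lt_of_lt_of_le (hinc1 u hu p hps1 h) ?_
            rcases (hbet2 w hw).1.lt_or_eq with h2 | h2
            · exact (hinc2 p hps2 w hw h2).le
            · rw [h2]
          · subst h; exact hinc2 u hps2 w hw huw
        · exact absurd huw (not_lt.mpr ((hle1 w hw).trans (hbet2 u hu).1))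
        · exact hinc2 u hu w hw huw
      have hbcs : bc i q (s1 ∪ s2) := by
        rw [hbc]
        refine ⟨hinc, Finset.mem_union_right _ hqs2, ?_, ?_⟩
        · intro t ht
          rw [Finset.mem_union] at ht
          rcases ht with ht | ht
          · exact (hle1 t ht).trans hc.1.le
          · exact (hbet2 t ht).2
        · intro i' h1 h2
          rcases (by omega : i' = i - 1 ∨ i' < i - 1) with h | h
          · exact ⟨p, Finset.mem_union_left _ hps1, h ▸ hp⟩
          · obtain ⟨t, ht, htb⟩ := hbd1 i' h1 (by omega)
            exact ⟨t, Finset.mem_union_left _ ht, htb⟩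
      have hint : s1 ∩ s2 = {p} := by
        ext t
        simp only [Finset.mem_inter, Finset.mem_singleton]
        constructor
        · rintro ⟨h1, h2⟩; exact le_antisymm (hle1 t h1) (hbet2 t h2).1
        · rintro rfl; exact ⟨hps1, hps2⟩
      have hcu : (s1 ∪ s2).card + 1 = b' p + k := by
        have := Finset.card_union_add_card_inter s1 s2
        rw [hint, Finset.card_singleton, hcard1, hcard2] at this
        omega
      have hle : (s1 ∪ s2).card ≤ b' q := by
        refine (hb' q).2 ⟨s1 ∪ s2, ?_, rfl⟩
        rw [hBq]; exact hbcs
      rw [hMk]; omega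
    · have h1 := (hM p q).2 hc
      have h2 := (hbpos p).2
      have h3 := (hbpos q).1
      omega
  -- membership part
  obtain ⟨s, hsbc, hcard⟩ := (hb' q).1
  have hqi : 1 < B q := by omega
  obtain ⟨p, hp, hps⟩ := hpass q s hqi hsbc
  rw [hBq] at hp
  have hBp : B p = i - 1 := hbd _ p hp
  have hsbc' := (hbc (B q) q s).1 hsbc
  obtain ⟨hinc, hqs, hle, hbdy⟩ := hsbc'
  have hpq : p ≤ q := hle p hps
  have hpne : p ≠ q := by
    intro h; rw [h] at hBp; omega
  have hplt : p < q := hpq.lt_of_ne hpne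
  have hapq : a p < a q := hinc p hps q hqs hplt
  obtain ⟨k, hMk, hkGr⟩ := (hM p q).1 ⟨hplt, hapq⟩
  set s1 := s.filter (· ≤ p) with hs1def
  set s2 := s.filter (fun t => p ≤ t) with hs2def
  have h1 : bc (B p) p s1 := hprefix q s hsbc p hps
  have hc1 : s1.card ≤ b' p := (hb' p).2 ⟨s1, h1, rfl⟩
  have hps1 : p ∈ s1 := Finset.mem_filter.mpr ⟨hps, le_refl p⟩
  have hps2 : p ∈ s2 := Finset.mem_filter.mpr ⟨hps, le_refl p⟩
  have hqs2 : q ∈ s2 := Finset.mem_filter.mpr ⟨hqs, hpq⟩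
  have hc2 : s2.card ≤ k := by
    refine hkGr.2 ⟨s2, ?_, hps2, hqs2, ?_, rfl⟩
    · intro u hu w hw huw
      exact hinc u (Finset.mem_of_mem_filter u hu) w (Finset.mem_of_mem_filter w hw) huw
    · intro t ht
      exact ⟨(Finset.mem_filter.mp ht).2, hle t (Finset.mem_of_mem_filter t ht)⟩
  have hun : s1 ∪ s2 = s := by
    ext t
    simp only [hs1def, hs2def, Finset.mem_union, Finset.mem_filter]
    constructor
    · rintro (⟨h, _⟩ | ⟨h, _⟩) <;> exact h
    · intro h
      rcases le_total t p with h2 | h2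
      · exact Or.inl ⟨h, h2⟩
      · exact Or.inr ⟨h, h2⟩
  have hint : s1 ∩ s2 = {p} := by
    ext t
    simp only [hs1def, hs2def, Finset.mem_inter, Finset.mem_filter, Finset.mem_singleton]
    constructor
    · rintro ⟨⟨_, h1⟩, ⟨_, h2⟩⟩; exact le_antisymm h1 h2
    · rintro rfl; exact ⟨⟨hps, le_refl _⟩, ⟨hps, le_refl _⟩⟩
  have hcu : s.card + 1 = s1.card + s2.card := by
    have := Finset.card_union_add_card_inter s1 s2
    rw [hint, Finset.card_singleton, hun] at this
    omega
  have hge : (b' q : ℤ) ≤ (b' p : ℤ) + M p q - 1 := by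
    rw [hMk]; omega
  have hub' := hub p hp
  exact ⟨⟨p, hp, by omega⟩, by rintro v ⟨p', hp', rfl⟩; exact hub p' hp'⟩
end
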